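/- arXiv:2405.16825 — 6 statements merged into one kernel-verified Lean document; each statement's English description precedes it below -/
import Mathlib

section
/- Let (X, 𝓑, μ) be a probability space, T : X → X an invertible, measure-preserving, ergodic transformation, and f : X → ℝ a bounded measurable function. Suppose the Birkhoff sums of f satisfy a distributional limit theorem: there are real sequences A_N and positive V_N with V_N → ∞ such that the random variables S_N(x) = (∑_{n=0}^{N-1} f(T^n x) − A_N)/V_N converge in distribution to a random variable S. Then the same limit theorem holds conditionally: for every measurable set A ∈ 𝓑 and every interval (a,b) with ℙ(S ∈ {a,b}) = 0, lim_{N→∞} μ({x ∈ A : S_N(x) ∈ (a,b)}) = μ(A)·ℙ(S ∈ (a,b)). -/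
open MeasureTheory Filter Set
open scoped ENNReal NNReal Topology

private lemma inner_indicator_eq_meas {X : Type*} [MeasurableSpace X] {μ : Measure X}
    [IsFiniteMeasure μ] {P Q : Set X} (hP : MeasurableSet P) (hQ : MeasurableSet Q)
    (u v : Lp ℝ 2 μ) (hu : ⇑u =ᵐ[μ] P.indicator (fun _ => (1:ℝ)))
    (hv : ⇑v =ᵐ[μ] Q.indicator (fun _ => (1:ℝ))) :
    (inner ℝ u v : ℝ) = (μ (P ∩ Q)).toReal := by
  rw [MeasureTheory.L2.inner_def]
  have h : (fun x => (inner ℝ (u x) (v x) : ℝ)) =ᵐ[μ] (P ∩ Q).indicator (fun _ => (1:ℝ)) := by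
    filter_upwards [hu, hv] with x hux hvx
    simp only [RCLike.inner_apply, starRingEnd_apply, star_trivial, hux, hvx]
    by_cases hxP : x ∈ P <;> by_cases hxQ : x ∈ Q <;>
      simp [Set.indicator_apply, hxP, hxQ, Set.mem_inter_iff]
  rw [integral_congr_ae h, integral_indicator_const (1:ℝ) (hP.inter hQ), smul_eq_mul, mul_one]
  rfl

private lemma sn_shift_bound {X : Type*} (T : X → X) (f : X → ℝ) {M : ℝ}
    (hM : ∀ x, |f x| ≤ M) (A : ℕ → ℝ) (V : ℕ → ℝ) (hVpos : ∀ N, 0 < V N)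
    (SN : ℕ → X → ℝ)
    (hSN : ∀ N x, SN N x = ((∑ n ∈ Finset.range N, f (T^[n] x)) - A N) / V N)
    (k N : ℕ) (x : X) :
    |SN N (T^[k] x) - SN N x| ≤ 2 * k * M / V N := by
  have hVN := hVpos N
  rw [hSN, hSN, div_sub_div_same, sub_sub_sub_cancel_right, abs_div, abs_of_pos hVN]
  have key : |(∑ n ∈ Finset.range N, f (T^[n] (T^[k] x))) -
      ∑ n ∈ Finset.range N, f (T^[n] x)| ≤ 2 * k * M := by
    have h2 : (∑ n ∈ Finset.range N, f (T^[n] (T^[k] x)))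
        = ∑ i ∈ Finset.Ico k (N+k), f (T^[i] x) := by
      rw [Finset.sum_Ico_eq_sum_range, Nat.add_sub_cancel]
      exact Finset.sum_congr rfl fun n _ => by
        rw [← Function.iterate_add_apply, Nat.add_comm]
    have h3 : (∑ i ∈ Finset.Ico 0 k, f (T^[i] x)) + ∑ i ∈ Finset.Ico k (N+k), f (T^[i] x)
        = ∑ i ∈ Finset.Ico 0 (N+k), f (T^[i] x) :=
      Finset.sum_Ico_consecutive _ (Nat.zero_le k) (Nat.le_add_left k N)
    have h4 : (∑ i ∈ Finset.Ico 0 N, f (T^[i] x)) + ∑ i ∈ Finset.Ico N (N+k), f (T^[i] x)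
        = ∑ i ∈ Finset.Ico 0 (N+k), f (T^[i] x) :=
      Finset.sum_Ico_consecutive _ (Nat.zero_le N) (Nat.le_add_right N k)
    have hbound : ∀ (m n : ℕ), |∑ i ∈ Finset.Ico m n, f (T^[i] x)| ≤ ((n - m : ℕ) : ℝ) * M := by
      intro m n
      calc |∑ i ∈ Finset.Ico m n, f (T^[i] x)| ≤ ∑ i ∈ Finset.Ico m n, |f (T^[i] x)| :=
            Finset.abs_sum_le_sum_abs _ _
        _ ≤ ∑ _i ∈ Finset.Ico m n, M := Finset.sum_le_sum fun i _ => hM _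
        _ = ((n - m : ℕ) : ℝ) * M := by rw [Finset.sum_const, Nat.card_Ico, nsmul_eq_mul]
    have heq : (∑ n ∈ Finset.range N, f (T^[n] (T^[k] x))) - ∑ n ∈ Finset.range N, f (T^[n] x)
        = (∑ i ∈ Finset.Ico N (N+k), f (T^[i] x)) - ∑ i ∈ Finset.Ico 0 k, f (T^[i] x) := by
      rw [h2, Finset.range_eq_Ico]
      linarith [h3, h4]
    rw [heq, sub_eq_add_neg]
    refine (abs_add_le _ _).trans ?_
    rw [abs_neg]
    have b1 := hbound N (N+k)
    have b2 := hbound 0 k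
    simp only [Nat.add_sub_cancel_left, Nat.sub_zero] at b1 b2
    linarith
  have hM0 : 0 ≤ M := le_trans (abs_nonneg _) (hM x)
  gcongr

set_option maxHeartbeats 2000000 in
set_option synthInstance.maxHeartbeats 1000000 in
/-- **Theorem (theo:metric_CCLT).** If the normalized Birkhoff sums
`S_N(x) = (∑_{n<N} f(Tⁿ x) - A_N) / V_N` of a bounded measurable function `f` over an
invertible, measure-preserving, ergodic transformation `T` converge in distribution to a
random variable with law `S`, then the same distributional limit theorem holds
conditionally: for every measurable set `A` and every interval `(a,b)` whose endpoints
are not atoms of `S`, `μ(A ∩ {S_N ∈ (a,b)}) → μ(A) · S((a,b))`. -/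
theorem conditional_DLT_birkhoff
    {X : Type*} [MeasurableSpace X] (μ : Measure X) [IsProbabilityMeasure μ]
    (T : X → X) (hTbij : Function.Bijective T) (hT : Ergodic T μ)
    (f : X → ℝ) (hfm : Measurable f) (hfb : ∃ M : ℝ, ∀ x, |f x| ≤ M)
    (A : ℕ → ℝ) (V : ℕ → ℝ) (hVpos : ∀ N, 0 < V N) (hV : Tendsto V atTop atTop)
    (S : Measure ℝ) [IsProbabilityMeasure S]
    (SN : ℕ → X → ℝ)
    (hSN : ∀ N x, SN N x = ((∑ n ∈ Finset.range N, f (T^[n] x)) - A N) / V N)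
    (hDLT : ∀ a b : ℝ, S ({a, b} : Set ℝ) = 0 →
      Tendsto (fun N => μ {x | SN N x ∈ Ioo a b}) atTop (nhds (S (Ioo a b)))) :
    ∀ A' : Set X, MeasurableSet A' → ∀ a b : ℝ, S ({a, b} : Set ℝ) = 0 →
      Tendsto (fun N => μ (A' ∩ {x | SN N x ∈ Ioo a b})) atTop
        (nhds (μ A' * S (Ioo a b))) := by
  intro A' hA' a b hab
  obtain ⟨M, hM⟩ := hfb
  haveI hXne : Nonempty X := by
    rcases nonempty_of_measure_ne_zero (μ := μ) (s := Set.univ)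
      (by simp) with ⟨x, _⟩
    exact ⟨x⟩
  have hM0 : 0 ≤ M := le_trans (abs_nonneg _) (hM (Classical.arbitrary X))
  have hTm : Measurable T := hT.toMeasurePreserving.measurable
  have hSNm : ∀ N, Measurable (SN N) := by
    intro N
    have hfun : SN N = fun x => ((∑ n ∈ Finset.range N, f (T^[n] x)) - A N) / V N :=
      funext (hSN N)
    rw [hfun]
    exact ((Finset.measurable_sum _ fun n _ => hfm.comp (hTm.iterate n)).sub
      measurable_const).div_const _
  have hBm : ∀ N, MeasurableSet {x | SN N x ∈ Ioo a b} := fun N => (hSNm N) measurableSet_Ioo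
  -- L² setup
  set g : Lp ℝ 2 μ := indicatorConstLp 2 hA' (measure_ne_top μ A') (1:ℝ) with hgdef
  set one : Lp ℝ 2 μ := indicatorConstLp 2 MeasurableSet.univ (measure_ne_top μ Set.univ) (1:ℝ)
    with honedef
  set U : Lp ℝ 2 μ →L[ℝ] Lp ℝ 2 μ :=
    (MeasureTheory.Lp.compMeasurePreservingₗᵢ (E := ℝ) (p := 2) ℝ T
      hT.toMeasurePreserving).toContinuousLinearMap with hUdef
  have hUapp : ∀ u : Lp ℝ 2 μ, ⇑(U u) =ᵐ[μ] ⇑u ∘ T := by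
    intro u
    exact MeasureTheory.Lp.coeFn_compMeasurePreserving u hT.toMeasurePreserving
  have hUnorm : ‖U‖ ≤ 1 := LinearIsometry.norm_toContinuousLinearMap_le _
  have hcoe : ∀ k : ℕ, ⇑((⇑U)^[k] g) =ᵐ[μ] ((T^[k]) ⁻¹' A').indicator (fun _ => (1:ℝ)) := by
    intro k
    induction k with
    | zero =>
      simpa using (indicatorConstLp_coeFn (p := 2) (hs := hA')
        (hμs := measure_ne_top μ A') (c := (1:ℝ)))
    | succ k ih =>
      rw [Function.iterate_succ_apply']
      have h1 : ⇑(U ((⇑U)^[k] g)) =ᵐ[μ] ⇑((⇑U)^[k] g) ∘ T := hUapp _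
      have h2 : ⇑((⇑U)^[k] g) ∘ T =ᵐ[μ]
          (((T^[k]) ⁻¹' A').indicator (fun _ => (1:ℝ))) ∘ T :=
        hT.toMeasurePreserving.quasiMeasurePreserving.ae_eq_comp ih
      refine h1.trans (h2.trans (Filter.EventuallyEq.of_eq ?_))
      funext x
      by_cases hx : T^[k] (T x) ∈ A'
      · rw [Function.comp_apply, Set.indicator_of_mem (Set.mem_preimage.2 hx),
          Set.indicator_of_mem (by rw [Set.mem_preimage, Function.iterate_succ_apply]; exact hx)]
      · rw [Function.comp_apply, Set.indicator_of_notMem (fun h => hx (Set.mem_preimage.1 h)),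
          Set.indicator_of_notMem (by rw [Set.mem_preimage, Function.iterate_succ_apply]; exact hx)]
  have hone : U one = one := by
    apply MeasureTheory.Lp.ext
    have h1 : ⇑(U one) =ᵐ[μ] ⇑one ∘ T := hUapp one
    have h2 : ⇑one ∘ T =ᵐ[μ] (Set.univ.indicator (fun _ => (1:ℝ))) ∘ T :=
      hT.toMeasurePreserving.quasiMeasurePreserving.ae_eq_comp
        (indicatorConstLp_coeFn (p := 2) (hs := MeasurableSet.univ)
          (hμs := measure_ne_top μ Set.univ) (c := (1:ℝ)))
    have h3 : ⇑one =ᵐ[μ] Set.univ.indicator (fun _ => (1:ℝ)) :=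
      indicatorConstLp_coeFn (p := 2) (hs := MeasurableSet.univ)
        (hμs := measure_ne_top μ Set.univ) (c := (1:ℝ))
    refine (h1.trans (h2.trans (Filter.EventuallyEq.of_eq ?_))).trans h3.symm
    funext x
    simp
  -- χ N : indicator of B N
  set χ : ℕ → Lp ℝ 2 μ := fun N =>
    indicatorConstLp 2 (hBm N) (measure_ne_top μ _) (1:ℝ) with hχdef
  have hχcoe : ∀ N, ⇑(χ N) =ᵐ[μ] ({x | SN N x ∈ Ioo a b}).indicator (fun _ => (1:ℝ)) :=
    fun N => indicatorConstLp_coeFn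
  have hχnorm : ∀ N, ‖χ N‖ ≤ 1 := by
    intro N
    rw [hχdef]
    rw [norm_indicatorConstLp (by norm_num) (by norm_num)]
    simp only [norm_one, one_mul]
    refine Real.rpow_le_one ENNReal.toReal_nonneg ?_ (by positivity)
    calc (μ {x | SN N x ∈ Ioo a b}).toReal ≤ (1 : ℝ≥0∞).toReal :=
          ENNReal.toReal_mono ENNReal.one_ne_top prob_le_one
      _ = 1 := by simp
  have hinner_k : ∀ (k N : ℕ),
      (inner ℝ ((⇑U)^[k] g) (χ N) : ℝ) = (μ ((T^[k]) ⁻¹' A' ∩ {x | SN N x ∈ Ioo a b})).toReal :=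
    fun k N => inner_indicator_eq_meas ((hTm.iterate k) hA') (hBm N) _ _ (hcoe k) (hχcoe N)
  have hinner_one : ∀ N : ℕ, (inner ℝ one (χ N) : ℝ) = (μ {x | SN N x ∈ Ioo a b}).toReal := by
    intro N
    have := inner_indicator_eq_meas MeasurableSet.univ (hBm N) one (χ N)
      (indicatorConstLp_coeFn) (hχcoe N)
    rwa [Set.univ_inter] at this
  -- mean ergodic theorem and identification of the projection
  set c : ℝ := (μ A').toReal with hcdef
  have hproj := U.tendsto_birkhoffAverage_orthogonalProjection hUnorm g
  set P : Lp ℝ 2 μ :=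
    ↑(Submodule.orthogonalProjectionOnto (LinearMap.eqLocus (U : Lp ℝ 2 μ →ₗ[ℝ] Lp ℝ 2 μ) ((1 : Lp ℝ 2 μ →L[ℝ] Lp ℝ 2 μ) : Lp ℝ 2 μ →ₗ[ℝ] Lp ℝ 2 μ)) g) with hPdef
  have hPfix : U P = P := by
    have hmem := Submodule.coe_mem
      (Submodule.orthogonalProjectionOnto (LinearMap.eqLocus (U : Lp ℝ 2 μ →ₗ[ℝ] Lp ℝ 2 μ) ((1 : Lp ℝ 2 μ →L[ℝ] Lp ℝ 2 μ) : Lp ℝ 2 μ →ₗ[ℝ] Lp ℝ 2 μ)) g)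
    rw [LinearMap.mem_eqLocus] at hmem
    simpa [hPdef] using hmem
  obtain ⟨c', hPc⟩ : ∃ c', ⇑P =ᵐ[μ] Function.const X c' := by
    refine hT.ae_eq_const_of_ae_eq_comp_ae (MeasureTheory.Lp.aestronglyMeasurable P) ?_
    have := hUapp P
    rw [hPfix] at this
    exact this.symm
  have hPone : P = c' • one := by
    apply MeasureTheory.Lp.ext
    refine hPc.trans ?_
    have h1 : ⇑(c' • one) =ᵐ[μ] fun _ => c' := by
      filter_upwards [MeasureTheory.Lp.coeFn_smul c' one,
        indicatorConstLp_coeFn (p := 2) (hs := MeasurableSet.univ)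
          (hμs := measure_ne_top μ Set.univ) (c := (1:ℝ))] with x hx1 hx2
      rw [hx1]
      simp [hx2]
      rw [show ⇑one x = _ from hx2]
      simp
    exact h1.symm
  have hinner_g_one : (inner ℝ g one : ℝ) = c := by
    have := inner_indicator_eq_meas hA' MeasurableSet.univ g one
      (indicatorConstLp_coeFn) (indicatorConstLp_coeFn)
    rwa [Set.inter_univ] at this
  have hinner_one_one : (inner ℝ one one : ℝ) = 1 := by
    have := inner_indicator_eq_meas MeasurableSet.univ MeasurableSet.univ one one
      (indicatorConstLp_coeFn) (indicatorConstLp_coeFn)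
    rw [Set.inter_univ] at this
    simpa using this
  have hc' : c' = c := by
    have horth := Submodule.sub_starProjection_mem_orthogonal
      (K := LinearMap.eqLocus (U : Lp ℝ 2 μ →ₗ[ℝ] Lp ℝ 2 μ) ((1 : Lp ℝ 2 μ →L[ℝ] Lp ℝ 2 μ) : Lp ℝ 2 μ →ₗ[ℝ] Lp ℝ 2 μ)) g
    rw [Submodule.starProjection_apply] at horth
    have honeF : one ∈ LinearMap.eqLocus (U : Lp ℝ 2 μ →ₗ[ℝ] Lp ℝ 2 μ) ((1 : Lp ℝ 2 μ →L[ℝ] Lp ℝ 2 μ) : Lp ℝ 2 μ →ₗ[ℝ] Lp ℝ 2 μ) := by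
      rw [LinearMap.mem_eqLocus]
      simpa using hone
    have hzero : (inner ℝ one (g - P) : ℝ) =
        0 := (Submodule.mem_orthogonal _ _).1 horth one honeF
    rw [inner_sub_right, hPone, real_inner_smul_right, hinner_one_one, mul_one,
      real_inner_comm, hinner_g_one] at hzero
    linarith
  have hMET : Tendsto (fun K => birkhoffAverage ℝ (⇑U) _root_.id K g) atTop (𝓝 (c • one)) := by
    rw [← hc', ← hPone]
    exact hproj
  -- key shift estimate
  have hkey : ∀ δ' : ℝ, 0 < δ' → ∀ k N : ℕ, 2 * k * M / V N < δ' →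
      |(μ (A' ∩ {x | SN N x ∈ Ioo a b})).toReal -
        (μ ((T^[k]) ⁻¹' A' ∩ {x | SN N x ∈ Ioo a b})).toReal| ≤
      (μ {x | SN N x ∈ Ioo (a - δ') (a + δ')}).toReal +
        (μ {x | SN N x ∈ Ioo (b - δ') (b + δ')}).toReal := by
    intro δ' hδ' k N hkN
    set BN := {x | SN N x ∈ Ioo a b} with hBN
    set Ck := (T^[k]) ⁻¹' A' with hCk
    set Dk := {x | SN N (T^[k] x) ∈ Ioo a b} with hDk
    set E1 := {x | SN N x ∈ Ioo (a - δ') (a + δ')} with hE1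
    set E2 := {x | SN N x ∈ Ioo (b - δ') (b + δ')} with hE2
    have hdiff : ∀ x, |SN N (T^[k] x) - SN N x| < δ' := fun x =>
      (sn_shift_bound T f hM A V hVpos SN hSN k N x).trans_lt hkN
    have hsub1 : Dk \ BN ⊆ E1 ∪ E2 := by
      rintro x ⟨hx1, hx2⟩
      have hd := abs_lt.1 (hdiff x)
      simp only [hDk, hBN, Set.mem_setOf_eq, Set.mem_Ioo] at hx1 hx2
      simp only [hE1, hE2, Set.mem_union, Set.mem_setOf_eq, Set.mem_Ioo]
      by_cases hua : SN N x ≤ a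
      · left; constructor <;> linarith [hx1.1, hx1.2, hd.1, hd.2]
      · push_neg at hua hx2
        have hub := hx2 hua
        right; constructor <;> linarith [hx1.1, hx1.2, hd.1, hd.2]
    have hsub2 : BN \ Dk ⊆ E1 ∪ E2 := by
      rintro x ⟨hx1, hx2⟩
      have hd := abs_lt.1 (hdiff x)
      simp only [hDk, hBN, Set.mem_setOf_eq, Set.mem_Ioo] at hx1 hx2
      simp only [hE1, hE2, Set.mem_union, Set.mem_setOf_eq, Set.mem_Ioo]
      by_cases hva : SN N (T^[k] x) ≤ a
      · left; constructor <;> linarith [hx1.1, hx1.2, hd.1, hd.2]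
      · push_neg at hva hx2
        have hvb := hx2 hva
        right; constructor <;> linarith [hx1.1, hx1.2, hd.1, hd.2]
    have hpre : μ (A' ∩ BN) = μ (Ck ∩ Dk) := by
      have h := (hT.toMeasurePreserving.iterate k).measure_preimage
        ((hA'.inter (hBm N)).nullMeasurableSet)
      rw [← h, Set.preimage_inter]
      rfl
    have h1 : μ (Ck ∩ Dk) ≤ μ (Ck ∩ BN) + (μ E1 + μ E2) := by
      calc μ (Ck ∩ Dk) ≤ μ ((Ck ∩ BN) ∪ (Dk \ BN)) := by
            apply measure_mono
            rintro x ⟨hx1, hx2⟩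
            by_cases hxB : x ∈ BN
            · exact Or.inl ⟨hx1, hxB⟩
            · exact Or.inr ⟨hx2, hxB⟩
        _ ≤ μ (Ck ∩ BN) + μ (Dk \ BN) := measure_union_le _ _
        _ ≤ μ (Ck ∩ BN) + (μ E1 + μ E2) := by
            exact add_le_add le_rfl ((measure_mono hsub1).trans (measure_union_le _ _))
    have h2 : μ (Ck ∩ BN) ≤ μ (Ck ∩ Dk) + (μ E1 + μ E2) := by
      calc μ (Ck ∩ BN) ≤ μ ((Ck ∩ Dk) ∪ (BN \ Dk)) := by
            apply measure_mono
            rintro x ⟨hx1, hx2⟩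
            by_cases hxD : x ∈ Dk
            · exact Or.inl ⟨hx1, hxD⟩
            · exact Or.inr ⟨hx2, hxD⟩
        _ ≤ μ (Ck ∩ Dk) + μ (BN \ Dk) := measure_union_le _ _
        _ ≤ μ (Ck ∩ Dk) + (μ E1 + μ E2) := by
            exact add_le_add le_rfl ((measure_mono hsub2).trans (measure_union_le _ _))
    rw [hpre]
    have fin : ∀ s : Set X, μ s ≠ ⊤ := fun s => measure_ne_top μ s
    rw [abs_sub_le_iff]
    constructor
    · have := ENNReal.toReal_mono (by
        exact ENNReal.add_ne_top.2 ⟨fin _, ENNReal.add_ne_top.2 ⟨fin _, fin _⟩⟩) h1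
      rw [ENNReal.toReal_add (fin _) (ENNReal.add_ne_top.2 ⟨fin _, fin _⟩),
        ENNReal.toReal_add (fin _) (fin _)] at this
      linarith
    · have := ENNReal.toReal_mono (by
        exact ENNReal.add_ne_top.2 ⟨fin _, ENNReal.add_ne_top.2 ⟨fin _, fin _⟩⟩) h2
      rw [ENNReal.toReal_add (fin _) (ENNReal.add_ne_top.2 ⟨fin _, fin _⟩),
        ENNReal.toReal_add (fin _) (fin _)] at this
      linarith
  -- convergence of μ (B N)
  have hq : Tendsto (fun N => (μ {x | SN N x ∈ Ioo a b}).toReal) atTop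
      (𝓝 ((S (Ioo a b)).toReal)) :=
    (ENNReal.tendsto_toReal (measure_ne_top S _)).comp (hDLT a b hab)
  -- atoms of S are countable
  have hatoms : {t : ℝ | 0 < S {t}}.Countable :=
    MeasureTheory.Measure.countable_meas_pos_of_disjoint_iUnion
      (As := fun t : ℝ => ({t} : Set ℝ)) (fun t => measurableSet_singleton t)
      (fun i j hij => by simp [Function.onFun, hij])
  have hSa : S {a} = 0 := measure_mono_null (by simp) hab
  have hSb : S {b} = 0 := measure_mono_null (by simp [Set.singleton_subset_iff]) hab
  have hInter : ∀ t : ℝ, (⋂ n : ℕ, Ioo (t - 1/(n+1)) (t + 1/(n+1))) = {t} := by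
    intro t
    ext y
    simp only [Set.mem_iInter, Set.mem_Ioo, Set.mem_singleton_iff]
    constructor
    · intro h
      by_contra hne
      obtain ⟨n, hn⟩ := exists_nat_one_div_lt (abs_pos.mpr (sub_ne_zero.mpr hne))
      have habs : |y - t| < 1/(n+1) :=
        abs_sub_lt_iff.2 ⟨by linarith [(h n).2], by linarith [(h n).1]⟩
      linarith
    · rintro rfl n
      have : (0:ℝ) < 1/(n+1) := by positivity
      constructor <;> linarith
  have hlim : ∀ t : ℝ, S {t} = 0 →
      Tendsto (fun n : ℕ => S (Ioo (t - 1/(n+1)) (t + 1/(n+1)))) atTop (𝓝 0) := by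
    intro t ht
    have hmono : ∀ {m n : ℕ}, m ≤ n → (1:ℝ)/(n+1) ≤ 1/(m+1) := by
      intro m n h
      gcongr
    have h := tendsto_measure_iInter_atTop (μ := S)
      (s := fun n : ℕ => Ioo (t - 1/(n+1)) (t + 1/(n+1)))
      (fun n => measurableSet_Ioo.nullMeasurableSet)
      (fun m n hmn => Set.Ioo_subset_Ioo (by linarith [hmono hmn]) (by linarith [hmono hmn]))
      ⟨0, measure_ne_top S _⟩
    rw [hInter t, ht] at h
    exact h
  -- the main real-valued convergence
  have main : Tendsto (fun N => (μ (A' ∩ {x | SN N x ∈ Ioo a b})).toReal -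
      c * (μ {x | SN N x ∈ Ioo a b}).toReal) atTop (𝓝 0) := by
    rw [NormedAddCommGroup.tendsto_nhds_zero]
    intro ε hε
    -- choose δ
    have hη : (0:ℝ≥0∞) < ENNReal.ofReal (ε/8) := by
      simp [ENNReal.ofReal_pos]; positivity
    obtain ⟨n, hna, hnb⟩ := (((hlim a hSa).eventually_lt_const hη).and
      ((hlim b hSb).eventually_lt_const hη)).exists
    set δ0 : ℝ := 1/(n+1) with hδ0def
    have hδ0 : 0 < δ0 := by positivity
    set bad : Set ℝ := (fun δ : ℝ => a - δ) ⁻¹' {t : ℝ | 0 < S {t}} ∪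
      (fun δ : ℝ => a + δ) ⁻¹' {t : ℝ | 0 < S {t}} ∪
      (fun δ : ℝ => b - δ) ⁻¹' {t : ℝ | 0 < S {t}} ∪
      (fun δ : ℝ => b + δ) ⁻¹' {t : ℝ | 0 < S {t}} with hbaddef
    have hbadcnt : bad.Countable := by
      refine (((hatoms.preimage ?_).union (hatoms.preimage ?_)).union
        (hatoms.preimage ?_)).union (hatoms.preimage ?_) <;>
        intro x y hxy <;> dsimp at hxy <;> linarith
    have hvol : volume (Set.Ioo (0:ℝ) δ0 \ bad) ≠ 0 := by
      rw [measure_diff_null (hbadcnt.measure_zero volume)]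
      simp [Real.volume_Ioo, hδ0.le]
      positivity
    obtain ⟨δ, ⟨hδpos, hδlt⟩, hδgood⟩ := nonempty_of_measure_ne_zero hvol
    simp only [hbaddef, Set.mem_union, Set.mem_preimage, Set.mem_setOf_eq, not_or, not_lt,
      nonpos_iff_eq_zero] at hδgood
    obtain ⟨⟨⟨hza1, hza2⟩, hzb1⟩, hzb2⟩ := hδgood
    have hpa : S ({a - δ, a + δ} : Set ℝ) = 0 := by
      rw [Set.insert_eq]
      exact le_antisymm ((measure_union_le _ _).trans
        (by rw [hza1, hza2, add_zero])) zero_le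
    have hpb : S ({b - δ, b + δ} : Set ℝ) = 0 := by
      rw [Set.insert_eq]
      exact le_antisymm ((measure_union_le _ _).trans
        (by rw [hzb1, hzb2, add_zero])) zero_le
    have hsmalla : S (Ioo (a - δ) (a + δ)) < ENNReal.ofReal (ε/8) :=
      lt_of_le_of_lt (measure_mono (Set.Ioo_subset_Ioo (by linarith) (by linarith))) hna
    have hsmallb : S (Ioo (b - δ) (b + δ)) < ENNReal.ofReal (ε/8) :=
      lt_of_le_of_lt (measure_mono (Set.Ioo_subset_Ioo (by linarith) (by linarith))) hnb
    have hsumlim : (S (Ioo (a - δ) (a + δ))).toReal + (S (Ioo (b - δ) (b + δ))).toReal < ε/4 := by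
      have h1 : (S (Ioo (a - δ) (a + δ))).toReal < ε/8 := by
        have := (ENNReal.toReal_lt_toReal (measure_ne_top S _) ENNReal.ofReal_ne_top).2 hsmalla
        rwa [ENNReal.toReal_ofReal (by positivity)] at this
      have h2 : (S (Ioo (b - δ) (b + δ))).toReal < ε/8 := by
        have := (ENNReal.toReal_lt_toReal (measure_ne_top S _) ENNReal.ofReal_ne_top).2 hsmallb
        rwa [ENNReal.toReal_ofReal (by positivity)] at this
      linarith
    have hra : Tendsto (fun N => (μ {x | SN N x ∈ Ioo (a - δ) (a + δ)}).toReal) atTop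
        (𝓝 ((S (Ioo (a - δ) (a + δ))).toReal)) :=
      (ENNReal.tendsto_toReal (measure_ne_top S _)).comp (hDLT (a - δ) (a + δ) hpa)
    have hrb : Tendsto (fun N => (μ {x | SN N x ∈ Ioo (b - δ) (b + δ)}).toReal) atTop
        (𝓝 ((S (Ioo (b - δ) (b + δ))).toReal)) :=
      (ENNReal.tendsto_toReal (measure_ne_top S _)).comp (hDLT (b - δ) (b + δ) hpb)
    have hrev : ∀ᶠ N in atTop, (μ {x | SN N x ∈ Ioo (a - δ) (a + δ)}).toReal +
        (μ {x | SN N x ∈ Ioo (b - δ) (b + δ)}).toReal < ε/4 :=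
      (hra.add hrb).eventually_lt_const hsumlim
    -- choose K
    obtain ⟨K0, hK0⟩ := Metric.tendsto_atTop.mp hMET (ε/8) (by positivity)
    set K : ℕ := max K0 1 with hKdef
    have hK1 : 1 ≤ K := le_max_right _ _
    have hKnorm : ‖birkhoffAverage ℝ (⇑U) _root_.id K g - c • one‖ < ε/8 := by
      have := hK0 K (le_max_left _ _)
      rwa [dist_eq_norm] at this
    -- eventual bound
    have hVev : ∀ᶠ N in atTop, ∀ k : ℕ, k ≤ K → 2 * k * M / V N < δ := by
      filter_upwards [hV.eventually_gt_atTop (2 * K * M / δ)] with N hN k hk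
      have hVN := hVpos N
      rw [div_lt_iff₀ hVN]
      have h2 : 2 * K * M < V N * δ := (div_lt_iff₀ hδpos).1 hN
      have h3 : (k:ℝ) ≤ K := Nat.cast_le.2 hk
      nlinarith
    filter_upwards [hVev, hrev] with N hVN hrN
    set q := (μ {x | SN N x ∈ Ioo a b}).toReal with hqdef
    set u := (μ (A' ∩ {x | SN N x ∈ Ioo a b})).toReal with hudef
    set rN := (μ {x | SN N x ∈ Ioo (a - δ) (a + δ)}).toReal +
      (μ {x | SN N x ∈ Ioo (b - δ) (b + δ)}).toReal with hrNdef
    have hKpos : (0:ℝ) < K := by exact_mod_cast hK1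
    -- inner product of Birkhoff average with χ N
    have hbAinner : (inner ℝ (birkhoffAverage ℝ (⇑U) _root_.id K g) (χ N) : ℝ) =
        (K:ℝ)⁻¹ * ∑ k ∈ Finset.range K,
          (μ ((T^[k]) ⁻¹' A' ∩ {x | SN N x ∈ Ioo a b})).toReal := by
      simp only [birkhoffAverage, birkhoffSum, _root_.id]
      rw [real_inner_smul_left, sum_inner]
      congr 1
      exact Finset.sum_congr rfl fun k _ => hinner_k k N
    have hterm : ∀ k ∈ Finset.range K,
        |u - (μ ((T^[k]) ⁻¹' A' ∩ {x | SN N x ∈ Ioo a b})).toReal| ≤ rN := by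
      intro k hk
      exact hkey δ hδpos k N (hVN k (le_of_lt (Finset.mem_range.1 hk)))
    have havg : |u - (K:ℝ)⁻¹ * ∑ k ∈ Finset.range K,
        (μ ((T^[k]) ⁻¹' A' ∩ {x | SN N x ∈ Ioo a b})).toReal| ≤ rN := by
      have heq : u - (K:ℝ)⁻¹ * ∑ k ∈ Finset.range K,
          (μ ((T^[k]) ⁻¹' A' ∩ {x | SN N x ∈ Ioo a b})).toReal =
          (K:ℝ)⁻¹ * ∑ k ∈ Finset.range K,
            (u - (μ ((T^[k]) ⁻¹' A' ∩ {x | SN N x ∈ Ioo a b})).toReal) := by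
        rw [Finset.sum_sub_distrib, Finset.sum_const, Finset.card_range, nsmul_eq_mul,
          mul_sub, ← mul_assoc, inv_mul_cancel₀ (ne_of_gt hKpos), one_mul]
      rw [heq, abs_mul, abs_inv, abs_of_pos hKpos]
      calc (K:ℝ)⁻¹ * |∑ k ∈ Finset.range K,
            (u - (μ ((T^[k]) ⁻¹' A' ∩ {x | SN N x ∈ Ioo a b})).toReal)| ≤
          (K:ℝ)⁻¹ * ∑ k ∈ Finset.range K,
            |u - (μ ((T^[k]) ⁻¹' A' ∩ {x | SN N x ∈ Ioo a b})).toReal| := by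
            gcongr
            exact Finset.abs_sum_le_sum_abs _ _
        _ ≤ (K:ℝ)⁻¹ * ∑ _k ∈ Finset.range K, rN := by
            gcongr with k hk
            exact hterm k hk
        _ = rN := by
            rw [Finset.sum_const, Finset.card_range, nsmul_eq_mul, ← mul_assoc,
              inv_mul_cancel₀ (ne_of_gt hKpos), one_mul]
    have hsecond : |(inner ℝ (birkhoffAverage ℝ (⇑U) _root_.id K g) (χ N) : ℝ) - c * q| < ε/8 + ε/8 := by
      have heq : (inner ℝ (birkhoffAverage ℝ (⇑U) _root_.id K g) (χ N) : ℝ) - c * q =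
          (inner ℝ (birkhoffAverage ℝ (⇑U) _root_.id K g - c • one) (χ N) : ℝ) := by
        rw [inner_sub_left, real_inner_smul_left, hinner_one]
      rw [heq]
      calc |(inner ℝ (birkhoffAverage ℝ (⇑U) _root_.id K g - c • one) (χ N) : ℝ)| ≤
            ‖birkhoffAverage ℝ (⇑U) _root_.id K g - c • one‖ * ‖χ N‖ := abs_real_inner_le_norm _ _
        _ ≤ ‖birkhoffAverage ℝ (⇑U) _root_.id K g - c • one‖ * 1 := by
            gcongr
            exact hχnorm N
        _ < ε/8 + ε/8 := by rw [mul_one]; linarith [hKnorm]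
    have htotal : |u - c * q| < ε := by
      have h := abs_sub_le u ((K:ℝ)⁻¹ * ∑ k ∈ Finset.range K,
        (μ ((T^[k]) ⁻¹' A' ∩ {x | SN N x ∈ Ioo a b})).toReal) (c * q)
      rw [← hbAinner] at h
      have := hsecond
      calc |u - c * q| ≤ _ := h
        _ < rN + (ε/8 + ε/8) := by
            have h2 := havg
            rw [← hbAinner] at h2
            linarith [hsecond]
        _ < ε := by linarith [hrN]
    simpa [Real.norm_eq_abs] using htotal
  -- final assembly
  have hfinal : Tendsto (fun N => (μ (A' ∩ {x | SN N x ∈ Ioo a b})).toReal) atTop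
      (𝓝 (c * (S (Ioo a b)).toReal)) := by
    have h := main.add (hq.const_mul c)
    simp only [zero_add] at h
    convert h using 2 with N
    ring
  have hne : μ A' * S (Ioo a b) ≠ ⊤ :=
    ENNReal.mul_ne_top (measure_ne_top μ _) (measure_ne_top S _)
  refine (ENNReal.tendsto_toReal_iff (fun N => measure_ne_top μ _) hne).1 ?_
  rwa [ENNReal.toReal_mul]
end

section
/- Let (X, d) be a metric space with a Borel probability measure μ, T : X → X an invertible measure-preserving transformation, and U : X → X a measure-preserving ergodic transformation. Suppose the pair (T, U) is contracting, i.e., for μ-almost every x, d(T^n U x, T^n x) → 0 as n → ∞. Then T is mixing: for all Borel sets A, B, lim_{N→∞} μ(A ∩ T^{-N} B) = μ(A)·μ(B). -/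
open MeasureTheory Filter Set Metric
open scoped ENNReal

/-- Lipschitz approximation of an indicator function in L¹. -/
lemma indicator_lipschitz_approx
    {X : Type*} [MetricSpace X] [MeasurableSpace X] [BorelSpace X]
    (μ : Measure X) [IsProbabilityMeasure μ] {B : Set X} (hB : MeasurableSet B)
    {ε : ℝ} (hε : 0 < ε) :
    ∃ φ : X → ℝ, (∃ K : NNReal, LipschitzWith K φ) ∧ (∀ x, 0 ≤ φ x ∧ φ x ≤ 1) ∧
      ∫ x, |φ x - B.indicator 1 x| ∂μ ≤ ε := by
  -- find a closed set F ⊆ B with μ (B \ F) < ε/2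
  obtain ⟨F, hFB, hFc, hFμ⟩ := hB.exists_isClosed_diff_lt (measure_ne_top μ B)
    (ε := ENNReal.ofReal (ε / 2)) (by simp [ENNReal.ofReal_eq_zero]; linarith)
  rcases F.eq_empty_or_nonempty with rfl | hFne
  · refine ⟨fun _ => 0, ⟨0, LipschitzWith.const 0⟩, fun x => by norm_num, ?_⟩
    have : ∀ x, |(0:ℝ) - B.indicator 1 x| = (B \ (∅ : Set X)).indicator 1 x := by
      intro x
      by_cases hx : x ∈ B <;> simp [Set.indicator_apply, hx]
    calc ∫ x, |(fun _ => (0:ℝ)) x - B.indicator 1 x| ∂μ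
        = ∫ x, (B \ (∅ : Set X)).indicator (1 : X → ℝ) x ∂μ := by
          exact integral_congr_ae (Filter.Eventually.of_forall fun x => this x)
      _ = (μ (B \ ∅)).toReal := integral_indicator_one (by simpa using hB)
      _ ≤ ε := by
          have := hFμ.le
          have h2 : μ (B \ ∅) ≤ ENNReal.ofReal (ε/2) := this
          have := ENNReal.toReal_le_of_le_ofReal (by linarith) h2
          linarith
  · -- choose δ > 0 with μ (thickening δ F) < μ F + ε/2
    have hthick : Tendsto (fun δ => μ (thickening δ F)) (nhdsWithin 0 (Ioi 0)) (nhds (μ F)) :=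
      tendsto_measure_thickening_of_isClosed ⟨1, one_pos, measure_ne_top μ _⟩ hFc
    have hlt : μ F < μ F + ENNReal.ofReal (ε/2) :=
      ENNReal.lt_add_right (measure_ne_top μ F) (by simp [ENNReal.ofReal_eq_zero]; linarith)
    obtain ⟨δ, hδthick, hδpos⟩ :=
      ((hthick.eventually_lt_const hlt).and (eventually_mem_nhdsWithin)).exists
    simp only [mem_Ioi] at hδpos
    set φ : X → ℝ := fun x => max (1 - infDist x F / δ) 0 with hφdef
    have hφlip : LipschitzWith (Real.toNNReal δ⁻¹) φ := by
      apply LipschitzWith.of_dist_le_mul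
      intro a b
      have h1 : dist (infDist a F) (infDist b F) ≤ 1 * dist a b :=
        (lipschitz_infDist_pt F).dist_le_mul a b
      rw [Real.dist_eq] at h1
      have h2 : dist (φ a) (φ b) ≤ |(1 - infDist a F / δ) - (1 - infDist b F / δ)| := by
        rw [Real.dist_eq]
        exact abs_max_sub_max_le_abs _ _ _
      have h3 : |(1 - infDist a F / δ) - (1 - infDist b F / δ)|
          = |infDist a F - infDist b F| / δ := by
        have he : (1 - infDist a F / δ) - (1 - infDist b F / δ)
            = (infDist b F - infDist a F) / δ := by ring
        rw [he, abs_div, abs_of_pos hδpos, abs_sub_comm]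
      have hc : (Real.toNNReal δ⁻¹ : ℝ) = δ⁻¹ := Real.coe_toNNReal _ (by positivity)
      rw [hc]
      have h4 : |infDist a F - infDist b F| / δ ≤ dist a b / δ := by
        gcongr
        linarith
      rw [h3] at h2
      calc dist (φ a) (φ b) ≤ dist a b / δ := h2.trans h4
        _ = δ⁻¹ * dist a b := by rw [div_eq_inv_mul]
    have hφ01 : ∀ x, 0 ≤ φ x ∧ φ x ≤ 1 := by
      intro x
      refine ⟨le_max_right _ _, max_le ?_ zero_le_one⟩
      have := infDist_nonneg (s := F) (x := x)
      have : 0 ≤ infDist x F / δ := by positivity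
      linarith
    have hmemF : ∀ x ∈ F, φ x = 1 := by
      intro x hx
      simp [hφdef, infDist_zero_of_mem hx]
    have hout : ∀ x, x ∉ thickening δ F → φ x = 0 := by
      intro x hx
      rw [mem_thickening_iff_infDist_lt hFne, not_lt] at hx
      have : 1 - infDist x F / δ ≤ 0 := by
        have : (1:ℝ) ≤ infDist x F / δ := (one_le_div hδpos).2 hx
        linarith
      simp [hφdef, max_eq_right this]
    set S : Set X := (B \ F) ∪ (thickening δ F \ F) with hSdef
    have hSmeas : MeasurableSet S :=
      ((hB.diff hFc.measurableSet).union
        (isOpen_thickening.measurableSet.diff hFc.measurableSet))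
    have hindB : ∀ x, 0 ≤ B.indicator (1 : X → ℝ) x ∧ B.indicator (1 : X → ℝ) x ≤ 1 := by
      intro x; by_cases hxB : x ∈ B <;> simp [Set.indicator_apply, hxB]
    have hSnn : ∀ x, (0:ℝ) ≤ S.indicator 1 x :=
      fun x => Set.indicator_nonneg (fun _ _ => zero_le_one) x
    have hpt : ∀ x, |φ x - B.indicator 1 x| ≤ S.indicator 1 x := by
      intro x
      by_cases hxF : x ∈ F
      · rw [hmemF x hxF, Set.indicator_of_mem (hFB hxF), Pi.one_apply, sub_self, abs_zero]
        exact hSnn x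
      · by_cases hxT : x ∈ thickening δ F
        · have hxS : x ∈ S := Set.mem_union_right _ ⟨hxT, hxF⟩
          rw [Set.indicator_of_mem hxS, Pi.one_apply]
          obtain ⟨ha, hb⟩ := hφ01 x
          obtain ⟨hc, hd⟩ := hindB x
          rw [abs_sub_le_iff]
          constructor <;> linarith
        · rw [hout x hxT]
          by_cases hxB : x ∈ B
          · have hxS : x ∈ S := Set.mem_union_left _ ⟨hxB, hxF⟩
            rw [Set.indicator_of_mem hxS, Set.indicator_of_mem hxB]
            simp
          · rw [Set.indicator_of_notMem hxB, sub_zero, abs_zero]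
            exact hSnn x
    have hint1 : Integrable (fun x => |φ x - B.indicator 1 x|) μ := by
      apply Integrable.mono' (integrable_const (1:ℝ))
      · exact ((hφlip.continuous.measurable.sub
          (measurable_const.indicator hB)).abs).aestronglyMeasurable
      · refine Filter.Eventually.of_forall fun x => ?_
        rw [Real.norm_eq_abs, abs_abs]
        obtain ⟨ha, hb⟩ := hφ01 x
        obtain ⟨hc, hd⟩ := hindB x
        rw [abs_sub_le_iff]
        constructor <;> linarith
    have hμS : μ S ≤ ENNReal.ofReal ε := by
      calc μ S ≤ μ (B \ F) + μ (thickening δ F \ F) := measure_union_le _ _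
        _ ≤ ENNReal.ofReal (ε/2) + ENNReal.ofReal (ε/2) := by
            have h2 : μ (thickening δ F \ F) < ENNReal.ofReal (ε/2) :=
              measure_diff_lt_of_lt_add hFc.nullMeasurableSet
                (self_subset_thickening hδpos F) (measure_ne_top μ F) hδthick
            exact add_le_add hFμ.le h2.le
        _ = ENNReal.ofReal ε := by
            rw [← ENNReal.ofReal_add (by linarith) (by linarith)]
            norm_num
    refine ⟨φ, ⟨_, hφlip⟩, hφ01, ?_⟩
    calc ∫ x, |φ x - B.indicator 1 x| ∂μ ≤ ∫ x, S.indicator 1 x ∂μ := by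
          apply integral_mono hint1 _ hpt
          exact (integrable_const (1:ℝ)).indicator hSmeas
      _ = (μ S).toReal := integral_indicator_one hSmeas
      _ ≤ ε := ENNReal.toReal_le_of_le_ofReal hε.le hμS

set_option maxHeartbeats 2000000 in
set_option synthInstance.maxHeartbeats 1000000 in
lemma lipschitz_mixing
    {X : Type*} [MetricSpace X] [MeasurableSpace X] [BorelSpace X]
    (μ : Measure X) [IsProbabilityMeasure μ]
    (T : X → X) (hT : MeasurePreserving T μ μ)
    (U : X → X) (hU : Ergodic U μ)
    (hcontr : ∀ᵐ x ∂μ, Tendsto (fun n => dist (T^[n] (U x)) (T^[n] x)) atTop (nhds 0))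
    (φ : X → ℝ) {Kφ : NNReal} (hφ : LipschitzWith Kφ φ) (hφ1 : ∀ x, |φ x| ≤ 1)
    (g : X → ℝ) (hg : Measurable g) (hg1 : ∀ x, |g x| ≤ 1) :
    Tendsto (fun N => ∫ x, g x * φ (T^[N] x) ∂μ) atTop
      (nhds ((∫ x, g x ∂μ) * (∫ x, φ x ∂μ))) := by
  have hUm : MeasurePreserving U μ μ := hU.toMeasurePreserving
  have hφm : MemLp φ 2 μ := MemLp.of_bound hφ.continuous.aestronglyMeasurable 1
    (Filter.Eventually.of_forall fun x => by simpa using hφ1 x)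
  have hgm : MemLp g 2 μ := MemLp.of_bound hg.aestronglyMeasurable 1
    (Filter.Eventually.of_forall fun x => by simpa using hg1 x)
  set Φ : Lp ℝ 2 μ := hφm.toLp φ with hΦdef
  set G : Lp ℝ 2 μ := hgm.toLp g with hGdef
  set c : ℝ := ∫ x, g x ∂μ with hcdef
  set Cst : Lp ℝ 2 μ := (memLp_const c).toLp (fun _ => c) with hCdef
  set W : Lp ℝ 2 μ →ₗᵢ[ℝ] Lp ℝ 2 μ := Lp.compMeasurePreservingₗᵢ ℝ U hUm with hWdef
  set V : Lp ℝ 2 μ →L[ℝ] Lp ℝ 2 μ := W.toContinuousLinearMap with hVdef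
  set ΦN : ℕ → Lp ℝ 2 μ := fun N => Lp.compMeasurePreserving (T^[N]) (hT.iterate N) Φ
    with hΦNdef
  have hVW : ∀ f : Lp ℝ 2 μ, V f = W f := fun _ => rfl
  have hVcoe : ∀ f : Lp ℝ 2 μ, (V f : X → ℝ) =ᵐ[μ] (f : X → ℝ) ∘ U := fun f =>
    Lp.coeFn_compMeasurePreserving f hUm
  have hΦN : ∀ N, ((ΦN N : Lp ℝ 2 μ) : X → ℝ) =ᵐ[μ] fun x => φ (T^[N] x) := by
    intro N
    refine (Lp.coeFn_compMeasurePreserving Φ (hT.iterate N)).trans ?_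
    exact (hT.iterate N).quasiMeasurePreserving.ae_eq_comp (hφm.coeFn_toLp)
  have hinner : ∀ f h : Lp ℝ 2 μ,
      (inner ℝ f h : ℝ) = ∫ x, (f : X → ℝ) x * (h : X → ℝ) x ∂μ := by
    intro f h
    rw [MeasureTheory.L2.inner_def]
    simp [RCLike.inner_apply, conj_trivial, mul_comm]
  -- (1) the contraction estimate: ‖V (ΦN N) - ΦN N‖ → 0
  have hVΦN : ∀ N, ((V (ΦN N) : Lp ℝ 2 μ) : X → ℝ) =ᵐ[μ] fun x => φ (T^[N] (U x)) := by
    intro N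
    refine (hVcoe (ΦN N)).trans ?_
    exact hUm.quasiMeasurePreserving.ae_eq_comp (hΦN N)
  have hq : ∀ N, ‖V (ΦN N) - ΦN N‖ ^ 2
      = ∫ x, (φ (T^[N] (U x)) - φ (T^[N] x)) ^ 2 ∂μ := by
    intro N
    rw [← real_inner_self_eq_norm_sq, hinner]
    apply integral_congr_ae
    filter_upwards [Lp.coeFn_sub (V (ΦN N)) (ΦN N), hVΦN N, hΦN N] with x hx h1x h2x
    rw [hx, Pi.sub_apply, h1x, h2x, ← pow_two]
  have hq0 : Tendsto (fun N => ∫ x, (φ (T^[N] (U x)) - φ (T^[N] x)) ^ 2 ∂μ)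
      atTop (nhds 0) := by
    have h0 : (0 : ℝ) = ∫ (_ : X), (0:ℝ) ∂μ := by simp
    rw [h0]
    apply tendsto_integral_of_dominated_convergence (fun _ => (4:ℝ))
    · intro n
      exact ((hφ.continuous.measurable.comp
        ((hT.iterate n).measurable.comp hUm.measurable)).sub
        (hφ.continuous.measurable.comp (hT.iterate n).measurable)).pow_const 2
        |>.aestronglyMeasurable
    · exact integrable_const 4
    · intro n
      refine Filter.Eventually.of_forall fun x => ?_
      rw [Real.norm_eq_abs, abs_of_nonneg (sq_nonneg _)]
      have h1 := abs_le.1 (hφ1 (T^[n] (U x)))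
      have h2 := abs_le.1 (hφ1 (T^[n] x))
      have : (4:ℝ) = 2^2 := by norm_num
      rw [this]
      apply sq_le_sq' <;> linarith [h1.1, h1.2, h2.1, h2.2]
    · filter_upwards [hcontr] with x hx
      have h1 : Tendsto (fun n => φ (T^[n] (U x)) - φ (T^[n] x)) atTop (nhds 0) := by
        refine squeeze_zero_norm (fun n => ?_) (by simpa using hx.const_mul (Kφ:ℝ) :
          Tendsto (fun n => (Kφ:ℝ) * dist (T^[n] (U x)) (T^[n] x)) atTop (nhds 0))
        rw [Real.norm_eq_abs, ← Real.dist_eq]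
        exact hφ.dist_le_mul _ _
      simpa [pow_two] using h1.mul h1
  have hδ0 : Tendsto (fun N => ‖V (ΦN N) - ΦN N‖) atTop (nhds 0) := by
    have heq : (fun N => ‖V (ΦN N) - ΦN N‖)
        = fun N => Real.sqrt (∫ x, (φ (T^[N] (U x)) - φ (T^[N] x)) ^ 2 ∂μ) := by
      funext N
      rw [← hq N, Real.sqrt_sq (norm_nonneg _)]
    rw [heq]
    have := (Real.continuous_sqrt.tendsto 0).comp hq0
    simpa [Function.comp_def] using this
  -- (2) iterate facts
  have hiter_inner : ∀ k : ℕ, ∀ f h : Lp ℝ 2 μ,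
      (inner ℝ ((⇑V)^[k] f) ((⇑V)^[k] h) : ℝ) = inner ℝ f h := by
    intro k
    induction k with
    | zero => intro f h; simp
    | succ n ih =>
      intro f h
      rw [Function.iterate_succ_apply, Function.iterate_succ_apply]
      rw [ih (V f) (V h), hVW, hVW, W.inner_map_map]
  have hiter_dist : ∀ k : ℕ, ∀ a b : Lp ℝ 2 μ, ‖(⇑V)^[k] a - (⇑V)^[k] b‖ = ‖a - b‖ := by
    intro k
    induction k with
    | zero => intro a b; simp
    | succ n ih =>
      intro a b
      rw [Function.iterate_succ_apply, Function.iterate_succ_apply, ih (V a) (V b),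
        hVW, hVW, ← W.map_sub, W.norm_map]
  have hiter_tel : ∀ k : ℕ, ∀ f : Lp ℝ 2 μ, ‖(⇑V)^[k] f - f‖ ≤ k * ‖V f - f‖ := by
    intro k
    induction k with
    | zero => intro f; simp
    | succ n ih =>
      intro f
      have h1 : ‖(⇑V)^[n+1] f - f‖ ≤ ‖(⇑V)^[n+1] f - (⇑V)^[n] f‖ + ‖(⇑V)^[n] f - f‖ := by
        have := dist_triangle ((⇑V)^[n+1] f) ((⇑V)^[n] f) f
        simpa [dist_eq_norm] using this
      have h2 : ‖(⇑V)^[n+1] f - (⇑V)^[n] f‖ = ‖V f - f‖ := by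
        rw [Function.iterate_succ_apply, hiter_dist n (V f) f]
      rw [h2] at h1
      calc ‖(⇑V)^[n+1] f - f‖ ≤ ‖V f - f‖ + n * ‖V f - f‖ := by linarith [ih f]
        _ = (n+1 : ℕ) * ‖V f - f‖ := by push_cast; ring
  -- iterate norms
  have hiter_norm : ∀ k : ℕ, ∀ f : Lp ℝ 2 μ, ‖(⇑V)^[k] f‖ = ‖f‖ := by
    intro k
    induction k with
    | zero => intro f; simp
    | succ n ih => intro f; rw [Function.iterate_succ_apply, ih (V f), hVW, W.norm_map]
  -- (5) mean ergodic theorem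
  have hV1 : ‖V‖ ≤ 1 := W.norm_toContinuousLinearMap_le
  have hproj := ContinuousLinearMap.tendsto_birkhoffAverage_orthogonalProjection (𝕜 := ℝ) V hV1 G
  have hgint : Integrable g μ := hgm.integrable one_le_two
  have hVCst : V Cst = Cst := by
    apply Lp.ext
    refine (hVcoe Cst).trans ?_
    have h1 : ((Cst : Lp ℝ 2 μ) : X → ℝ) =ᵐ[μ] fun _ => c := (memLp_const c).coeFn_toLp
    refine (hUm.quasiMeasurePreserving.ae_eq_comp h1).trans ?_
    exact h1.symm
  have hCmem : Cst ∈ V.eqLocus (1 : Lp ℝ 2 μ →L[ℝ] Lp ℝ 2 μ) := by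
    rw [LinearMap.mem_eqLocus]
    simpa using hVCst
  have horth : ∀ w : Lp ℝ 2 μ, w ∈ V.eqLocus (1 : Lp ℝ 2 μ →L[ℝ] Lp ℝ 2 μ) →
      (inner ℝ (G - Cst) w : ℝ) = 0 := by
    intro w hw
    rw [LinearMap.mem_eqLocus] at hw
    have hw' : V w = w := by simpa using hw
    have hwae : ((w : Lp ℝ 2 μ) : X → ℝ) ∘ U =ᵐ[μ] ((w : Lp ℝ 2 μ) : X → ℝ) := by
      have h2 := hVcoe w
      rw [hw'] at h2
      exact h2.symm
    obtain ⟨cw, hcw⟩ := hU.ae_eq_const_of_ae_eq_comp_ae (Lp.aestronglyMeasurable w) hwae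
    rw [hinner]
    have h3 : ∫ x, ((G - Cst : Lp ℝ 2 μ) : X → ℝ) x * ((w : Lp ℝ 2 μ) : X → ℝ) x ∂μ
        = ∫ x, (g x - c) * cw ∂μ := by
      apply integral_congr_ae
      filter_upwards [Lp.coeFn_sub G Cst, hgm.coeFn_toLp, (memLp_const c).coeFn_toLp, hcw]
        with x h1 h2 h3 h4
      rw [h1, Pi.sub_apply, h2, h3, h4, Function.const_apply]
    rw [h3, integral_mul_const, integral_sub hgint (integrable_const c)]
    simp [hcdef]
  have hlimCst : Tendsto (fun K => birkhoffAverage ℝ (⇑V) _root_.id K G) atTop (nhds Cst) := by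
    have heq : (V.eqLocus (1 : Lp ℝ 2 μ →L[ℝ] Lp ℝ 2 μ)).starProjection G = Cst :=
      Submodule.eq_starProjection_of_mem_of_inner_eq_zero hCmem horth
    rw [← heq]
    exact hproj
  have hbirk0 : Tendsto (fun K => ‖birkhoffAverage ℝ (⇑V) _root_.id K G - Cst‖) atTop
      (nhds 0) := by
    have := (hlimCst.sub (tendsto_const_nhds (x := Cst))).norm
    simpa using this
  -- inner product computations
  have hGΦ : ∀ N, (inner ℝ G (ΦN N) : ℝ) = ∫ x, g x * φ (T^[N] x) ∂μ := by
    intro N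
    rw [hinner]
    apply integral_congr_ae
    filter_upwards [hgm.coeFn_toLp, hΦN N] with x h1 h2
    rw [h1, h2]
  have hφcomp : ∀ N : ℕ, ∫ x, φ (T^[N] x) ∂μ = ∫ x, φ x ∂μ := by
    intro N
    have hasm : AEStronglyMeasurable φ (Measure.map (T^[N]) μ) := by
      rw [(hT.iterate N).map_eq]
      exact hφ.continuous.aestronglyMeasurable
    rw [← integral_map (hT.iterate N).measurable.aemeasurable hasm, (hT.iterate N).map_eq]
  have hCstΦ : ∀ N, (inner ℝ Cst (ΦN N) : ℝ) = c * ∫ x, φ x ∂μ := by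
    intro N
    rw [hinner]
    have h5 : ∫ x, ((Cst : Lp ℝ 2 μ) : X → ℝ) x * ((ΦN N : Lp ℝ 2 μ) : X → ℝ) x ∂μ
        = ∫ x, c * φ (T^[N] x) ∂μ := by
      apply integral_congr_ae
      filter_upwards [(memLp_const c).coeFn_toLp, hΦN N] with x h1 h2
      rw [h1, h2]
    rw [h5, integral_const_mul, hφcomp N]
  have hAKinner : ∀ Kn N : ℕ,
      (inner ℝ (birkhoffAverage ℝ (⇑V) _root_.id Kn G) (ΦN N) : ℝ)
        = (Kn:ℝ)⁻¹ * ∑ k ∈ Finset.range Kn, (inner ℝ ((⇑V)^[k] G) (ΦN N) : ℝ) := by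
    intro Kn N
    simp only [birkhoffAverage, birkhoffSum, _root_.id]
    rw [real_inner_smul_left, sum_inner]
  -- the key quantitative estimate
  have hkey : ∀ Kn : ℕ, 1 ≤ Kn → ∀ N : ℕ,
      |(∫ x, g x * φ (T^[N] x) ∂μ) - c * ∫ x, φ x ∂μ|
        ≤ ‖G‖ * Kn * ‖V (ΦN N) - ΦN N‖
          + ‖birkhoffAverage ℝ (⇑V) _root_.id Kn G - Cst‖ * ‖Φ‖ := by
    intro Kn hKn N
    have hδNnn : (0:ℝ) ≤ ‖V (ΦN N) - ΦN N‖ := norm_nonneg _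
    have e1 : ∀ k ∈ Finset.range Kn,
        |(inner ℝ G (ΦN N) : ℝ) - (inner ℝ ((⇑V)^[k] G) (ΦN N) : ℝ)|
          ≤ ‖G‖ * Kn * ‖V (ΦN N) - ΦN N‖ := by
      intro k hk
      have h1 : (inner ℝ G (ΦN N) : ℝ) = inner ℝ ((⇑V)^[k] G) ((⇑V)^[k] (ΦN N)) :=
        (hiter_inner k G (ΦN N)).symm
      have h2 : (inner ℝ G (ΦN N) : ℝ) - inner ℝ ((⇑V)^[k] G) (ΦN N)
          = inner ℝ ((⇑V)^[k] G) ((⇑V)^[k] (ΦN N) - ΦN N) := by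
        rw [h1, inner_sub_right]
      rw [h2]
      calc |(inner ℝ ((⇑V)^[k] G) ((⇑V)^[k] (ΦN N) - ΦN N) : ℝ)|
          ≤ ‖(⇑V)^[k] G‖ * ‖(⇑V)^[k] (ΦN N) - ΦN N‖ := abs_real_inner_le_norm _ _
        _ ≤ ‖G‖ * (k * ‖V (ΦN N) - ΦN N‖) := by
            rw [hiter_norm k G]
            exact mul_le_mul_of_nonneg_left (hiter_tel k (ΦN N)) (norm_nonneg G)
        _ ≤ ‖G‖ * Kn * ‖V (ΦN N) - ΦN N‖ := by
            have hkK : (k:ℝ) ≤ (Kn:ℝ) := by exact_mod_cast (Finset.mem_range.1 hk).le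
            have h6 := mul_le_mul_of_nonneg_left
              (mul_le_mul_of_nonneg_right hkK hδNnn) (norm_nonneg G)
            calc ‖G‖ * ((k:ℝ) * ‖V (ΦN N) - ΦN N‖)
                ≤ ‖G‖ * ((Kn:ℝ) * ‖V (ΦN N) - ΦN N‖) := h6
              _ = ‖G‖ * Kn * ‖V (ΦN N) - ΦN N‖ := by ring
    have hKn0 : (Kn:ℝ) ≠ 0 := Nat.cast_ne_zero.2 (by omega)
    have e2 : |(inner ℝ G (ΦN N) : ℝ) - inner ℝ (birkhoffAverage ℝ (⇑V) _root_.id Kn G) (ΦN N)|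
        ≤ ‖G‖ * Kn * ‖V (ΦN N) - ΦN N‖ := by
      rw [hAKinner Kn N]
      have hsplit : (inner ℝ G (ΦN N) : ℝ)
          = (Kn:ℝ)⁻¹ * ∑ _k ∈ Finset.range Kn, (inner ℝ G (ΦN N) : ℝ) := by
        rw [Finset.sum_const, Finset.card_range, nsmul_eq_mul]
        field_simp
      rw [hsplit, ← mul_sub, ← Finset.sum_sub_distrib]
      rw [abs_mul, abs_of_nonneg (by positivity : (0:ℝ) ≤ (Kn:ℝ)⁻¹)]
      calc (Kn:ℝ)⁻¹ * |∑ k ∈ Finset.range Kn,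
            ((inner ℝ G (ΦN N) : ℝ) - inner ℝ ((⇑V)^[k] G) (ΦN N))|
          ≤ (Kn:ℝ)⁻¹ * ∑ k ∈ Finset.range Kn,
            |(inner ℝ G (ΦN N) : ℝ) - inner ℝ ((⇑V)^[k] G) (ΦN N)| := by
            exact mul_le_mul_of_nonneg_left (Finset.abs_sum_le_sum_abs _ _) (by positivity)
        _ ≤ (Kn:ℝ)⁻¹ * ∑ _k ∈ Finset.range Kn, (‖G‖ * Kn * ‖V (ΦN N) - ΦN N‖) := by
            refine mul_le_mul_of_nonneg_left (Finset.sum_le_sum e1) (by positivity)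
        _ = (Kn:ℝ)⁻¹ * (Kn * (‖G‖ * Kn * ‖V (ΦN N) - ΦN N‖)) := by
            rw [Finset.sum_const, Finset.card_range, nsmul_eq_mul]
        _ = ‖G‖ * Kn * ‖V (ΦN N) - ΦN N‖ := by field_simp
    have e3 : |(inner ℝ (birkhoffAverage ℝ (⇑V) _root_.id Kn G) (ΦN N) : ℝ) - inner ℝ Cst (ΦN N)|
        ≤ ‖birkhoffAverage ℝ (⇑V) _root_.id Kn G - Cst‖ * ‖Φ‖ := by
      have h1 : (inner ℝ (birkhoffAverage ℝ (⇑V) _root_.id Kn G) (ΦN N) : ℝ) - inner ℝ Cst (ΦN N)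
          = inner ℝ (birkhoffAverage ℝ (⇑V) _root_.id Kn G - Cst) (ΦN N) :=
        (inner_sub_left _ _ _).symm
      rw [h1]
      have h2 := abs_real_inner_le_norm (birkhoffAverage ℝ (⇑V) _root_.id Kn G - Cst) (ΦN N)
      rwa [Lp.norm_compMeasurePreserving Φ (hT.iterate N)] at h2
    rw [← hGΦ N, ← hCstΦ N]
    calc |(inner ℝ G (ΦN N) : ℝ) - inner ℝ Cst (ΦN N)|
        ≤ |(inner ℝ G (ΦN N) : ℝ) - inner ℝ (birkhoffAverage ℝ (⇑V) _root_.id Kn G) (ΦN N)|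
          + |(inner ℝ (birkhoffAverage ℝ (⇑V) _root_.id Kn G) (ΦN N) : ℝ) - inner ℝ Cst (ΦN N)| :=
          abs_sub_le _ _ _
      _ ≤ _ := add_le_add e2 e3
  -- conclusion
  rw [Metric.tendsto_atTop]
  intro ε hε
  have hΦpos : (0:ℝ) < ‖Φ‖ + 1 := by positivity
  obtain ⟨Kn, hKnb, hKn1⟩ := ((hbirk0.eventually_lt_const
      (show (0:ℝ) < ε/(2*(‖Φ‖+1)) by positivity)).and (eventually_ge_atTop 1)).exists
  have hKnR : (1:ℝ) ≤ (Kn:ℝ) := by exact_mod_cast hKn1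
  have hGpos : (0:ℝ) < (‖G‖ + 1) * Kn := by
    have := norm_nonneg G
    nlinarith
  obtain ⟨N₀, hN₀⟩ := (eventually_atTop.1 (hδ0.eventually_lt_const
    (show (0:ℝ) < ε/(2*((‖G‖+1)*Kn)) by positivity)))
  refine ⟨N₀, fun N hN => ?_⟩
  rw [Real.dist_eq]
  have hkey' := hkey Kn hKn1 N
  have hδN := hN₀ N hN
  have hδNnn : (0:ℝ) ≤ ‖V (ΦN N) - ΦN N‖ := norm_nonneg _
  have h1 : ‖G‖ * Kn * ‖V (ΦN N) - ΦN N‖ < ε/2 := by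
    have hb : ‖G‖ * Kn * ‖V (ΦN N) - ΦN N‖ ≤ ((‖G‖+1) * Kn) * ‖V (ΦN N) - ΦN N‖ := by
      have hg0 := norm_nonneg G
      nlinarith
    have hc : ((‖G‖+1) * Kn) * ‖V (ΦN N) - ΦN N‖
        < ((‖G‖+1) * Kn) * (ε/(2*((‖G‖+1)*Kn))) :=
      mul_lt_mul_of_pos_left hδN hGpos
    have hd : ((‖G‖+1) * Kn) * (ε/(2*((‖G‖+1)*Kn))) = ε/2 := by
      have h0 : ((‖G‖+1) * (Kn:ℝ)) ≠ 0 := ne_of_gt hGpos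
      field_simp
    linarith
  have h2 : ‖birkhoffAverage ℝ (⇑V) _root_.id Kn G - Cst‖ * ‖Φ‖ < ε/2 := by
    have hb : ‖birkhoffAverage ℝ (⇑V) _root_.id Kn G - Cst‖ * ‖Φ‖
        ≤ ‖birkhoffAverage ℝ (⇑V) _root_.id Kn G - Cst‖ * (‖Φ‖+1) := by
      have := norm_nonneg (birkhoffAverage ℝ (⇑V) _root_.id Kn G - Cst)
      nlinarith [norm_nonneg Φ]
    have hc : ‖birkhoffAverage ℝ (⇑V) _root_.id Kn G - Cst‖ * (‖Φ‖+1)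
        < (ε/(2*(‖Φ‖+1))) * (‖Φ‖+1) :=
      mul_lt_mul_of_pos_right hKnb hΦpos
    have hd : (ε/(2*(‖Φ‖+1))) * (‖Φ‖+1) = ε/2 := by
      have h0 : (‖Φ‖+1 : ℝ) ≠ 0 := ne_of_gt hΦpos
      field_simp
    linarith
  calc |(∫ x, g x * φ (T^[N] x) ∂μ) - c * ∫ x, φ x ∂μ|
      ≤ ‖G‖ * Kn * ‖V (ΦN N) - ΦN N‖
        + ‖birkhoffAverage ℝ (⇑V) _root_.id Kn G - Cst‖ * ‖Φ‖ := hkey'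
    _ < ε/2 + ε/2 := add_lt_add h1 h2
    _ = ε := by ring

/-- **Theorem (theo:mix).** Let `(X,d)` be a metric space with a Borel probability
measure `μ`, `T` an invertible measure-preserving transformation and `U` a
measure-preserving ergodic transformation such that the pair `(T,U)` is contracting,
i.e. for `μ`-a.e. `x`, `d(Tⁿ(Ux), Tⁿx) → 0`. Then `T` is mixing. -/
theorem contracting_pair_implies_mixing
    {X : Type*} [MetricSpace X] [MeasurableSpace X] [BorelSpace X]
    (μ : Measure X) [IsProbabilityMeasure μ]
    (T : X → X) (hTbij : Function.Bijective T) (hT : MeasurePreserving T μ μ)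
    (U : X → X) (hU : Ergodic U μ)
    (hcontr : ∀ᵐ x ∂μ,
      Tendsto (fun n => dist (T^[n] (U x)) (T^[n] x)) atTop (nhds 0)) :
    ∀ A B : Set X, MeasurableSet A → MeasurableSet B →
      Tendsto (fun N => μ (A ∩ (T^[N]) ⁻¹' B)) atTop (nhds (μ A * μ B)) := by
  intro A B hA hB
  have hmeasN : ∀ N : ℕ, MeasurableSet (A ∩ (T^[N]) ⁻¹' B) :=
    fun N => hA.inter ((hT.iterate N).measurable hB)
  -- basic boundedness / measurability helpers
  have hbint : ∀ f : X → ℝ, Measurable f → (∀ x, |f x| ≤ 1) → Integrable f μ := by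
    intro f hf hb
    exact (integrable_const (1:ℝ)).mono' hf.aestronglyMeasurable
      (Filter.Eventually.of_forall fun x => by simpa using hb x)
  have habs : ∀ f : X → ℝ, |∫ x, f x ∂μ| ≤ ∫ x, |f x| ∂μ := fun f => by
    simpa [Real.norm_eq_abs] using norm_integral_le_integral_norm (μ := μ) f
  have hgA : Measurable (A.indicator (1 : X → ℝ)) := measurable_const.indicator hA
  have hgA1 : ∀ x, |A.indicator (1 : X → ℝ) x| ≤ 1 := by
    intro x; by_cases h : x ∈ A <;> simp [Set.indicator_apply, h]
  have hgB : Measurable (B.indicator (1 : X → ℝ)) := measurable_const.indicator hB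
  have hgB1 : ∀ x, |B.indicator (1 : X → ℝ) x| ≤ 1 := by
    intro x; by_cases h : x ∈ B <;> simp [Set.indicator_apply, h]
  -- the measure as an integral
  have hμint : ∀ N : ℕ, (μ (A ∩ (T^[N]) ⁻¹' B)).toReal
      = ∫ x, A.indicator (1 : X → ℝ) x * B.indicator (1 : X → ℝ) (T^[N] x) ∂μ := by
    intro N
    rw [← measureReal_def, ← integral_indicator_one (hmeasN N)]
    apply integral_congr_ae
    refine Filter.Eventually.of_forall fun x => ?_
    by_cases hxA : x ∈ A <;> by_cases hxB : T^[N] x ∈ B <;>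
      simp [Set.indicator_apply, hxA, hxB, Set.mem_preimage]
  -- composition with T^[N] preserves integrals
  have hcompT : ∀ (N : ℕ) (f : X → ℝ), Measurable f →
      ∫ x, f (T^[N] x) ∂μ = ∫ x, f x ∂μ := by
    intro N f hf
    have hasm : AEStronglyMeasurable f (Measure.map (T^[N]) μ) := by
      rw [(hT.iterate N).map_eq]
      exact hf.aestronglyMeasurable
    rw [← integral_map (hT.iterate N).measurable.aemeasurable hasm, (hT.iterate N).map_eq]
  -- real-valued convergence
  have hreal : Tendsto (fun N => (μ (A ∩ (T^[N]) ⁻¹' B)).toReal) atTop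
      (nhds ((μ A).toReal * (μ B).toReal)) := by
    have heq : (fun N => (μ (A ∩ (T^[N]) ⁻¹' B)).toReal)
        = fun N => ∫ x, A.indicator (1 : X → ℝ) x * B.indicator (1 : X → ℝ) (T^[N] x) ∂μ :=
      funext hμint
    rw [heq, Metric.tendsto_atTop]
    intro ε hε
    obtain ⟨φ, ⟨Kφ, hφlip⟩, hφ01, hφL1⟩ := indicator_lipschitz_approx μ hB
      (show (0:ℝ) < ε/4 by linarith)
    have hφ1 : ∀ x, |φ x| ≤ 1 := fun x => abs_le.2 ⟨by linarith [(hφ01 x).1], (hφ01 x).2⟩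
    have hφmble : Measurable φ := hφlip.continuous.measurable
    have hmain := lipschitz_mixing μ T hT U hU hcontr φ hφlip hφ1 _ hgA hgA1
    obtain ⟨N₀, hN₀⟩ := Metric.tendsto_atTop.1 hmain (ε/4) (by linarith)
    refine ⟨N₀, fun N hN => ?_⟩
    set IA : ℝ := ∫ x, A.indicator (1 : X → ℝ) x ∂μ with hIAdef
    set Iφ : ℝ := ∫ x, φ x ∂μ with hIφdef
    -- |Iφ - μ B| ≤ ε/4
    have hψmble : Measurable (fun x => |φ x - B.indicator 1 x|) :=
      (hφmble.sub hgB).abs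
    have hψ1 : ∀ x, |(|φ x - B.indicator 1 x|)| ≤ 1 := by
      intro x
      rw [abs_abs]
      have h1 := hφ01 x
      by_cases h : x ∈ B <;> rw [abs_sub_le_iff] <;> constructor <;>
        simp [Set.indicator_apply, h] <;> linarith [h1.1, h1.2]
    have hψint : Integrable (fun x => |φ x - B.indicator 1 x|) μ := hbint _ hψmble hψ1
    have hIB : |Iφ - (μ B).toReal| ≤ ε/4 := by
      rw [← measureReal_def, ← integral_indicator_one hB, hIφdef,
        ← integral_sub (hbint φ hφmble hφ1) (hbint _ hgB hgB1)]
      calc |∫ x, (φ x - B.indicator 1 x) ∂μ| ≤ ∫ x, |φ x - B.indicator 1 x| ∂μ := habs _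
        _ ≤ ε/4 := hφL1
    -- term 1
    have hint1 : Integrable (fun x => A.indicator (1:X→ℝ) x
        * B.indicator (1:X→ℝ) (T^[N] x)) μ := by
      apply hbint _ (hgA.mul (hgB.comp (hT.iterate N).measurable))
      intro x
      rw [Pi.mul_apply, abs_mul]
      exact mul_le_one₀ (hgA1 x) (abs_nonneg _) (hgB1 _)
    have hint2 : Integrable (fun x => A.indicator (1:X→ℝ) x * φ (T^[N] x)) μ := by
      apply hbint _ (hgA.mul (hφmble.comp (hT.iterate N).measurable))
      intro x
      rw [Pi.mul_apply, abs_mul]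
      exact mul_le_one₀ (hgA1 x) (abs_nonneg _) (hφ1 _)
    have ht1 : |(∫ x, A.indicator (1:X→ℝ) x * B.indicator (1:X→ℝ) (T^[N] x) ∂μ)
        - ∫ x, A.indicator (1:X→ℝ) x * φ (T^[N] x) ∂μ| ≤ ε/4 := by
      rw [← integral_sub hint1 hint2]
      calc |∫ x, (A.indicator (1:X→ℝ) x * B.indicator (1:X→ℝ) (T^[N] x)
              - A.indicator (1:X→ℝ) x * φ (T^[N] x)) ∂μ|
          ≤ ∫ x, |A.indicator (1:X→ℝ) x * B.indicator (1:X→ℝ) (T^[N] x)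
              - A.indicator (1:X→ℝ) x * φ (T^[N] x)| ∂μ := habs _
        _ ≤ ∫ x, |φ (T^[N] x) - B.indicator (1:X→ℝ) (T^[N] x)| ∂μ := by
            apply integral_mono (hint1.sub hint2).abs
              (hbint _ (hψmble.comp (hT.iterate N).measurable)
                (fun x => hψ1 (T^[N] x)))
            intro x
            simp only [Pi.sub_apply]
            have hme : A.indicator (1:X→ℝ) x * B.indicator (1:X→ℝ) (T^[N] x)
                - A.indicator (1:X→ℝ) x * φ (T^[N] x)
                = A.indicator (1:X→ℝ) x * (B.indicator (1:X→ℝ) (T^[N] x) - φ (T^[N] x)) := by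
              ring
            simp only [hme, abs_mul, abs_sub_comm (B.indicator (1:X→ℝ) (T^[N] x))]
            calc |A.indicator (1:X→ℝ) x| * |φ (T^[N] x) - B.indicator (1:X→ℝ) (T^[N] x)|
                ≤ 1 * |φ (T^[N] x) - B.indicator (1:X→ℝ) (T^[N] x)| :=
                  mul_le_mul_of_nonneg_right (hgA1 x) (abs_nonneg _)
              _ = _ := one_mul _
        _ = ∫ x, |φ x - B.indicator (1:X→ℝ) x| ∂μ := hcompT N _ hψmble
        _ ≤ ε/4 := hφL1
    -- term 2
    have ht2 : |(∫ x, A.indicator (1:X→ℝ) x * φ (T^[N] x) ∂μ) - IA * Iφ| < ε/4 := by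
      have := hN₀ N hN
      rwa [Real.dist_eq] at this
    -- term 3
    have hIA1 : |IA| ≤ 1 := by
      rw [hIAdef, integral_indicator_one hA, measureReal_def, abs_of_nonneg ENNReal.toReal_nonneg]
      have h1 : μ A ≤ 1 := prob_le_one
      calc (μ A).toReal ≤ (1 : ℝ≥0∞).toReal := ENNReal.toReal_mono (by simp) h1
        _ = 1 := by simp
    have ht3 : |IA * Iφ - (μ A).toReal * (μ B).toReal| ≤ ε/4 := by
      have hIAeq : IA = (μ A).toReal := by rw [hIAdef, integral_indicator_one hA, measureReal_def]
      rw [hIAeq]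
      calc |(μ A).toReal * Iφ - (μ A).toReal * (μ B).toReal|
          = |(μ A).toReal| * |Iφ - (μ B).toReal| := by rw [← abs_mul]; congr 1; ring
        _ ≤ 1 * (ε/4) := by
            apply mul_le_mul _ hIB (abs_nonneg _) zero_le_one
            rwa [hIAeq] at hIA1
        _ = ε/4 := one_mul _
    rw [Real.dist_eq]
    have e1 := abs_sub_le (∫ x, A.indicator (1:X→ℝ) x * B.indicator (1:X→ℝ) (T^[N] x) ∂μ)
      (∫ x, A.indicator (1:X→ℝ) x * φ (T^[N] x) ∂μ) ((μ A).toReal * (μ B).toReal)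
    have e2 := abs_sub_le (∫ x, A.indicator (1:X→ℝ) x * φ (T^[N] x) ∂μ)
      (IA * Iφ) ((μ A).toReal * (μ B).toReal)
    linarith [ht1, ht2, ht3, e1, e2]
  -- back to ENNReal
  have h2 : Tendsto (fun N => ENNReal.ofReal ((μ (A ∩ (T^[N]) ⁻¹' B)).toReal)) atTop
      (nhds (ENNReal.ofReal ((μ A).toReal * (μ B).toReal))) :=
    (ENNReal.continuous_ofReal.tendsto _).comp hreal
  have h3 : (fun N => ENNReal.ofReal ((μ (A ∩ (T^[N]) ⁻¹' B)).toReal))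
      = fun N => μ (A ∩ (T^[N]) ⁻¹' B) :=
    funext fun N => ENNReal.ofReal_toReal (measure_ne_top μ _)
  have h4 : ENNReal.ofReal ((μ A).toReal * (μ B).toReal) = μ A * μ B := by
    rw [← ENNReal.toReal_mul, ENNReal.ofReal_toReal
      (ENNReal.mul_ne_top (measure_ne_top μ A) (measure_ne_top μ B))]
  rwa [h3, h4] at h2
end

section
/- Let (X, 𝓑, μ) be a probability space with T : X → X invertible, measure-preserving, and ergodic. Let C : X × ℤ → GL(m, ℝ) be a measurable, log-integrable cocycle over T with simple top Lyapunov exponent λ. Set σ(x, N) = log sup_{v≠0} ‖C(x,N)v‖/‖v‖ and σ(x,v,N) = log(‖C(x,N)v‖/‖v‖). Then for every x and every v such that (x,v) is future-Oseledets-generic, |σ(x,v,N) − σ(x,N)| = O_{x,v}(1) uniformly in N ∈ ℕ. -/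
open MeasureTheory Filter Set

/-- Logarithmic expansion rate `σ(x,v,N) = log (‖C(x,N)v‖ / ‖v‖)` of a linear cocycle. -/
noncomputable def cocycleSigma {X : Type*} {m : ℕ}
    (C : X → ℤ → (EuclideanSpace ℝ (Fin m) ≃L[ℝ] EuclideanSpace ℝ (Fin m)))
    (x : X) (v : EuclideanSpace ℝ (Fin m)) (N : ℤ) : ℝ :=
  Real.log (‖C x N v‖ / ‖v‖)

/-- Logarithm of the operator norm `σ(x,N) = log ‖C(x,N)‖`. -/
noncomputable def cocycleSigmaOp {X : Type*} {m : ℕ}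
    (C : X → ℤ → (EuclideanSpace ℝ (Fin m) ≃L[ℝ] EuclideanSpace ℝ (Fin m)))
    (x : X) (N : ℤ) : ℝ :=
  Real.log ‖(C x N : EuclideanSpace ℝ (Fin m) →L[ℝ] EuclideanSpace ℝ (Fin m))‖

/-- The pair `(x,v)` is future-Oseledets-generic for the top exponent `lam`. -/
def FutureOseledetsGeneric {X : Type*} {m : ℕ}
    (C : X → ℤ → (EuclideanSpace ℝ (Fin m) ≃L[ℝ] EuclideanSpace ℝ (Fin m)))
    (lam : ℝ) (x : X) (v : EuclideanSpace ℝ (Fin m)) : Prop :=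
  v ≠ 0 ∧ Tendsto (fun N : ℕ => cocycleSigma C x v (N : ℤ) / (N : ℝ)) atTop (nhds lam)

/-- The cocycle `C` has simple top Lyapunov exponent `lam` (Oseledets form). -/
def SimpleTopLyapunov {X : Type*} {m : ℕ} [MeasurableSpace X] (μ : Measure X)
    (C : X → ℤ → (EuclideanSpace ℝ (Fin m) ≃L[ℝ] EuclideanSpace ℝ (Fin m)))
    (lam : ℝ) : Prop :=
  ∃ lam' : ℝ, lam' < lam ∧ ∀ᵐ x ∂μ, ∃ u : EuclideanSpace ℝ (Fin m), u ≠ 0 ∧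
    Tendsto (fun N : ℕ => cocycleSigma C x u (N : ℤ) / (N : ℝ)) atTop (nhds lam) ∧
    ∃ F : Submodule ℝ (EuclideanSpace ℝ (Fin m)),
      IsCompl (Submodule.span ℝ {u}) F ∧
      ∀ v ∈ F, v ≠ 0 →
        Filter.limsup (fun N : ℕ => cocycleSigma C x v (N : ℤ) / (N : ℝ)) atTop ≤ lam'





section Hopf
set_option linter.unusedSectionVars false
variable {X : Type*} [MeasurableSpace X] {μ : Measure X} {S : X → X} {g : X → ℝ}

noncomputable def BSum (S : X → X) (g : X → ℝ) : ℕ → X → ℝ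
  | 0 => fun _ => 0
  | (n+1) => fun x => g x + BSum S g n (S x)

noncomputable def MBmax (S : X → X) (g : X → ℝ) : ℕ → X → ℝ
  | 0 => g
  | (n+1) => fun x => g x + max (MBmax S g n (S x)) 0

lemma BSum_le_MBmax : ∀ n x, BSum S g (n+1) x ≤ MBmax S g n x := by
  intro n
  induction n with
  | zero => intro x; simp [BSum, MBmax]
  | succ n ih =>
    intro x
    calc BSum S g (n+2) x = g x + BSum S g (n+1) (S x) := rfl
    _ ≤ g x + max (MBmax S g n (S x)) 0 :=
      add_le_add le_rfl (le_trans (ih (S x)) (le_max_left _ _))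
    _ = MBmax S g (n+1) x := rfl

lemma MBmax_mono : ∀ n x, MBmax S g n x ≤ MBmax S g (n+1) x := by
  intro n
  induction n with
  | zero => intro x; simp [MBmax, le_add_of_nonneg_right, le_max_right]
  | succ n ih =>
    intro x
    exact add_le_add le_rfl (max_le_max (ih (S x)) le_rfl)

lemma MBmax_key : ∀ n x, MBmax S g n x ≤ g x + max (MBmax S g n (S x)) 0 := by
  intro n x
  cases n with
  | zero => simp [MBmax, le_max_right]
  | succ n =>
    calc MBmax S g (n+1) x = g x + max (MBmax S g n (S x)) 0 := rfl
    _ ≤ g x + max (MBmax S g (n+1) (S x)) 0 :=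
      add_le_add le_rfl (max_le_max (MBmax_mono n (S x)) le_rfl)

lemma MBmax_meas (hS : Measurable S) (hg : Measurable g) : ∀ n, Measurable (MBmax S g n) := by
  intro n
  induction n with
  | zero => exact hg
  | succ n ih => exact hg.add ((ih.comp hS).max measurable_const)

lemma MBmax_int (hS : MeasurePreserving S μ μ) (hg : Measurable g) (hgi : Integrable g μ) :
    ∀ n, Integrable (MBmax S g n) μ := by
  intro n
  induction n with
  | zero => exact hgi
  | succ n ih =>
    refine hgi.add ?_
    have h1 : Integrable (fun x => MBmax S g n (S x)) μ :=
      (hS.integrable_comp ih.aestronglyMeasurable).mpr ih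
    simpa [max_comm] using h1.pos_part

/-- Hopf's maximal ergodic inequality. -/
lemma hopf_max (hS : MeasurePreserving S μ μ) (hg : Measurable g) (hgi : Integrable g μ)
    (n : ℕ) : 0 ≤ ∫ x, ({y | 0 < MBmax S g n y}).indicator g x ∂μ := by
  set A : Set X := {y | 0 < MBmax S g n y} with hA
  have hAm : MeasurableSet A := measurableSet_lt measurable_const (MBmax_meas hS.measurable hg n)
  have hMint : Integrable (MBmax S g n) μ := MBmax_int hS hg hgi n
  have hMp : Integrable (fun x => max (MBmax S g n x) 0) μ := by
    simpa [max_comm] using hMint.pos_part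
  have hMpS : Integrable (fun x => max (MBmax S g n (S x)) 0) μ := by
    have : Integrable (fun x => max (MBmax S g n x) 0) μ := hMp
    exact (hS.integrable_comp hMp.aestronglyMeasurable).mpr hMp
  -- pointwise: max M 0 - max (M∘S) 0 ≤ indicator A g
  have hpt : ∀ x, max (MBmax S g n x) 0 - max (MBmax S g n (S x)) 0 ≤ A.indicator g x := by
    intro x
    by_cases hx : x ∈ A
    · rw [Set.indicator_of_mem hx]
      have h1 : max (MBmax S g n x) 0 = MBmax S g n x := max_eq_left (le_of_lt hx)
      rw [h1]
      have := MBmax_key (S := S) (g := g) n x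
      linarith
    · rw [Set.indicator_of_notMem hx]
      have h1 : max (MBmax S g n x) 0 = 0 := max_eq_right (le_of_not_gt hx)
      rw [h1]
      have : (0:ℝ) ≤ max (MBmax S g n (S x)) 0 := le_max_right _ _
      linarith
  have hcomp : ∫ x, max (MBmax S g n (S x)) 0 ∂μ = ∫ x, max (MBmax S g n x) 0 ∂μ := by
    have := MeasureTheory.integral_map (f := fun x => max (MBmax S g n x) 0)
      hS.measurable.aemeasurable (by rw [hS.map_eq]; exact hMp.aestronglyMeasurable)
    rw [hS.map_eq] at this
    exact this.symm
  have hint : ∫ x, (max (MBmax S g n x) 0 - max (MBmax S g n (S x)) 0) ∂μ = 0 := by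
    rw [integral_sub hMp hMpS, hcomp, sub_self]
  calc (0:ℝ) = ∫ x, (max (MBmax S g n x) 0 - max (MBmax S g n (S x)) 0) ∂μ := hint.symm
  _ ≤ ∫ x, A.indicator g x ∂μ :=
    integral_mono (hMp.sub hMpS) (hgi.indicator hAm) hpt

end Hopf
section Hopf2
variable {X : Type*} [MeasurableSpace X] {μ : Measure X} {S : X → X} {g : X → ℝ}

/-- A.e. linear upper bound for Birkhoff sums of a nonnegative integrable function. -/
lemma hopf_bound [IsProbabilityMeasure μ] (hS : MeasurePreserving S μ μ)
    (hg : Measurable g) (hgi : Integrable g μ) (hg0 : ∀ x, 0 ≤ g x) :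
    ∀ᵐ x ∂μ, ∃ c : ℝ, 0 ≤ c ∧ ∀ n : ℕ, BSum S g n x ≤ c * n := by
  set I : ℝ := ∫ x, g x ∂μ with hI
  have hI0 : 0 ≤ I := integral_nonneg hg0
  -- for each t > 0, the maximal set has measure ≤ I/t
  have key : ∀ t : ℝ, 0 < t →
      μ {x | ∃ n : ℕ, 0 < MBmax S (fun y => g y - t) n x} ≤ ENNReal.ofReal (I / t) := by
    intro t ht
    set g' : X → ℝ := fun y => g y - t with hg'
    have hg'm : Measurable g' := hg.sub measurable_const
    have hg'i : Integrable g' μ := hgi.sub (integrable_const t)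
    set A : ℕ → Set X := fun n => {y | 0 < MBmax S g' n y} with hA
    have hAm : ∀ n, MeasurableSet (A n) := fun n =>
      measurableSet_lt measurable_const (MBmax_meas hS.measurable hg'm n)
    have hmono : Monotone A :=
      monotone_nat_of_le_succ (fun n x hx => lt_of_lt_of_le hx (MBmax_mono _ x))
    have hAn : ∀ n, μ (A n) ≤ ENNReal.ofReal (I / t) := by
      intro n
      have h0 := hopf_max hS hg'm hg'i n
      -- ∫ indicator A g' = ∫_{A n} g - t * μ(A n)
      have h1 : ∫ x, (A n).indicator g' x ∂μ = (∫ x in A n, g x ∂μ) - t * (μ (A n)).toReal := by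
        rw [MeasureTheory.integral_indicator (hAm n)]
        rw [integral_sub hgi.integrableOn (integrableOn_const (measure_ne_top μ _))]
        rw [setIntegral_const]
        simp [smul_eq_mul, mul_comm, Measure.real]
      have h2 : (∫ x in A n, g x ∂μ) ≤ I :=
        setIntegral_le_integral hgi (Filter.Eventually.of_forall hg0)
      have h3 : t * (μ (A n)).toReal ≤ I := by
        have := h0
        rw [h1] at this
        linarith
      have h4 : (μ (A n)).toReal ≤ I / t := by
        rw [le_div_iff₀ ht]; linarith [h3]
      exact (ENNReal.le_ofReal_iff_toReal_le (measure_ne_top μ _) (by positivity)).mpr h4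
    have hU : {x | ∃ n : ℕ, 0 < MBmax S g' n x} = ⋃ n, A n := by
      ext x; simp [hA]
    rw [hU, hmono.directed_le.measure_iUnion]
    exact iSup_le hAn
  -- intersection over t = k+1 is null
  set Bad : Set X := ⋂ k : ℕ, {x | ∃ n : ℕ, 0 < MBmax S (fun y => g y - (k+1)) n x} with hBad
  have hBad0 : μ Bad = 0 := by
    have hle : ∀ k : ℕ, μ Bad ≤ ENNReal.ofReal (I / (k+1)) := by
      intro k
      exact le_trans (measure_mono (Set.iInter_subset _ k)) (key (k+1) (by positivity))
    have htend : Tendsto (fun k : ℕ => ENNReal.ofReal (I / (k+1))) atTop (nhds 0) := by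
      have h1 : Tendsto (fun k : ℕ => I / ((k:ℝ)+1)) atTop (nhds 0) := by
        have h := (tendsto_const_div_atTop_nhds_zero_nat (C := I)).comp (tendsto_add_atTop_nat 1)
        simpa [Function.comp_def] using h
      simpa [ENNReal.ofReal_zero, Function.comp_def] using
        (ENNReal.continuous_ofReal.tendsto 0).comp h1
    have := ge_of_tendsto' htend hle
    simpa using this
  rw [← compl_compl Bad] at hBad0
  have hae : ∀ᵐ x ∂μ, x ∈ Badᶜ := by
    rw [MeasureTheory.ae_iff]
    simpa using hBad0
  filter_upwards [hae] with x hx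
  simp only [hBad, Set.compl_iInter, Set.mem_iUnion, Set.mem_compl_iff, Set.mem_setOf_eq,
    not_exists, not_lt] at hx
  obtain ⟨k, hk⟩ := hx
  refine ⟨(k:ℝ)+1, by positivity, ?_⟩
  intro n
  cases n with
  | zero => simp [BSum]
  | succ n =>
    have h1 : BSum S (fun y => g y - (k+1)) (n+1) x ≤ 0 :=
      le_trans (BSum_le_MBmax n x) (hk n)
    have h2 : ∀ m : ℕ, ∀ y, BSum S (fun z => g z - ((k:ℝ)+1)) m y = BSum S g m y - ((k:ℝ)+1) * m := by
      intro m
      induction m with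
      | zero => intro y; simp [BSum]
      | succ m ih =>
        intro y
        have : BSum S (fun z => g z - ((k:ℝ)+1)) (m+1) y
            = (g y - ((k:ℝ)+1)) + BSum S (fun z => g z - ((k:ℝ)+1)) m (S y) := rfl
        rw [this, ih (S y)]
        have : BSum S g (m+1) y = g y + BSum S g m (S y) := rfl
        rw [this]
        push_cast
        ring
    rw [h2 (n+1) x] at h1
    linarith

end Hopf2


section Aux
variable {X : Type*} {S : X → X} {g g' : X → ℝ}

lemma BSum_succ' : ∀ (n : ℕ) (x : X), BSum S g (n+1) x = BSum S g n x + g (S^[n] x) := by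
  intro n
  induction n with
  | zero => intro x; simp [BSum]
  | succ n ih =>
    intro x
    calc BSum S g (n+2) x = g x + BSum S g (n+1) (S x) := rfl
    _ = g x + (BSum S g n (S x) + g (S^[n] (S x))) := by rw [ih (S x)]
    _ = BSum S g (n+1) x + g (S^[n+1] x) := by
        rw [Function.iterate_succ_apply]; show _ = (g x + BSum S g n (S x)) + _; ring

lemma BSum_congr : ∀ (n : ℕ) (x : X), (∀ k : ℕ, g (S^[k] x) = g' (S^[k] x)) →
    BSum S g n x = BSum S g' n x := by
  intro n
  induction n with
  | zero => intro x _; rfl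
  | succ n ih =>
    intro x h
    show g x + BSum S g n (S x) = g' x + BSum S g' n (S x)
    rw [ih (S x) (fun k => by
      have := h (k+1); rwa [Function.iterate_succ_apply] at this)]
    have h0 := h 0
    simp only [Function.iterate_zero, id_eq] at h0
    rw [h0]

lemma cle_norm_pos {E : Type*} [NormedAddCommGroup E] [NormedSpace ℝ E] [Nontrivial E]
    (e : E ≃L[ℝ] E) : 0 < ‖(e : E →L[ℝ] E)‖ := by
  obtain ⟨w, hw⟩ := exists_ne (0 : E)
  have h1 : 0 < ‖e w‖ :=
    norm_pos_iff.mpr (fun h => hw (e.injective (h.trans (map_zero (e : E ≃L[ℝ] E)).symm)))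
  have h2 := (e : E →L[ℝ] E).le_opNorm w
  by_contra hc
  push_neg at hc
  have : ‖(e : E →L[ℝ] E) w‖ = ‖e w‖ := rfl
  nlinarith [norm_nonneg w]
end Aux


lemma fixed_tracking {E : Type*} [NormedAddCommGroup E] [NormedSpace ℝ E]
    [FiniteDimensional ℝ E]
    (A : ℕ → (E ≃L[ℝ] E)) (lam lam' : ℝ) (hll : lam' < lam)
    (c : ℝ) (hc : ∀ N : ℕ, Real.log ‖(A N : E →L[ℝ] E)‖ ≤ c * N)
    (F : Submodule ℝ E) (u : E) (hcod : Submodule.span ℝ {u} ⊔ F = ⊤)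
    (hF : ∀ f ∈ F, f ≠ 0 → limsup (fun N : ℕ => Real.log (‖A N f‖ / ‖f‖) / N) atTop ≤ lam')
    (v : E) (hv0 : v ≠ 0)
    (hvlim : Tendsto (fun N : ℕ => Real.log (‖A N v‖ / ‖v‖) / N) atTop (nhds lam)) :
    ∃ ε : ℝ, 0 < ε ∧ ∀ N : ℕ, ε * (‖(A N : E →L[ℝ] E)‖ * ‖v‖) ≤ ‖A N v‖ := by
  have posv : 0 < ‖v‖ := norm_pos_iff.mpr hv0
  have posAw : ∀ (N : ℕ) (w : E), w ≠ 0 → 0 < ‖A N w‖ := by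
    intro N w hw
    refine norm_pos_iff.mpr (fun h => hw ?_)
    have := (A N).injective (h.trans (map_zero (A N)).symm)
    exact this
  have posA : ∀ N : ℕ, 0 < ‖(A N : E →L[ℝ] E)‖ := by
    intro N
    have h1 := (A N : E →L[ℝ] E).le_opNorm v
    have h2 : 0 < ‖(A N : E →L[ℝ] E) v‖ := by simpa using posAw N v hv0
    nlinarith [norm_nonneg ((A N : E →L[ℝ] E))]
  -- growth of vectors in F relative to v
  have hgrow : ∀ f ∈ F, Tendsto (fun N : ℕ => ‖A N f‖ / ‖A N v‖) atTop (nhds 0) := by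
    intro f hf
    rcases eq_or_ne f 0 with rfl | hf0
    · simpa using tendsto_const_nhds
    have posf : 0 < ‖f‖ := norm_pos_iff.mpr hf0
    set d : ℝ := (lam - lam') / 3 with hd
    have hd0 : 0 < d := by simp only [hd]; linarith
    have hbdd : IsBoundedUnder (· ≤ ·) atTop
        (fun N : ℕ => Real.log (‖A N f‖ / ‖f‖) / N) := by
      refine isBoundedUnder_of ⟨max c 0, fun N => ?_⟩
      cases N with
      | zero => simp
      | succ N =>
        have hub : ‖A (N+1) f‖ / ‖f‖ ≤ ‖(A (N+1) : E →L[ℝ] E)‖ := by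
          rw [div_le_iff₀ posf]
          simpa using (A (N+1) : E →L[ℝ] E).le_opNorm f
        have hlog : Real.log (‖A (N+1) f‖ / ‖f‖) ≤ c * (N+1) :=
          le_trans (Real.log_le_log (div_pos (posAw (N+1) f hf0) posf) hub) (by exact_mod_cast hc (N+1))
        have hN : (0:ℝ) < ((N:ℝ)+1) := by positivity
        have : Real.log (‖A (N+1) f‖ / ‖f‖) / ((N:ℝ)+1) ≤ c := by
          rw [div_le_iff₀ hN]; nlinarith [hlog]
        calc Real.log (‖A (N+1) f‖ / ‖f‖) / ((N+1 : ℕ) : ℝ)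
            = Real.log (‖A (N+1) f‖ / ‖f‖) / ((N:ℝ)+1) := by push_cast; ring_nf
        _ ≤ c := this
        _ ≤ max c 0 := le_max_left _ _
    have ev1 : ∀ᶠ N : ℕ in atTop, Real.log (‖A N f‖ / ‖f‖) / N < lam' + d :=
      eventually_lt_of_limsup_lt (lt_of_le_of_lt (hF f hf hf0) (by linarith)) hbdd
    have ev2 : ∀ᶠ N : ℕ in atTop, lam' + 2*d < Real.log (‖A N v‖ / ‖v‖) / N :=
      hvlim.eventually (eventually_gt_nhds (by simp only [hd]; linarith))
    have evbound : ∀ᶠ N : ℕ in atTop,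
        ‖A N f‖ / ‖A N v‖ ≤ (‖f‖ / ‖v‖) * Real.exp (-d * N) := by
      filter_upwards [ev1, ev2, eventually_ge_atTop 1] with N h1 h2 hN1
      have hN : (0:ℝ) < N := by exact_mod_cast hN1
      have hσf : Real.log (‖A N f‖ / ‖f‖) ≤ (lam' + d) * N := by
        rw [div_lt_iff₀ hN] at h1; linarith
      have hσv : (lam' + 2*d) * N ≤ Real.log (‖A N v‖ / ‖v‖) := by
        rw [lt_div_iff₀ hN] at h2; linarith
      have hef : ‖A N f‖ = ‖f‖ * Real.exp (Real.log (‖A N f‖ / ‖f‖)) := by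
        rw [Real.exp_log (div_pos (posAw N f hf0) posf)]
        field_simp
      have hev : ‖A N v‖ = ‖v‖ * Real.exp (Real.log (‖A N v‖ / ‖v‖)) := by
        rw [Real.exp_log (div_pos (posAw N v hv0) posv)]
        field_simp
      rw [hef, hev]
      rw [div_le_iff₀ (mul_pos posv (Real.exp_pos _))]
      have hexp : Real.exp (Real.log (‖A N f‖ / ‖f‖))
          ≤ Real.exp (-d * N) * Real.exp (Real.log (‖A N v‖ / ‖v‖)) := by
        rw [← Real.exp_add]
        exact Real.exp_le_exp.mpr (by nlinarith)
      calc ‖f‖ * Real.exp (Real.log (‖A N f‖ / ‖f‖))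
          ≤ ‖f‖ * (Real.exp (-d * N) * Real.exp (Real.log (‖A N v‖ / ‖v‖))) :=
            mul_le_mul_of_nonneg_left hexp (norm_nonneg f)
      _ = ‖f‖ / ‖v‖ * Real.exp (-d * N) * (‖v‖ * Real.exp (Real.log (‖A N v‖ / ‖v‖))) := by
            field_simp
    have htend0 : Tendsto (fun N : ℕ => (‖f‖ / ‖v‖) * Real.exp (-d * N)) atTop (nhds 0) := by
      have h1 : Tendsto (fun N : ℕ => -d * N) atTop atBot := by
        apply Tendsto.const_mul_atTop_of_neg (by linarith : -d < 0)
        exact tendsto_natCast_atTop_atTop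
      have h2 : Tendsto (fun N : ℕ => Real.exp (-d * N)) atTop (nhds 0) :=
        Real.tendsto_exp_atBot.comp h1
      simpa using h2.const_mul (‖f‖ / ‖v‖)
    refine squeeze_zero' (Eventually.of_forall (fun N => by positivity)) evbound htend0
  -- v ∉ F, and span v ⊔ F = ⊤
  have hvF : v ∉ F := by
    intro h
    have h1 := hF v h hv0
    have h2 := hvlim.limsup_eq
    rw [h2] at h1
    linarith
  have hcodv : Submodule.span ℝ {v} ⊔ F = ⊤ := by
    have hvmem : v ∈ Submodule.span ℝ {u} ⊔ F := by rw [hcod]; trivial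
    obtain ⟨y, hy, fv, hfv, hsum⟩ := Submodule.mem_sup.mp hvmem
    obtain ⟨a, rfl⟩ := Submodule.mem_span_singleton.mp hy
    have ha : a ≠ 0 := by
      rintro rfl
      rw [zero_smul, zero_add] at hsum
      exact hvF (hsum ▸ hfv)
    have hu : u = a⁻¹ • (v - fv) := by
      rw [← hsum]; rw [smul_sub]  -- a⁻¹ • (a•u + fv - fv)
      simp [smul_smul, inv_mul_cancel₀ ha]
    have hule : Submodule.span ℝ {u} ≤ Submodule.span ℝ {v} ⊔ F := by
      rw [Submodule.span_le, Set.singleton_subset_iff]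
      rw [hu]
      refine Submodule.smul_mem _ _ (Submodule.sub_mem _ ?_ ?_)
      · exact Submodule.mem_sup_left (Submodule.mem_span_singleton_self v)
      · exact Submodule.mem_sup_right hfv
    rw [eq_top_iff, ← hcod]
    exact sup_le hule le_sup_right
  -- decompose a basis of E
  set n := Module.finrank ℝ E with hn
  set b : Module.Basis (Fin n) ℝ E := Module.finBasis ℝ E with hb
  have hdec : ∀ i, ∃ a : ℝ, ∃ f : E, f ∈ F ∧ b i = a • v + f := by
    intro i
    have : b i ∈ Submodule.span ℝ {v} ⊔ F := by rw [hcodv]; trivial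
    obtain ⟨y, hy, f, hf, hsum⟩ := Submodule.mem_sup.mp this
    obtain ⟨a, rfl⟩ := Submodule.mem_span_singleton.mp hy
    exact ⟨a, f, hf, hsum.symm⟩
  choose a f hfF hbif using hdec
  set φ : Fin n → (E →L[ℝ] ℝ) := fun i => LinearMap.toContinuousLinearMap (b.coord i) with hφ
  set D : ℝ := ∑ i, ‖φ i‖ * |a i| with hD
  have hD0 : 0 ≤ D := Finset.sum_nonneg (fun i _ => by positivity)
  -- eventually the sum of the F-parts is dominated
  have hRto : Tendsto (fun N : ℕ => ∑ i, ‖φ i‖ * (‖A N (f i)‖ / ‖A N v‖)) atTop (nhds 0) := by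
    have := tendsto_finset_sum (Finset.univ : Finset (Fin n))
      (fun i _ => (hgrow (f i) (hfF i)).const_mul (‖φ i‖))
    simpa using this
  have evR : ∀ᶠ N : ℕ in atTop, ∑ i, ‖φ i‖ * ‖A N (f i)‖ ≤ ‖A N v‖ := by
    filter_upwards [hRto.eventually (eventually_lt_nhds zero_lt_one)] with N hN
    have hpos := posAw N v hv0
    have : ∑ i, ‖φ i‖ * (‖A N (f i)‖ / ‖A N v‖) = (∑ i, ‖φ i‖ * ‖A N (f i)‖) / ‖A N v‖ := by
      rw [Finset.sum_div]
      exact Finset.sum_congr rfl (fun i _ => by ring)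
    rw [this, div_lt_one hpos] at hN
    exact hN.le
  have evOp : ∀ᶠ N : ℕ in atTop, ‖(A N : E →L[ℝ] E)‖ ≤ (D + 1) * ‖A N v‖ := by
    filter_upwards [evR] with N hN
    refine ContinuousLinearMap.opNorm_le_bound _ (by positivity) (fun w => ?_)
    have hw : (A N : E →L[ℝ] E) w = ∑ i, b.repr w i • (A N (b i)) := by
      conv_lhs => rw [← b.sum_repr w]
      rw [map_sum]
      exact Finset.sum_congr rfl (fun i _ => by simp)
    have hcoordbd : ∀ i, |b.repr w i| ≤ ‖φ i‖ * ‖w‖ := by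
      intro i
      have h1 := (φ i).le_opNorm w
      have h2 : φ i w = b.repr w i := by simp [hφ, Module.Basis.coord_apply]
      rwa [h2, Real.norm_eq_abs] at h1
    have hbi : ∀ i, ‖A N (b i)‖ ≤ |a i| * ‖A N v‖ + ‖A N (f i)‖ := by
      intro i
      have : A N (b i) = a i • (A N v) + A N (f i) := by
        rw [hbif i, map_add]; simp
      rw [this]
      calc ‖a i • (A N v) + A N (f i)‖ ≤ ‖a i • (A N v)‖ + ‖A N (f i)‖ := norm_add_le _ _
      _ = |a i| * ‖A N v‖ + ‖A N (f i)‖ := by rw [norm_smul, Real.norm_eq_abs]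
    calc ‖(A N : E →L[ℝ] E) w‖ = ‖∑ i, b.repr w i • (A N (b i))‖ := by rw [hw]
    _ ≤ ∑ i, ‖b.repr w i • (A N (b i))‖ := norm_sum_le _ _
    _ = ∑ i, |b.repr w i| * ‖A N (b i)‖ := by
        exact Finset.sum_congr rfl (fun i _ => by rw [norm_smul, Real.norm_eq_abs])
    _ ≤ ∑ i, (‖φ i‖ * ‖w‖) * (|a i| * ‖A N v‖ + ‖A N (f i)‖) := by
        refine Finset.sum_le_sum (fun i _ => ?_)
        exact mul_le_mul (hcoordbd i) (hbi i) (norm_nonneg _) (by positivity)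
    _ = (∑ i, ‖φ i‖ * |a i|) * ‖A N v‖ * ‖w‖ + (∑ i, ‖φ i‖ * ‖A N (f i)‖) * ‖w‖ := by
        rw [Finset.sum_mul, Finset.sum_mul, Finset.sum_mul, ← Finset.sum_add_distrib]
        exact Finset.sum_congr rfl (fun i _ => by ring)
    _ ≤ D * ‖A N v‖ * ‖w‖ + ‖A N v‖ * ‖w‖ := by
        refine add_le_add le_rfl ?_
        exact mul_le_mul_of_nonneg_right hN (norm_nonneg w)
    _ = (D + 1) * ‖A N v‖ * ‖w‖ := by ring
  -- conclude
  obtain ⟨N₀, hN₀⟩ := eventually_atTop.mp evOp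
  set ρ : ℕ → ℝ := fun N => ‖A N v‖ / (‖(A N : E →L[ℝ] E)‖ * ‖v‖) with hρ
  have hρpos : ∀ N, 0 < ρ N := fun N => div_pos (posAw N v hv0) (mul_pos (posA N) posv)
  have hne : (Finset.range (N₀ + 1)).Nonempty := by simp
  set ε : ℝ := min (((D + 1) * ‖v‖)⁻¹) ((Finset.range (N₀ + 1)).inf' hne ρ) with hε
  have hε0 : 0 < ε := by
    refine lt_min (by positivity) ?_
    exact (Finset.lt_inf'_iff hne).mpr (fun i _ => hρpos i)
  refine ⟨ε, hε0, fun N => ?_⟩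
  have key : ε ≤ ρ N := by
    rcases le_or_gt N₀ N with hN | hN
    · refine le_trans (min_le_left _ _) ?_
      have hop := hN₀ N hN
      have h1 : 0 < ‖A N v‖ := posAw N v hv0
      rw [hρ]
      rw [le_div_iff₀ (mul_pos (posA N) posv)]
      rw [inv_mul_le_iff₀ (by positivity)]
      calc ‖(A N : E →L[ℝ] E)‖ * ‖v‖ ≤ ((D+1) * ‖A N v‖) * ‖v‖ :=
            mul_le_mul_of_nonneg_right hop (norm_nonneg v)
      _ = (D+1) * ‖v‖ * ‖A N v‖ := by ring
    · refine le_trans (min_le_right _ _) ?_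
      exact Finset.inf'_le ρ (Finset.mem_range.mpr (by omega))
  rw [hρ, le_div_iff₀ (mul_pos (posA N) posv)] at key
  linarith [key]



/-- **Lemma (lemma:exp2).** Let `C` be a measurable, log-integrable cocycle over an
invertible, measure-preserving, ergodic transformation `T`, with simple top Lyapunov
exponent `lam`. Then (for a.e. `x`) for every `v` such that `(x,v)` is
future-Oseledets-generic, `|σ(x,v,N) − σ(x,N)| = O_{x,v}(1)` uniformly in `N ∈ ℕ`,
where `σ(x,N)` is the log of the operator norm. -/
theorem generic_vector_tracks_operator_norm
    {X : Type*} {m : ℕ} [MeasurableSpace X] (μ : Measure X) [IsProbabilityMeasure μ]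
    (T : X ≃ X) (hTm : Measurable (⇑T)) (hT : Ergodic (⇑T) μ)
    (C : X → ℤ → (EuclideanSpace ℝ (Fin m) ≃L[ℝ] EuclideanSpace ℝ (Fin m)))
    (hCmeas : ∀ N : ℤ, ∀ v, Measurable fun x => C x N v)
    (hCcocycle : ∀ᵐ x ∂μ, ∀ r s : ℤ, ∀ v, C x (r + s) v = C ((T ^ r) x) s (C x r v))
    (hlogint₁ : Integrable (fun x =>
      max 0 (Real.log ‖(C x 1 : EuclideanSpace ℝ (Fin m) →L[ℝ] EuclideanSpace ℝ (Fin m))‖)) μ)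
    (hlogint₂ : Integrable (fun x =>
      max 0 (Real.log ‖(C x (-1) : EuclideanSpace ℝ (Fin m) →L[ℝ] EuclideanSpace ℝ (Fin m))‖)) μ)
    (lam : ℝ) (hsimple : SimpleTopLyapunov μ C lam) :
    ∀ᵐ x ∂μ, ∀ v : EuclideanSpace ℝ (Fin m),
      FutureOseledetsGeneric C lam x v →
      ∃ c : ℝ, ∀ N : ℕ,
        |cocycleSigma C x v (N : ℤ) - cocycleSigmaOp C x (N : ℤ)| ≤ c := by
  obtain ⟨lam', hlam', hae⟩ := hsimple
  rcases subsingleton_or_nontrivial (EuclideanSpace ℝ (Fin m)) with hsub | hnt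
  · filter_upwards with x v hv
    exact absurd (Subsingleton.elim v 0) hv.1
  -- the nontrivial case
  haveI := hnt
  set E := EuclideanSpace ℝ (Fin m)
  set g : X → ℝ := fun x => max 0 (Real.log ‖(C x 1 : E →L[ℝ] E)‖) with hg
  have hgae : AEMeasurable g μ := hlogint₁.aemeasurable
  set g₁ : X → ℝ := fun x => max (hgae.mk g x) 0 with hg₁
  have hg₁m : Measurable g₁ := hgae.measurable_mk.max measurable_const
  have hg₁eq : g =ᵐ[μ] g₁ := by
    filter_upwards [hgae.ae_eq_mk] with x hx
    rw [hg₁]; simp only [← hx]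
    exact (max_eq_left (le_max_left 0 _)).symm
  have hg₁i : Integrable g₁ μ := hlogint₁.congr hg₁eq
  have hg₁0 : ∀ x, 0 ≤ g₁ x := fun x => le_max_right _ _
  have hhopf := hopf_bound hT.toMeasurePreserving hg₁m hg₁i hg₁0
  have horb : ∀ᵐ x ∂μ, ∀ k : ℕ, g₁ ((⇑T)^[k] x) = g ((⇑T)^[k] x) := by
    rw [MeasureTheory.ae_all_iff]
    intro k
    have hk : MeasurePreserving ((⇑T)^[k]) μ μ := hT.toMeasurePreserving.iterate k
    have h2 : g =ᵐ[μ.map ((⇑T)^[k])] g₁ := by rw [hk.map_eq]; exact hg₁eq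
    have h3 := MeasureTheory.ae_eq_comp hk.aemeasurable h2
    filter_upwards [h3] with x hx
    exact hx.symm
  filter_upwards [hCcocycle, hhopf, horb, hae] with x hcx hhx horbx hsx
  -- the cocycle identity at x gives the chain bound
  have hchain : ∀ N : ℕ, Real.log ‖(C x (N : ℤ) : E →L[ℝ] E)‖ ≤ BSum (⇑T) g N x := by
    intro N
    induction N with
    | zero =>
      have hid : ∀ w : E, C x 0 w = w := by
        intro w
        have h0 := hcx 0 0 w
        simp only [add_zero, zpow_zero, Equiv.Perm.coe_one, id_eq] at h0
        exact ((C x 0).injective h0).symm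
      have : (C x (0:ℤ) : E →L[ℝ] E) = ContinuousLinearMap.id ℝ E := by
        refine ContinuousLinearMap.ext fun w => ?_
        exact hid w
      rw [show ((0:ℕ):ℤ) = (0:ℤ) by simp, this, ContinuousLinearMap.norm_id, Real.log_one]
      simp [BSum]
    | succ N ih =>
      have hTN : (T ^ (N : ℤ)) x = (⇑T)^[N] x := by
        rw [zpow_natCast]
        rw [Equiv.Perm.coe_pow]
      have hcomp : (C x ((N:ℤ)+1) : E →L[ℝ] E)
          = (C ((⇑T)^[N] x) 1 : E →L[ℝ] E).comp (C x (N:ℤ) : E →L[ℝ] E) := by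
        refine ContinuousLinearMap.ext fun w => ?_
        have := hcx (N : ℤ) 1 w
        rw [hTN] at this
        simpa using this
      have hcast : ((N+1 : ℕ) : ℤ) = (N : ℤ) + 1 := by push_cast; ring
      rw [hcast, hcomp]
      have hnorm := ContinuousLinearMap.opNorm_comp_le
        (C ((⇑T)^[N] x) 1 : E →L[ℝ] E) (C x (N:ℤ) : E →L[ℝ] E)
      have hp1 : 0 < ‖(C ((⇑T)^[N] x) 1 : E →L[ℝ] E)‖ := cle_norm_pos _
      have hp2 : 0 < ‖(C x (N:ℤ) : E →L[ℝ] E)‖ := cle_norm_pos _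
      have hcpos : 0 < ‖(C ((⇑T)^[N] x) 1 : E →L[ℝ] E)‖ * ‖(C x (N:ℤ) : E →L[ℝ] E)‖ :=
        mul_pos hp1 hp2
      calc Real.log ‖((C ((⇑T)^[N] x) 1 : E →L[ℝ] E).comp (C x (N:ℤ) : E →L[ℝ] E))‖
          ≤ Real.log (‖(C ((⇑T)^[N] x) 1 : E →L[ℝ] E)‖ * ‖(C x (N:ℤ) : E →L[ℝ] E)‖) := by
            refine Real.log_le_log ?_ hnorm
            rw [← hcomp]
            exact cle_norm_pos _
      _ = Real.log ‖(C ((⇑T)^[N] x) 1 : E →L[ℝ] E)‖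
            + Real.log ‖(C x (N:ℤ) : E →L[ℝ] E)‖ := Real.log_mul (ne_of_gt hp1) (ne_of_gt hp2)
      _ ≤ g ((⇑T)^[N] x) + BSum (⇑T) g N x := by
          refine add_le_add ?_ ih
          exact le_max_right _ _
      _ = BSum (⇑T) g (N+1) x := by rw [BSum_succ' N x]; ring
  -- linear bound on log of the operator norm
  obtain ⟨c₀, hc₀0, hc₀⟩ := hhx
  have hlin : ∀ N : ℕ, Real.log ‖(C x (N : ℤ) : E →L[ℝ] E)‖ ≤ c₀ * N := by
    intro N
    refine le_trans (hchain N) ?_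
    rw [BSum_congr N x (fun k => (horbx k).symm)]
    exact hc₀ N
  -- get the generic direction data
  obtain ⟨u, hu0, huT, F, hcompl, hFprop⟩ := hsx
  intro v hv
  obtain ⟨hv0, hvlim⟩ := hv
  set A : ℕ → (E ≃L[ℝ] E) := fun N => C x (N : ℤ) with hA
  have hF' : ∀ f ∈ F, f ≠ 0 →
      limsup (fun N : ℕ => Real.log (‖A N f‖ / ‖f‖) / N) atTop ≤ lam' := by
    intro f hf hf0
    have := hFprop f hf hf0
    simpa [cocycleSigma, hA] using this
  have hvlim' : Tendsto (fun N : ℕ => Real.log (‖A N v‖ / ‖v‖) / N) atTop (nhds lam) := by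
    simpa [cocycleSigma, hA] using hvlim
  have hcod : Submodule.span ℝ {u} ⊔ F = ⊤ := codisjoint_iff.mp hcompl.codisjoint
  obtain ⟨ε, hε0, hεb⟩ := fixed_tracking A lam lam' hlam' c₀ (by simpa [hA] using hlin)
    F u hcod hF' v hv0 hvlim'
  -- produce the uniform constant
  refine ⟨-(Real.log (min ε 1)), fun N => ?_⟩
  have hApos : 0 < ‖A N v‖ := by
    refine norm_pos_iff.mpr (fun h => hv0 ((A N).injective (h.trans (map_zero (A N)).symm)))
  have hvpos : 0 < ‖v‖ := norm_pos_iff.mpr hv0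
  haveI : Nontrivial E := hnt
  have hop : 0 < ‖(A N : E →L[ℝ] E)‖ := cle_norm_pos _
  have hle : ‖A N v‖ ≤ ‖(A N : E →L[ℝ] E)‖ * ‖v‖ := (A N : E →L[ℝ] E).le_opNorm v
  have hratio1 : ‖A N v‖ / (‖(A N : E →L[ℝ] E)‖ * ‖v‖) ≤ 1 := by
    rw [div_le_one (by positivity)]; exact hle
  have hratio2 : min ε 1 ≤ ‖A N v‖ / (‖(A N : E →L[ℝ] E)‖ * ‖v‖) := by
    refine le_trans (min_le_left _ _) ?_
    rw [le_div_iff₀ (by positivity)]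
    exact hεb N
  have hmin0 : 0 < min ε 1 := lt_min hε0 one_pos
  have hdiff : cocycleSigma C x v (N : ℤ) - cocycleSigmaOp C x (N : ℤ)
      = Real.log (‖A N v‖ / (‖(A N : E →L[ℝ] E)‖ * ‖v‖)) := by
    rw [cocycleSigma, cocycleSigmaOp]
    rw [Real.log_div (ne_of_gt hApos) (ne_of_gt hvpos),
      Real.log_div (ne_of_gt hApos) (by positivity),
      Real.log_mul (ne_of_gt hop) (ne_of_gt hvpos)]
    ring
  rw [hdiff]
  have hub : Real.log (‖A N v‖ / (‖(A N : E →L[ℝ] E)‖ * ‖v‖)) ≤ 0 :=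
    Real.log_nonpos (by positivity) hratio1
  have hlb : Real.log (min ε 1) ≤ Real.log (‖A N v‖ / (‖(A N : E →L[ℝ] E)‖ * ‖v‖)) :=
    Real.log_le_log hmin0 hratio2
  have hmle : Real.log (min ε 1) ≤ 0 := Real.log_nonpos (le_of_lt hmin0) (min_le_right _ _)
  rw [abs_le]
  constructor <;> linarith
end

section
/- Let (X, 𝓑, μ) be a probability space, T : X → X invertible, measure-preserving, ergodic, and C : X × ℤ → GL(m,ℝ) a measurable cocycle over T satisfying a distributional limit theorem: S_N(x,v) = (σ(x,v,N) − A_N)/V_N on (X × ℙℝ^m, μ⊗ν) converges in distribution to S. Assume C has 𝒱-strong-simple-dominated-splitting: |σ(x,v,N) − σ(x,N)| = o_{x,v}(V_N) for μ-a.e. x and ν-a.e. v, where σ(x,N) = log‖C(x,N)‖_{op}. Then the operator-norm random variables S_N(x) = (σ(x,N) − A_N)/V_N on (X, μ) also converge in distribution to S: for every interval (a,b) with ℙ(S ∈ {a,b}) = 0, μ({x : S_N(x) ∈ (a,b)}) → ℙ(S ∈ (a,b)). -/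
open MeasureTheory Filter Set

noncomputable instance projMeasurableSpace {m : ℕ} :
    MeasurableSpace (Projectivization ℝ (EuclideanSpace ℝ (Fin m))) :=
  Quotient.instMeasurableSpace (α := { v : EuclideanSpace ℝ (Fin m) // v ≠ 0 })

open scoped ENNReal

section AuxiliaryLemmas

variable {m : ℕ}

/-- The continuous linear map on Euclidean space induced by a matrix. -/
noncomputable def auxMatCLM (B : Fin m → Fin m → ℝ) :
    EuclideanSpace ℝ (Fin m) →L[ℝ] EuclideanSpace ℝ (Fin m) :=
  LinearMap.toContinuousLinearMap
    { toFun := fun v => (WithLp.equiv 2 (Fin m → ℝ)).symm (fun i => ∑ j, B i j * v j)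
      map_add' := by
        intro v w
        apply (WithLp.equiv 2 (Fin m → ℝ)).injective
        ext i
        simp [mul_add, Finset.sum_add_distrib]
      map_smul' := by
        intro c v
        apply (WithLp.equiv 2 (Fin m → ℝ)).injective
        ext i
        simp only [WithLp.equiv_symm_apply, PiLp.toLp_apply, Equiv.apply_symm_apply, RingHom.id_apply,
          WithLp.equiv_apply, PiLp.smul_apply, smul_eq_mul, Finset.mul_sum]
        congr 1
        ext j
        ring }

lemma auxMatCLM_apply (B : Fin m → Fin m → ℝ) (v : EuclideanSpace ℝ (Fin m)) :
    auxMatCLM B v = (WithLp.equiv 2 (Fin m → ℝ)).symm (fun i => ∑ j, B i j * v j) := rfl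

/-- `auxMatCLM` as a linear map in the matrix. -/
noncomputable def auxMatCLMₗ (m : ℕ) :
    (Fin m → Fin m → ℝ) →ₗ[ℝ] (EuclideanSpace ℝ (Fin m) →L[ℝ] EuclideanSpace ℝ (Fin m)) where
  toFun := auxMatCLM
  map_add' := by
    intro B B'
    apply ContinuousLinearMap.ext
    intro v
    apply (WithLp.equiv 2 (Fin m → ℝ)).injective
    ext i
    simp [auxMatCLM_apply, add_mul, Finset.sum_add_distrib]
  map_smul' := by
    intro c B
    apply ContinuousLinearMap.ext
    intro v
    apply (WithLp.equiv 2 (Fin m → ℝ)).injective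
    ext i
    simp [auxMatCLM_apply, Finset.mul_sum]
    congr 1
    ext j
    ring

lemma auxMatCLM_continuous : Continuous (auxMatCLM (m := m)) :=
  (auxMatCLMₗ m).continuous_of_finiteDimensional

/-- Matrix entries of a continuous linear map on Euclidean space. -/
noncomputable def auxMatOf (T : EuclideanSpace ℝ (Fin m) →L[ℝ] EuclideanSpace ℝ (Fin m)) :
    Fin m → Fin m → ℝ :=
  fun i j => T (EuclideanSpace.single j (1 : ℝ)) i

lemma auxMatCLM_matOf (T : EuclideanSpace ℝ (Fin m) →L[ℝ] EuclideanSpace ℝ (Fin m)) :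
    auxMatCLM (auxMatOf T) = T := by
  apply ContinuousLinearMap.ext
  intro v
  have hv : v = ∑ j, v j • EuclideanSpace.single j (1 : ℝ) := by
    have := (EuclideanSpace.basisFun (Fin m) ℝ).sum_repr v
    simp only [EuclideanSpace.basisFun_repr, EuclideanSpace.basisFun_apply] at this
    exact this.symm
  apply (WithLp.equiv 2 (Fin m → ℝ)).injective
  ext i
  conv_rhs => rw [hv]
  rw [map_sum]
  simp only [auxMatCLM_apply, WithLp.equiv_symm_apply, PiLp.toLp_apply, Equiv.apply_symm_apply,
    WithLp.equiv_apply]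
  have happ : ∀ w : EuclideanSpace ℝ (Fin m), w i = EuclideanSpace.proj (𝕜 := ℝ) i w :=
    fun _ => rfl
  rw [happ (∑ x, T (v x • EuclideanSpace.single x 1)), map_sum]
  simp only [_root_.map_smul, smul_eq_mul, ← happ]
  exact Finset.sum_congr rfl fun j _ => mul_comm _ _

/-- A scaling-invariant function of the representative is measurable on projective space. -/
lemma auxMeasurableProjRep {β : Type*} [MeasurableSpace β]
    (g : EuclideanSpace ℝ (Fin m) → β)
    (hg : Measurable fun v : { v : EuclideanSpace ℝ (Fin m) // v ≠ 0 } => g v.1)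
    (hhom : ∀ (c : ℝˣ) (v : EuclideanSpace ℝ (Fin m)), g ((c : ℝ) • v) = g v) :
    Measurable fun p : Projectivization ℝ (EuclideanSpace ℝ (Fin m)) => g p.rep := by
  intro s hs
  have key : ∀ v : { v : EuclideanSpace ℝ (Fin m) // v ≠ 0 },
      g ((Projectivization.mk' ℝ v).rep) = g v.1 := by
    intro v
    obtain ⟨c, hc⟩ := Projectivization.exists_smul_eq_mk_rep ℝ v.1 v.2
    have hmk : Projectivization.mk ℝ v.1 v.2 = Projectivization.mk' ℝ v := rfl
    rw [← hmk, ← hc, Units.smul_def, hhom]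
  have hpre : ((Projectivization.mk' ℝ) ⁻¹'
      ((fun p : Projectivization ℝ (EuclideanSpace ℝ (Fin m)) => g p.rep) ⁻¹' s))
      = (fun v : { v : EuclideanSpace ℝ (Fin m) // v ≠ 0 } => g v.1) ⁻¹' s := by
    ext v
    simp only [Set.mem_preimage, key v]
  show MeasurableSet ((Projectivization.mk' ℝ) ⁻¹'
      ((fun p : Projectivization ℝ (EuclideanSpace ℝ (Fin m)) => g p.rep) ⁻¹' s))
  rw [hpre]
  exact hg hs

/-- A function on a product, continuous in the first (matrix) variable and measurable in the
second, is jointly measurable. -/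
lemma auxMeasurableUncurry {β : Type*} [MeasurableSpace β]
    (f : (Fin m → Fin m → ℝ) → β → ℝ)
    (hc : ∀ p, Continuous fun B => f B p) (hm : ∀ B, Measurable (f B)) :
    Measurable fun q : (Fin m → Fin m → ℝ) × β => f q.1 q.2 := by
  classical
  have hu : DenseRange (TopologicalSpace.denseSeq (Fin m → Fin m → ℝ)) :=
    TopologicalSpace.denseRange_denseSeq _
  have hex : ∀ (k : ℕ) (B : Fin m → Fin m → ℝ),
      ∃ i, dist B (TopologicalSpace.denseSeq (Fin m → Fin m → ℝ) i) < 1 / (k + 1) := by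
    intro k B
    obtain ⟨i, hi⟩ := Metric.denseRange_iff.1 hu B (1 / (k + 1)) (by positivity)
    exact ⟨i, hi⟩
  have hnmeas : ∀ k, Measurable (fun B => Nat.find (hex k B)) := by
    intro k
    apply measurable_find
    intro i
    exact measurableSet_lt (continuous_id.dist continuous_const).measurable measurable_const
  have hgk : ∀ k, Measurable fun q : (Fin m → Fin m → ℝ) × β =>
      f (TopologicalSpace.denseSeq (Fin m → Fin m → ℝ) (Nat.find (hex k q.1))) q.2 := by
    intro k
    have h1 : Measurable fun q : β × ℕ =>
        f (TopologicalSpace.denseSeq (Fin m → Fin m → ℝ) q.2) q.1 := by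
      refine measurable_from_prod_countable_left fun i => ?_
      simpa using hm (TopologicalSpace.denseSeq (Fin m → Fin m → ℝ) i)
    exact h1.comp (measurable_snd.prodMk ((hnmeas k).comp measurable_fst))
  apply measurable_of_tendsto_metrizable' atTop hgk
  rw [tendsto_pi_nhds]
  intro q
  have hdist : ∀ k : ℕ,
      dist (TopologicalSpace.denseSeq (Fin m → Fin m → ℝ) (Nat.find (hex k q.1))) q.1
        < 1 / (k + 1) := by
    intro k
    rw [dist_comm]
    exact Nat.find_spec (hex k q.1)
  have htends : Tendsto
      (fun k : ℕ => TopologicalSpace.denseSeq (Fin m → Fin m → ℝ) (Nat.find (hex k q.1)))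
      atTop (nhds q.1) := by
    rw [tendsto_iff_dist_tendsto_zero]
    apply squeeze_zero (fun k => dist_nonneg) (fun k => (hdist k).le)
    exact tendsto_one_div_add_atTop_nhds_zero_nat
  have := ((hc q.2).tendsto q.1).comp htends
  exact this

lemma auxMatEntMeasurable {X : Type*} [MeasurableSpace X]
    (C : X → (EuclideanSpace ℝ (Fin m) ≃L[ℝ] EuclideanSpace ℝ (Fin m)))
    (hC : ∀ v, Measurable fun x => C x v) :
    Measurable fun x =>
      auxMatOf (C x : EuclideanSpace ℝ (Fin m) →L[ℝ] EuclideanSpace ℝ (Fin m)) := by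
  apply measurable_pi_lambda
  intro i
  apply measurable_pi_lambda
  intro j
  have : Measurable fun x => C x (EuclideanSpace.single j (1:ℝ)) := hC _
  exact ((EuclideanSpace.proj (𝕜 := ℝ) i).continuous.measurable).comp this

lemma auxMeasurableSigmaOp {X : Type*} [MeasurableSpace X]
    (C : X → (EuclideanSpace ℝ (Fin m) ≃L[ℝ] EuclideanSpace ℝ (Fin m)))
    (hC : ∀ v, Measurable fun x => C x v) :
    Measurable fun x =>
      Real.log ‖(C x : EuclideanSpace ℝ (Fin m) →L[ℝ] EuclideanSpace ℝ (Fin m))‖ := by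
  have h1 : (fun x => ‖(C x : EuclideanSpace ℝ (Fin m) →L[ℝ] EuclideanSpace ℝ (Fin m))‖)
      = fun x => ‖auxMatCLM (auxMatOf
        (C x : EuclideanSpace ℝ (Fin m) →L[ℝ] EuclideanSpace ℝ (Fin m)))‖ := by
    funext x
    rw [auxMatCLM_matOf]
  apply Real.measurable_log.comp
  rw [h1]
  exact (continuous_norm.comp auxMatCLM_continuous).measurable.comp (auxMatEntMeasurable C hC)

noncomputable def auxK (B : Fin m → Fin m → ℝ) (v : EuclideanSpace ℝ (Fin m)) : ℝ :=
  ‖auxMatCLM B v‖ / ‖v‖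

lemma auxK_cont (v : EuclideanSpace ℝ (Fin m)) : Continuous fun B => auxK B v := by
  unfold auxK
  exact (((ContinuousLinearMap.apply ℝ (EuclideanSpace ℝ (Fin m))
      v).continuous.comp auxMatCLM_continuous).norm).div_const _

lemma auxK_measp (B : Fin m → Fin m → ℝ) :
    Measurable fun p : Projectivization ℝ (EuclideanSpace ℝ (Fin m)) => auxK B p.rep := by
  refine auxMeasurableProjRep (auxK B) ?_ ?_
  · exact ((auxMatCLM B).continuous.norm.measurable.comp measurable_subtype_coe).div
      (measurable_norm.comp measurable_subtype_coe)
  · intro c v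
    unfold auxK
    rw [_root_.map_smul, norm_smul, norm_smul, Real.norm_eq_abs,
      mul_div_mul_left _ _ (abs_ne_zero.mpr c.ne_zero)]

set_option maxHeartbeats 2000000 in
lemma auxK_meas_pair :
    Measurable fun q : (Fin m → Fin m → ℝ) × Projectivization ℝ (EuclideanSpace ℝ (Fin m)) =>
      auxK q.1 q.2.rep :=
  auxMeasurableUncurry (β := Projectivization ℝ (EuclideanSpace ℝ (Fin m)))
    (fun B p => auxK B p.rep) (fun p => auxK_cont p.rep) auxK_measp

lemma auxMeasurableSigmaPair {X : Type*} [MeasurableSpace X]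
    (C : X → (EuclideanSpace ℝ (Fin m) ≃L[ℝ] EuclideanSpace ℝ (Fin m)))
    (hC : ∀ v, Measurable fun x => C x v) :
    Measurable fun q : X × Projectivization ℝ (EuclideanSpace ℝ (Fin m)) =>
      Real.log (‖C q.1 q.2.rep‖ / ‖q.2.rep‖) := by
  have hmat := auxMatEntMeasurable C hC
  have hg : Measurable fun q : X × Projectivization ℝ (EuclideanSpace ℝ (Fin m)) =>
      ((auxMatOf (C q.1 : EuclideanSpace ℝ (Fin m) →L[ℝ] EuclideanSpace ℝ (Fin m)), q.2) :
        (Fin m → Fin m → ℝ) × Projectivization ℝ (EuclideanSpace ℝ (Fin m))) :=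
    (hmat.comp measurable_fst).prodMk measurable_snd
  have h2 : Measurable fun q : X × Projectivization ℝ (EuclideanSpace ℝ (Fin m)) =>
      auxK (auxMatOf (C q.1 : EuclideanSpace ℝ (Fin m) →L[ℝ] EuclideanSpace ℝ (Fin m))) q.2.rep :=
    Measurable.comp
      (g := fun r : (Fin m → Fin m → ℝ) × Projectivization ℝ (EuclideanSpace ℝ (Fin m)) =>
        auxK r.1 r.2.rep)
      (f := fun q : X × Projectivization ℝ (EuclideanSpace ℝ (Fin m)) =>
        (auxMatOf (C q.1 : EuclideanSpace ℝ (Fin m) →L[ℝ] EuclideanSpace ℝ (Fin m)), q.2))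
      auxK_meas_pair hg
  have heq : (fun q : X × Projectivization ℝ (EuclideanSpace ℝ (Fin m)) =>
      Real.log (‖C q.1 q.2.rep‖ / ‖q.2.rep‖))
      = fun q : X × Projectivization ℝ (EuclideanSpace ℝ (Fin m)) => Real.log
        (auxK (auxMatOf (C q.1 : EuclideanSpace ℝ (Fin m) →L[ℝ] EuclideanSpace ℝ (Fin m))) q.2.rep) := by
    funext q
    unfold auxK
    rw [auxMatCLM_matOf]
    rfl
  rw [heq]
  exact Real.measurable_log.comp h2

end AuxiliaryLemmas
/-- **Theorem (theo:cocycle_CCLT_norm).** Let `T` be an invertible, measure-preserving,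
ergodic transformation of a probability space `(X,μ)` and `C` a measurable cocycle over
`T` satisfying a distributional limit theorem on `(X × ℙℝᵐ, μ ⊗ ν)` with limiting law
`S`. Assume `C` has `𝒱`-strong-simple-dominated-splitting. Then the operator-norm
random variables `S_N(x) = (σ(x,N) − A_N)/V_N` converge in distribution to `S`. -/
theorem operator_norm_DLT_cocycle
    {X : Type*} {m : ℕ} [MeasurableSpace X] (μ : Measure X) [IsProbabilityMeasure μ]
    (T : X ≃ X) (hTm : Measurable (⇑T)) (hT : Ergodic (⇑T) μ)
    (C : X → ℤ → (EuclideanSpace ℝ (Fin m) ≃L[ℝ] EuclideanSpace ℝ (Fin m)))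
    (hCmeas : ∀ N : ℤ, ∀ v, Measurable fun x => C x N v)
    (hCcocycle : ∀ᵐ x ∂μ, ∀ r s : ℤ, ∀ v, C x (r + s) v = C ((T ^ r) x) s (C x r v))
    (ν : Measure (Projectivization ℝ (EuclideanSpace ℝ (Fin m))))
    [IsProbabilityMeasure ν]
    (A : ℕ → ℝ) (V : ℕ → ℝ) (hVpos : ∀ N, 0 < V N) (hV : Tendsto V atTop atTop)
    (S : Measure ℝ) [IsProbabilityMeasure S]
    (hDLT : ∀ a b : ℝ, S ({a, b} : Set ℝ) = 0 →
      Tendsto (fun N : ℕ =>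
          (μ.prod ν) {p | (cocycleSigma C p.1 p.2.rep (N : ℤ) - A N) / V N ∈ Ioo a b})
        atTop (nhds (S (Ioo a b))))
    (hstrong : ∀ᵐ x ∂μ, ∀ᵐ v ∂ν,
      Tendsto (fun N : ℕ =>
        |cocycleSigma C x v.rep (N : ℤ) - cocycleSigmaOp C x (N : ℤ)| / V N)
        atTop (nhds 0)) :
    ∀ a b : ℝ, S ({a, b} : Set ℝ) = 0 →
      Tendsto (fun N : ℕ => μ {x | (cocycleSigmaOp C x (N : ℤ) - A N) / V N ∈ Ioo a b})
        atTop (nhds (S (Ioo a b))) := by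
  classical
  intro a b hab
  have hL : S (Ioo a b) ≠ ∞ := measure_ne_top S _
  -- measurability of the basic random variables
  have hsig : ∀ N : ℤ, Measurable fun q :
      X × Projectivization ℝ (EuclideanSpace ℝ (Fin m)) =>
      cocycleSigma C q.1 q.2.rep N := by
    intro N
    have := auxMeasurableSigmaPair (X := X) (fun x => C x N) (hCmeas N)
    simpa only [cocycleSigma] using this
  have hop : ∀ N : ℤ, Measurable fun x : X => cocycleSigmaOp C x N := by
    intro N
    have := auxMeasurableSigmaOp (X := X) (fun x => C x N) (hCmeas N)
    simpa only [cocycleSigmaOp] using this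
  have hfm : ∀ N : ℕ, Measurable fun q :
      X × Projectivization ℝ (EuclideanSpace ℝ (Fin m)) =>
      (cocycleSigma C q.1 q.2.rep (N : ℤ) - A N) / V N :=
    fun N => ((hsig N).sub measurable_const).div_const _
  have hgm : ∀ N : ℕ, Measurable fun q :
      X × Projectivization ℝ (EuclideanSpace ℝ (Fin m)) =>
      (cocycleSigmaOp C q.1 (N : ℤ) - A N) / V N :=
    fun N => (((hop N).comp measurable_fst).sub measurable_const).div_const _
  have hdm : ∀ N : ℕ, Measurable fun q :
      X × Projectivization ℝ (EuclideanSpace ℝ (Fin m)) =>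
      (cocycleSigma C q.1 q.2.rep (N : ℤ) - A N) / V N
        - (cocycleSigmaOp C q.1 (N : ℤ) - A N) / V N :=
    fun N => (hfm N).sub (hgm N)
  -- rewrite the goal as a statement about the product measure
  have hset : (fun N : ℕ => μ {x | (cocycleSigmaOp C x (N : ℤ) - A N) / V N ∈ Ioo a b})
      = fun N : ℕ => (μ.prod ν) {q : X × Projectivization ℝ (EuclideanSpace ℝ (Fin m)) |
        (cocycleSigmaOp C q.1 (N : ℤ) - A N) / V N ∈ Ioo a b} := by
    funext N
    have heq : {q : X × Projectivization ℝ (EuclideanSpace ℝ (Fin m)) |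
        (cocycleSigmaOp C q.1 (N : ℤ) - A N) / V N ∈ Ioo a b}
        = {x | (cocycleSigmaOp C x (N : ℤ) - A N) / V N ∈ Ioo a b} ×ˢ
          (univ : Set (Projectivization ℝ (EuclideanSpace ℝ (Fin m)))) := by
      ext q
      simp [Set.mem_prod]
    rw [heq, Measure.prod_prod, measure_univ, mul_one]
  rw [hset]
  -- almost sure convergence of the difference on the product space
  have haeq : ∀ᵐ q ∂(μ.prod ν), Tendsto (fun N : ℕ =>
      (cocycleSigma C q.1 q.2.rep (N : ℤ) - A N) / V N
        - (cocycleSigmaOp C q.1 (N : ℤ) - A N) / V N) atTop (nhds 0) := by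
    refine (Measure.ae_prod_iff_ae_ae ?_).2 ?_
    · exact measurableSet_tendsto (f := fun (N : ℕ)
        (q : X × Projectivization ℝ (EuclideanSpace ℝ (Fin m))) =>
        (cocycleSigma C q.1 q.2.rep (N : ℤ) - A N) / V N
          - (cocycleSigmaOp C q.1 (N : ℤ) - A N) / V N) (nhds 0) hdm
    · refine hstrong.mono fun x hx => hx.mono fun v hv => ?_
      refine squeeze_zero_norm (fun N => ?_) hv
      have hpos := hVpos N
      rw [Real.norm_eq_abs, div_sub_div_same, sub_sub_sub_cancel_right, abs_div,
        abs_of_pos hpos]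
  -- convergence in measure of the difference
  have htim : TendstoInMeasure (μ.prod ν) (fun N : ℕ =>
      fun q : X × Projectivization ℝ (EuclideanSpace ℝ (Fin m)) =>
      (cocycleSigma C q.1 q.2.rep (N : ℤ) - A N) / V N
        - (cocycleSigmaOp C q.1 (N : ℤ) - A N) / V N) atTop (fun _ => (0 : ℝ)) :=
    tendstoInMeasure_of_tendsto_ae (fun N => (hdm N).aestronglyMeasurable) haeq
  -- countability of the set of atoms of S
  have hatoms : Set.Countable {t : ℝ | S {t} ≠ 0} := by
    have h := Measure.countable_meas_pos_of_disjoint_iUnion (μ := S)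
      (As := fun t : ℝ => {t}) (fun t => measurableSet_singleton t)
      (fun i j hij => by simp [Function.onFun, Set.disjoint_singleton, hij])
    have heq : {t : ℝ | S {t} ≠ 0} = {t : ℝ | 0 < S {t}} := by
      ext t
      simp [pos_iff_ne_zero]
    rwa [heq]
  have hbadcnt : Set.Countable (({e : ℝ | S {a - e} ≠ 0} ∪ {e : ℝ | S {a + e} ≠ 0}) ∪
      ({e : ℝ | S {b - e} ≠ 0} ∪ {e : ℝ | S {b + e} ≠ 0})) := by
    refine Set.Countable.union (Set.Countable.union ?_ ?_) (Set.Countable.union ?_ ?_)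
    · exact Set.Countable.preimage hatoms (f := fun e : ℝ => a - e) sub_right_injective
    · exact Set.Countable.preimage hatoms (f := fun e : ℝ => a + e) (add_right_injective a)
    · exact Set.Countable.preimage hatoms (f := fun e : ℝ => b - e) sub_right_injective
    · exact Set.Countable.preimage hatoms (f := fun e : ℝ => b + e) (add_right_injective b)
  -- S (Icc a b) = S (Ioo a b)
  have hIcc : S (Icc a b) = S (Ioo a b) := by
    apply le_antisymm
    · have hsub : Icc a b ⊆ Ioo a b ∪ {a, b} := by
        intro x hx
        simp only [Set.mem_union, Set.mem_Ioo, Set.mem_insert_iff, Set.mem_singleton_iff]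
        by_cases hxa : x = a
        · tauto
        by_cases hxb : x = b
        · tauto
        exact Or.inl ⟨lt_of_le_of_ne hx.1 (Ne.symm hxa), lt_of_le_of_ne hx.2 hxb⟩
      calc S (Icc a b) ≤ S (Ioo a b ∪ {a, b}) := measure_mono hsub
        _ ≤ S (Ioo a b) + S ({a, b} : Set ℝ) := measure_union_le _ _
        _ = S (Ioo a b) := by rw [hab, add_zero]
    · exact measure_mono Ioo_subset_Icc_self
  -- continuity of S along shrinking outer and growing inner intervals
  have houter : Tendsto (fun k : ℕ => S (Ioo (a - 1 / (k + 1)) (b + 1 / (k + 1)))) atTop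
      (nhds (S (Ioo a b))) := by
    have h1 : ⋂ k : ℕ, Ioo (a - 1 / ((k : ℝ) + 1)) (b + 1 / ((k : ℝ) + 1)) = Icc a b := by
      ext x
      simp only [Set.mem_iInter, Set.mem_Ioo, Set.mem_Icc]
      constructor
      · intro h
        constructor
        · by_contra hlt
          push_neg at hlt
          obtain ⟨k, hk⟩ := exists_nat_one_div_lt (sub_pos.2 hlt)
          have := (h k).1
          linarith
        · by_contra hlt
          push_neg at hlt
          obtain ⟨k, hk⟩ := exists_nat_one_div_lt (sub_pos.2 hlt)
          have := (h k).2
          linarith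
      · intro h k
        have hp : (0 : ℝ) < 1 / ((k : ℝ) + 1) := by positivity
        exact ⟨by linarith [h.1], by linarith [h.2]⟩
    have hanti : Antitone fun k : ℕ => Ioo (a - 1 / ((k : ℝ) + 1)) (b + 1 / ((k : ℝ) + 1)) := by
      intro k l hkl
      have hle : (1 : ℝ) / ((l : ℝ) + 1) ≤ 1 / ((k : ℝ) + 1) := by
        apply one_div_le_one_div_of_le (by positivity)
        have : (k : ℝ) ≤ (l : ℝ) := Nat.cast_le.2 hkl
        linarith
      exact Ioo_subset_Ioo (by linarith) (by linarith)
    have h2 := tendsto_measure_iInter_atTop (μ := S)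
      (fun k : ℕ => measurableSet_Ioo.nullMeasurableSet) hanti ⟨0, measure_ne_top S _⟩
    rw [h1, hIcc] at h2
    exact h2
  have hinner : Tendsto (fun k : ℕ => S (Ioo (a + 1 / (k + 1)) (b - 1 / (k + 1)))) atTop
      (nhds (S (Ioo a b))) := by
    have h1 : ⋃ k : ℕ, Ioo (a + 1 / ((k : ℝ) + 1)) (b - 1 / ((k : ℝ) + 1)) = Ioo a b := by
      ext x
      simp only [Set.mem_iUnion, Set.mem_Ioo]
      constructor
      · rintro ⟨k, hk⟩
        have hp : (0 : ℝ) < 1 / ((k : ℝ) + 1) := by positivity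
        exact ⟨by linarith [hk.1], by linarith [hk.2]⟩
      · intro h
        have hmin : (0 : ℝ) < min (x - a) (b - x) := by
          apply lt_min <;> linarith [h.1, h.2]
        obtain ⟨k, hk⟩ := exists_nat_one_div_lt hmin
        have h1 := lt_min_iff.1 hk
        exact ⟨k, by linarith [h1.1], by linarith [h1.2]⟩
    have hmono : Monotone fun k : ℕ => Ioo (a + 1 / ((k : ℝ) + 1)) (b - 1 / ((k : ℝ) + 1)) := by
      intro k l hkl
      have hle : (1 : ℝ) / ((l : ℝ) + 1) ≤ 1 / ((k : ℝ) + 1) := by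
        apply one_div_le_one_div_of_le (by positivity)
        have : (k : ℝ) ≤ (l : ℝ) := Nat.cast_le.2 hkl
        linarith
      exact Ioo_subset_Ioo (by linarith) (by linarith)
    have h2 := tendsto_measure_iUnion_atTop (μ := S) hmono
    rw [h1] at h2
    exact h2
  -- main ε–δ argument
  refine (ENNReal.tendsto_nhds hL).2 fun η hη => ?_
  set η' : ℝ≥0∞ := min (η / 3) 1 with hη'def
  have hη'0 : 0 < η' := lt_min (ENNReal.div_pos_iff.2 ⟨hη.ne', by norm_num⟩) zero_lt_one
  have hη'3 : 3 * η' ≤ η := by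
    calc 3 * η' ≤ 3 * (η / 3) := by
          gcongr
          exact min_le_left _ _
      _ ≤ η := ENNReal.mul_div_le
  -- choose k₀ such that outer/inner intervals have measure close to S (Ioo a b)
  have hev : ∀ᶠ k : ℕ in atTop,
      S (Ioo (a - 1 / (k + 1)) (b + 1 / (k + 1))) ≤ S (Ioo a b) + η'
      ∧ S (Ioo a b) - η' ≤ S (Ioo (a + 1 / (k + 1)) (b - 1 / (k + 1))) := by
    have h1 := (ENNReal.tendsto_nhds hL).1 houter η' hη'0
    have h2 := (ENNReal.tendsto_nhds hL).1 hinner η' hη'0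
    filter_upwards [h1, h2] with k hk1 hk2
    exact ⟨hk1.2, hk2.1⟩
  obtain ⟨k₀, hk₀⟩ := hev.exists
  -- choose a good ε avoiding atoms
  have hex_eps : ∃ ε : ℝ, 0 < ε ∧ ε < 1 / ((k₀ : ℝ) + 1) ∧
      S {a - ε} = 0 ∧ S {a + ε} = 0 ∧ S {b - ε} = 0 ∧ S {b + ε} = 0 := by
    by_contra hcon
    push_neg at hcon
    have hsub : Ioo (0 : ℝ) (1 / ((k₀ : ℝ) + 1)) ⊆
        (({e : ℝ | S {a - e} ≠ 0} ∪ {e : ℝ | S {a + e} ≠ 0}) ∪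
          ({e : ℝ | S {b - e} ≠ 0} ∪ {e : ℝ | S {b + e} ≠ 0})) := by
      intro e he
      have h := hcon e he.1 he.2
      simp only [Set.mem_union, Set.mem_setOf_eq]
      by_cases h1 : S {a - e} = 0
      · by_cases h2 : S {a + e} = 0
        · by_cases h3 : S {b - e} = 0
          · exact Or.inr (Or.inr (h h1 h2 h3))
          · exact Or.inr (Or.inl h3)
        · exact Or.inl (Or.inr h2)
      · exact Or.inl (Or.inl h1)
    have hvol0 : volume (Ioo (0 : ℝ) (1 / ((k₀ : ℝ) + 1))) = 0 :=
      le_antisymm (le_trans (measure_mono hsub) (le_of_eq (hbadcnt.measure_zero volume)))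
        zero_le
    rw [Real.volume_Ioo] at hvol0
    have : (0 : ℝ) < 1 / ((k₀ : ℝ) + 1) - 0 := by
      have : (0 : ℝ) < 1 / ((k₀ : ℝ) + 1) := by positivity
      linarith
    exact (ENNReal.ofReal_pos.2 this).ne' hvol0
  obtain ⟨ε, hε0, hεlt, hSa1, hSa2, hSb1, hSb2⟩ := hex_eps
  have hpair : ∀ x y : ℝ, S {x} = 0 → S {y} = 0 → S ({x, y} : Set ℝ) = 0 := by
    intro x y hx hy
    rw [Set.insert_eq]
    exact measure_union_null hx hy
  -- apply the DLT to the enlarged and shrunken intervals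
  have houter_le : S (Ioo (a - ε) (b + ε)) ≤ S (Ioo a b) + η' :=
    le_trans (measure_mono (Ioo_subset_Ioo (by linarith) (by linarith))) hk₀.1
  have hinner_ge : S (Ioo a b) - η' ≤ S (Ioo (a + ε) (b - ε)) :=
    le_trans hk₀.2 (measure_mono (Ioo_subset_Ioo (by linarith) (by linarith)))
  have hDLT1 := hDLT (a - ε) (b + ε) (hpair _ _ hSa1 hSb2)
  have hDLT2 := hDLT (a + ε) (b - ε) (hpair _ _ hSa2 hSb1)
  have hev1 : ∀ᶠ N : ℕ in atTop,
      (μ.prod ν) {p : X × Projectivization ℝ (EuclideanSpace ℝ (Fin m)) |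
        (cocycleSigma C p.1 p.2.rep (N : ℤ) - A N) / V N ∈ Ioo (a - ε) (b + ε)}
        ≤ S (Ioo a b) + 2 * η' := by
    have h := (ENNReal.tendsto_nhds (measure_ne_top S _)).1 hDLT1 η' hη'0
    filter_upwards [h] with N hN
    calc (μ.prod ν) _ ≤ S (Ioo (a - ε) (b + ε)) + η' := hN.2
      _ ≤ (S (Ioo a b) + η') + η' := add_le_add_left houter_le _
      _ = S (Ioo a b) + 2 * η' := by ring
  have hev2 : ∀ᶠ N : ℕ in atTop,
      S (Ioo a b) - 2 * η' ≤
      (μ.prod ν) {p : X × Projectivization ℝ (EuclideanSpace ℝ (Fin m)) |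
        (cocycleSigma C p.1 p.2.rep (N : ℤ) - A N) / V N ∈ Ioo (a + ε) (b - ε)} := by
    have h := (ENNReal.tendsto_nhds (measure_ne_top S _)).1 hDLT2 η' hη'0
    filter_upwards [h] with N hN
    calc S (Ioo a b) - 2 * η' = S (Ioo a b) - (η' + η') := by rw [two_mul]
      _ = (S (Ioo a b) - η') - η' := (tsub_tsub _ _ _).symm
      _ ≤ S (Ioo (a + ε) (b - ε)) - η' := tsub_le_tsub_right hinner_ge _
      _ ≤ (μ.prod ν) _ := hN.1
  have hev3 : ∀ᶠ N : ℕ in atTop,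
      (μ.prod ν) {q : X × Projectivization ℝ (EuclideanSpace ℝ (Fin m)) |
        ε ≤ |(cocycleSigma C q.1 q.2.rep (N : ℤ) - A N) / V N
          - (cocycleSigmaOp C q.1 (N : ℤ) - A N) / V N|} ≤ η' := by
    have h := tendstoInMeasure_iff_dist.1 htim ε hε0
    have hseteq : ∀ N : ℕ, {q : X × Projectivization ℝ (EuclideanSpace ℝ (Fin m)) |
        ε ≤ dist ((cocycleSigma C q.1 q.2.rep (N : ℤ) - A N) / V N
          - (cocycleSigmaOp C q.1 (N : ℤ) - A N) / V N) ((fun _ => (0:ℝ)) q)}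
        = {q : X × Projectivization ℝ (EuclideanSpace ℝ (Fin m)) |
        ε ≤ |(cocycleSigma C q.1 q.2.rep (N : ℤ) - A N) / V N
          - (cocycleSigmaOp C q.1 (N : ℤ) - A N) / V N|} := by
      intro N
      ext q
      simp [Real.dist_0_eq_abs]
    simp only [hseteq] at h
    have h' := (ENNReal.tendsto_nhds (by simp : (0 : ℝ≥0∞) ≠ ∞)).1 h η' hη'0
    filter_upwards [h'] with N hN
    have := hN.2
    rwa [zero_add] at this
  filter_upwards [hev1, hev2, hev3] with N h1 h2 h3
  constructor
  · -- lower bound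
    have hincl : {p : X × Projectivization ℝ (EuclideanSpace ℝ (Fin m)) |
        (cocycleSigma C p.1 p.2.rep (N : ℤ) - A N) / V N ∈ Ioo (a + ε) (b - ε)}
        ⊆ {q : X × Projectivization ℝ (EuclideanSpace ℝ (Fin m)) |
            (cocycleSigmaOp C q.1 (N : ℤ) - A N) / V N ∈ Ioo a b}
          ∪ {q : X × Projectivization ℝ (EuclideanSpace ℝ (Fin m)) |
            ε ≤ |(cocycleSigma C q.1 q.2.rep (N : ℤ) - A N) / V N
              - (cocycleSigmaOp C q.1 (N : ℤ) - A N) / V N|} := by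
      intro q hq
      by_cases hd : ε ≤ |(cocycleSigma C q.1 q.2.rep (N : ℤ) - A N) / V N
          - (cocycleSigmaOp C q.1 (N : ℤ) - A N) / V N|
      · exact Or.inr hd
      · left
        push_neg at hd
        rw [abs_lt] at hd
        simp only [Set.mem_setOf_eq, Set.mem_Ioo] at hq ⊢
        exact ⟨by linarith [hq.1, hd.2], by linarith [hq.2, hd.1]⟩
    have hle : (μ.prod ν) {p : X × Projectivization ℝ (EuclideanSpace ℝ (Fin m)) |
        (cocycleSigma C p.1 p.2.rep (N : ℤ) - A N) / V N ∈ Ioo (a + ε) (b - ε)}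
        ≤ (μ.prod ν) {q : X × Projectivization ℝ (EuclideanSpace ℝ (Fin m)) |
            (cocycleSigmaOp C q.1 (N : ℤ) - A N) / V N ∈ Ioo a b} + η' :=
      le_trans (measure_mono hincl) (le_trans (measure_union_le _ _) (add_le_add_right h3 _))
    have h5 : S (Ioo a b) - 2 * η' ≤ (μ.prod ν)
        {q : X × Projectivization ℝ (EuclideanSpace ℝ (Fin m)) |
          (cocycleSigmaOp C q.1 (N : ℤ) - A N) / V N ∈ Ioo a b} + η' := le_trans h2 hle
    have h6 : S (Ioo a b) - 2 * η' - η' ≤ (μ.prod ν)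
        {q : X × Projectivization ℝ (EuclideanSpace ℝ (Fin m)) |
          (cocycleSigmaOp C q.1 (N : ℤ) - A N) / V N ∈ Ioo a b} :=
      tsub_le_iff_right.2 h5
    calc S (Ioo a b) - η ≤ S (Ioo a b) - 3 * η' := tsub_le_tsub_left hη'3 _
      _ = S (Ioo a b) - 2 * η' - η' := by
          rw [tsub_tsub]
          congr 1
          ring
      _ ≤ _ := h6
  · -- upper bound
    have hincl : {q : X × Projectivization ℝ (EuclideanSpace ℝ (Fin m)) |
        (cocycleSigmaOp C q.1 (N : ℤ) - A N) / V N ∈ Ioo a b}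
        ⊆ {p : X × Projectivization ℝ (EuclideanSpace ℝ (Fin m)) |
            (cocycleSigma C p.1 p.2.rep (N : ℤ) - A N) / V N ∈ Ioo (a - ε) (b + ε)}
          ∪ {q : X × Projectivization ℝ (EuclideanSpace ℝ (Fin m)) |
            ε ≤ |(cocycleSigma C q.1 q.2.rep (N : ℤ) - A N) / V N
              - (cocycleSigmaOp C q.1 (N : ℤ) - A N) / V N|} := by
      intro q hq
      by_cases hd : ε ≤ |(cocycleSigma C q.1 q.2.rep (N : ℤ) - A N) / V N
          - (cocycleSigmaOp C q.1 (N : ℤ) - A N) / V N|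
      · exact Or.inr hd
      · left
        push_neg at hd
        rw [abs_lt] at hd
        simp only [Set.mem_setOf_eq, Set.mem_Ioo] at hq ⊢
        exact ⟨by linarith [hq.1, hd.1], by linarith [hq.2, hd.2]⟩
    calc (μ.prod ν) {q : X × Projectivization ℝ (EuclideanSpace ℝ (Fin m)) |
          (cocycleSigmaOp C q.1 (N : ℤ) - A N) / V N ∈ Ioo a b}
        ≤ (μ.prod ν) ({p : X × Projectivization ℝ (EuclideanSpace ℝ (Fin m)) |
            (cocycleSigma C p.1 p.2.rep (N : ℤ) - A N) / V N ∈ Ioo (a - ε) (b + ε)}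
          ∪ {q : X × Projectivization ℝ (EuclideanSpace ℝ (Fin m)) |
            ε ≤ |(cocycleSigma C q.1 q.2.rep (N : ℤ) - A N) / V N
              - (cocycleSigmaOp C q.1 (N : ℤ) - A N) / V N|}) := measure_mono hincl
      _ ≤ (μ.prod ν) {p : X × Projectivization ℝ (EuclideanSpace ℝ (Fin m)) |
            (cocycleSigma C p.1 p.2.rep (N : ℤ) - A N) / V N ∈ Ioo (a - ε) (b + ε)}
          + (μ.prod ν) {q : X × Projectivization ℝ (EuclideanSpace ℝ (Fin m)) |
            ε ≤ |(cocycleSigma C q.1 q.2.rep (N : ℤ) - A N) / V N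
              - (cocycleSigmaOp C q.1 (N : ℤ) - A N) / V N|} := measure_union_le _ _
      _ ≤ (S (Ioo a b) + 2 * η') + η' := add_le_add h1 h3
      _ = S (Ioo a b) + 3 * η' := by ring
      _ ≤ S (Ioo a b) + η := add_le_add_right hη'3 _
end

section
/- Let (X, 𝓑, μ) be a probability space, T : X → X invertible, measure-preserving, ergodic, and C : X × ℤ → GL(m,ℝ) a measurable, log-integrable cocycle over T with simple top Lyapunov exponent λ. Let s : X → ℝ^m be a measurable section such that (x, s(x)) is future-Oseledets-generic for μ-a.e. x. Then for every x and every w with (x, w) future-Oseledets-generic, |σ(x, s(x), N) − σ(x, w, N)| = O_x(1) uniformly in N ∈ ℕ; in particular s is a (C, 𝒱)-generic section for any diverging normalizing sequence 𝒱. -/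
open MeasureTheory Filter Set

private lemma cocycleSigma_eq {X : Type*} {m : ℕ}
    (C : X → ℤ → (EuclideanSpace ℝ (Fin m) ≃L[ℝ] EuclideanSpace ℝ (Fin m)))
    (x : X) {v : EuclideanSpace ℝ (Fin m)} (hv : v ≠ 0) (N : ℤ) :
    cocycleSigma C x v N = Real.log ‖C x N v‖ - Real.log ‖v‖ :=
  Real.log_div (norm_ne_zero_iff.mpr (fun h => hv ((C x N).map_eq_zero_iff.mp h)))
    (norm_ne_zero_iff.mpr hv)

private lemma exp_cocycleSigma {X : Type*} {m : ℕ}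
    (C : X → ℤ → (EuclideanSpace ℝ (Fin m) ≃L[ℝ] EuclideanSpace ℝ (Fin m)))
    (x : X) {v : EuclideanSpace ℝ (Fin m)} (hv : v ≠ 0) (N : ℤ) :
    Real.exp (cocycleSigma C x v N) = ‖C x N v‖ / ‖v‖ := by
  have h1 : 0 < ‖C x N v‖ :=
    norm_pos_iff.mpr (fun h => hv ((C x N).map_eq_zero_iff.mp h))
  have h2 : 0 < ‖v‖ := norm_pos_iff.mpr hv
  exact Real.exp_log (div_pos h1 h2)

private lemma ratio_tendsto_zero {X : Type*} {m : ℕ}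
    (C : X → ℤ → (EuclideanSpace ℝ (Fin m) ≃L[ℝ] EuclideanSpace ℝ (Fin m)))
    (x : X) {u f : EuclideanSpace ℝ (Fin m)} {lam lam' : ℝ} (hlt : lam' < lam)
    (hu0 : u ≠ 0)
    (hu : Tendsto (fun N : ℕ => cocycleSigma C x u (N : ℤ) / (N : ℝ)) atTop (nhds lam))
    (hbdd : f ≠ 0 → Filter.IsBoundedUnder (· ≤ ·) atTop
      (fun N : ℕ => cocycleSigma C x f (N : ℤ) / (N : ℝ)))
    (hls : f ≠ 0 → Filter.limsup (fun N : ℕ => cocycleSigma C x f (N : ℤ) / (N : ℝ)) atTop ≤ lam') :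
    Tendsto (fun N : ℕ => ‖C x (N : ℤ) f‖ / ‖C x (N : ℤ) u‖) atTop (nhds 0) := by
  rcases eq_or_ne f 0 with rfl | hf0
  · simpa using tendsto_const_nhds (α := ℕ) (f := atTop) (a := (0 : ℝ))
  · set ε : ℝ := (lam - lam') / 3 with hε
    have hεpos : 0 < ε := by rw [hε]; linarith
    have h1 : ∀ᶠ N : ℕ in atTop, cocycleSigma C x f (N : ℤ) / (N : ℝ) < lam' + ε :=
      Filter.eventually_lt_of_limsup_lt (lt_of_le_of_lt (hls hf0) (by linarith)) (hbdd hf0)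
    have h2 : ∀ᶠ N : ℕ in atTop, lam - ε < cocycleSigma C x u (N : ℤ) / (N : ℝ) :=
      hu.eventually (eventually_gt_nhds (by linarith))
    have hdiff : Tendsto
        (fun N : ℕ => cocycleSigma C x f (N : ℤ) - cocycleSigma C x u (N : ℤ)) atTop atBot := by
      have hbot : Tendsto (fun N : ℕ => -(ε * (N : ℝ))) atTop atBot :=
        tendsto_neg_atBot_iff.mpr
          (tendsto_natCast_atTop_atTop.const_mul_atTop hεpos)
      refine tendsto_atBot_mono' atTop ?_ hbot
      filter_upwards [h1, h2, eventually_ge_atTop 1] with N hN1 hN2 hN3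
      have hNpos : (0 : ℝ) < (N : ℝ) := by exact_mod_cast Nat.lt_of_lt_of_le Nat.zero_lt_one hN3
      have e1 : cocycleSigma C x f (N : ℤ) < (lam' + ε) * (N : ℝ) := (div_lt_iff₀ hNpos).mp hN1
      have e2 : (lam - ε) * (N : ℝ) < cocycleSigma C x u (N : ℤ) := (lt_div_iff₀ hNpos).mp hN2
      have hkey : (lam' + ε) * (N : ℝ) - (lam - ε) * (N : ℝ) = -(ε * (N : ℝ)) := by
        rw [hε]; ring
      linarith
    have hexp : Tendsto
        (fun N : ℕ => Real.exp (cocycleSigma C x f (N : ℤ) - cocycleSigma C x u (N : ℤ)))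
        atTop (nhds 0) := Real.tendsto_exp_atBot.comp hdiff
    have hmul := hexp.mul_const (‖f‖ / ‖u‖)
    rw [zero_mul] at hmul
    refine hmul.congr fun N => ?_
    rw [Real.exp_sub, exp_cocycleSigma C x hf0, exp_cocycleSigma C x hu0]
    have h1 : ‖f‖ ≠ 0 := norm_ne_zero_iff.mpr hf0
    have h2 : ‖u‖ ≠ 0 := norm_ne_zero_iff.mpr hu0
    have h3 : ‖C x (N : ℤ) u‖ ≠ 0 :=
      norm_ne_zero_iff.mpr (fun h => hu0 ((C x (N : ℤ)).map_eq_zero_iff.mp h))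
    field_simp

private lemma logdiff_tendsto {X : Type*} {m : ℕ}
    (C : X → ℤ → (EuclideanSpace ℝ (Fin m) ≃L[ℝ] EuclideanSpace ℝ (Fin m)))
    (x : X) {u w f : EuclideanSpace ℝ (Fin m)} {a : ℝ}
    (hu0 : u ≠ 0) (hw0 : w ≠ 0) (ha : a ≠ 0) (hw : w = a • u + f)
    (hkey : Tendsto (fun N : ℕ => ‖C x (N : ℤ) f‖ / ‖C x (N : ℤ) u‖) atTop (nhds 0)) :
    Tendsto (fun N : ℕ => Real.log ‖C x (N : ℤ) w‖ - Real.log ‖C x (N : ℤ) u‖)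
      atTop (nhds (Real.log |a|)) := by
  have ha' : 0 < |a| := abs_pos.mpr ha
  have hCu : ∀ N : ℕ, 0 < ‖C x (N : ℤ) u‖ :=
    fun N => norm_pos_iff.mpr (fun h => hu0 ((C x (N : ℤ)).map_eq_zero_iff.mp h))
  have hCw : ∀ N : ℕ, 0 < ‖C x (N : ℤ) w‖ :=
    fun N => norm_pos_iff.mpr (fun h => hw0 ((C x (N : ℤ)).map_eq_zero_iff.mp h))
  set r : ℕ → ℝ := fun N => ‖C x (N : ℤ) w‖ / (|a| * ‖C x (N : ℤ) u‖) with hr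
  have hb : ∀ N : ℕ, |r N - 1| ≤ (1 / |a|) * (‖C x (N : ℤ) f‖ / ‖C x (N : ℤ) u‖) := by
    intro N
    have hden : 0 < |a| * ‖C x (N : ℤ) u‖ := mul_pos ha' (hCu N)
    have hnum : |‖C x (N : ℤ) w‖ - |a| * ‖C x (N : ℤ) u‖| ≤ ‖C x (N : ℤ) f‖ := by
      have hCweq : C x (N : ℤ) w = a • (C x (N : ℤ) u) + C x (N : ℤ) f := by
        rw [hw, map_add, _root_.map_smul]
      have htri := abs_norm_sub_norm_le (a • (C x (N : ℤ) u) + C x (N : ℤ) f)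
        (a • (C x (N : ℤ) u))
      rw [add_sub_cancel_left, norm_smul, Real.norm_eq_abs] at htri
      rw [hCweq]
      exact htri
    have heq : r N - 1 = (‖C x (N : ℤ) w‖ - |a| * ‖C x (N : ℤ) u‖) / (|a| * ‖C x (N : ℤ) u‖) := by
      rw [hr]; field_simp; rw [sub_div, mul_div_cancel_right₀ _ (hCu N).ne']
    rw [heq, abs_div, abs_of_pos hden]
    calc |‖C x (N : ℤ) w‖ - |a| * ‖C x (N : ℤ) u‖| / (|a| * ‖C x (N : ℤ) u‖)
        ≤ ‖C x (N : ℤ) f‖ / (|a| * ‖C x (N : ℤ) u‖) := by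
          exact (div_le_div_iff_of_pos_right hden).mpr hnum
      _ = (1 / |a|) * (‖C x (N : ℤ) f‖ / ‖C x (N : ℤ) u‖) := by
          field_simp
  have hbound : Tendsto (fun N : ℕ => (1 / |a|) * (‖C x (N : ℤ) f‖ / ‖C x (N : ℤ) u‖))
      atTop (nhds 0) := by
    have := hkey.const_mul (1 / |a|)
    simpa using this
  have hr1 : Tendsto r atTop (nhds 1) := by
    have h0 : Tendsto (fun N : ℕ => r N - 1) atTop (nhds 0) :=
      squeeze_zero_norm (fun N => by rw [Real.norm_eq_abs]; exact hb N) hbound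
    have := h0.add_const 1
    simpa using this
  have hlog : Tendsto (fun N : ℕ => Real.log (r N)) atTop (nhds 0) := by
    have hcont : ContinuousAt Real.log 1 := Real.continuousAt_log one_ne_zero
    have := hcont.tendsto.comp hr1
    simpa [Function.comp_def] using this
  have hfin := hlog.add_const (Real.log |a|)
  rw [zero_add] at hfin
  refine hfin.congr fun N => ?_
  rw [hr]
  rw [Real.log_div (ne_of_gt (hCw N)) (ne_of_gt (mul_pos ha' (hCu N))),
    Real.log_mul (ne_of_gt ha') (ne_of_gt (hCu N))]
  ring

/-- **Lemma (lemma:exp3).** Let `C` be a measurable, log-integrable cocycle over an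
invertible, measure-preserving, ergodic transformation `T`, with simple top Lyapunov
exponent `lam`. Let `s : X → ℝᵐ` be a measurable section such that `(x, s(x))` is
future-Oseledets-generic for a.e. `x`. Then (for a.e. `x`) for every `w` with `(x,w)`
future-Oseledets-generic, `|σ(x,s(x),N) − σ(x,w,N)| = O_x(1)` uniformly in `N ∈ ℕ`;
in particular `s` is a `(C,𝒱)`-generic section for any diverging normalizing
sequence `𝒱`. -/
theorem generic_section_dominated
    {X : Type*} {m : ℕ} [MeasurableSpace X] (μ : Measure X) [IsProbabilityMeasure μ]
    (T : X ≃ X) (hTm : Measurable (⇑T)) (hT : Ergodic (⇑T) μ)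
    (C : X → ℤ → (EuclideanSpace ℝ (Fin m) ≃L[ℝ] EuclideanSpace ℝ (Fin m)))
    (hCmeas : ∀ N : ℤ, ∀ v, Measurable fun x => C x N v)
    (hCcocycle : ∀ᵐ x ∂μ, ∀ r s : ℤ, ∀ v, C x (r + s) v = C ((T ^ r) x) s (C x r v))
    (hlogint₁ : Integrable (fun x =>
      max 0 (Real.log ‖(C x 1 : EuclideanSpace ℝ (Fin m) →L[ℝ] EuclideanSpace ℝ (Fin m))‖)) μ)
    (hlogint₂ : Integrable (fun x =>
      max 0 (Real.log ‖(C x (-1) : EuclideanSpace ℝ (Fin m) →L[ℝ] EuclideanSpace ℝ (Fin m))‖)) μ)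
    (lam : ℝ) (hsimple : SimpleTopLyapunov μ C lam)
    (s : X → EuclideanSpace ℝ (Fin m)) (hsm : Measurable s)
    (hsgen : ∀ᵐ x ∂μ, FutureOseledetsGeneric C lam x (s x)) :
    (∀ᵐ x ∂μ, ∀ w : EuclideanSpace ℝ (Fin m),
        FutureOseledetsGeneric C lam x w →
        ∃ c : ℝ, ∀ N : ℕ,
          |cocycleSigma C x (s x) (N : ℤ) - cocycleSigma C x w (N : ℤ)| ≤ c) ∧
    (∀ V : ℕ → ℝ, (∀ N, 0 < V N) → Tendsto V atTop atTop →
      ∀ᵐ x ∂μ, ∀ w : EuclideanSpace ℝ (Fin m),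
        FutureOseledetsGeneric C lam x w →
        Tendsto
          (fun N : ℕ =>
            |cocycleSigma C x (s x) (N : ℤ) - cocycleSigma C x w (N : ℤ)| / V N)
          atTop (nhds 0)) := by
  obtain ⟨lam', hlt, hae⟩ := hsimple
  have main : ∀ᵐ x ∂μ, ∀ w : EuclideanSpace ℝ (Fin m),
      FutureOseledetsGeneric C lam x w →
      ∃ c : ℝ, ∀ N : ℕ,
        |cocycleSigma C x (s x) (N : ℤ) - cocycleSigma C x w (N : ℤ)| ≤ c := by
    filter_upwards [hae, hsgen] with x hx hsx
    obtain ⟨u, hu0, hu, F, hcompl, hF⟩ := hx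
    have decomp : ∀ v : EuclideanSpace ℝ (Fin m), FutureOseledetsGeneric C lam x v →
        ∃ L : ℝ, Tendsto (fun N : ℕ => Real.log ‖C x (N : ℤ) v‖ - Real.log ‖C x (N : ℤ) u‖)
          atTop (nhds L) := by
      intro v hv
      obtain ⟨hv0, hvt⟩ := hv
      have hvmem : v ∈ Submodule.span ℝ {u} ⊔ F := by
        rw [hcompl.sup_eq_top]; trivial
      obtain ⟨p, hp, f, hfF, hpf⟩ := Submodule.mem_sup.mp hvmem
      obtain ⟨a, rfl⟩ := Submodule.mem_span_singleton.mp hp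
      have ha : a ≠ 0 := by
        rintro rfl
        rw [zero_smul, zero_add] at hpf
        subst hpf
        have hlim := hF f hfF hv0
        have heq : Filter.limsup (fun N : ℕ => cocycleSigma C x f (N : ℤ) / (N : ℝ)) atTop
            = lam := hvt.limsup_eq
        rw [heq] at hlim
        linarith
      have hbdd : f ≠ 0 → Filter.IsBoundedUnder (· ≤ ·) atTop
          (fun N : ℕ => cocycleSigma C x f (N : ℤ) / (N : ℝ)) := by
        intro hf0
        have hvpos : 0 < ‖v‖ := norm_pos_iff.mpr hv0
        have hupos : 0 < ‖u‖ := norm_pos_iff.mpr hu0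
        set K : ℝ := ‖v‖ + |a| * ‖u‖ with hK
        have hKpos : 0 < K := by positivity
        set d : ℝ := Real.log K - Real.log ‖f‖ with hd
        refine ⟨lam + 1 + |d|, ?_⟩
        have h1 : ∀ᶠ N : ℕ in atTop, cocycleSigma C x v (N : ℤ) / (N : ℝ) < lam + 1 :=
          hvt.eventually (eventually_lt_nhds (by linarith))
        have h2 : ∀ᶠ N : ℕ in atTop, cocycleSigma C x u (N : ℤ) / (N : ℝ) < lam + 1 :=
          hu.eventually (eventually_lt_nhds (by linarith))
        rw [Filter.eventually_map]
        filter_upwards [h1, h2, eventually_ge_atTop 1] with N hN1 hN2 hN3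
        have hNpos : (0 : ℝ) < (N : ℝ) := by
          exact_mod_cast Nat.lt_of_lt_of_le Nat.zero_lt_one hN3
        have hN1' : (1 : ℝ) ≤ (N : ℝ) := by exact_mod_cast hN3
        have hCvn : 0 < ‖C x (N : ℤ) v‖ :=
          norm_pos_iff.mpr (fun h => hv0 ((C x (N : ℤ)).map_eq_zero_iff.mp h))
        have hCun : 0 < ‖C x (N : ℤ) u‖ :=
          norm_pos_iff.mpr (fun h => hu0 ((C x (N : ℤ)).map_eq_zero_iff.mp h))
        have hCfn : 0 < ‖C x (N : ℤ) f‖ :=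
          norm_pos_iff.mpr (fun h => hf0 ((C x (N : ℤ)).map_eq_zero_iff.mp h))
        have hv' : ‖C x (N : ℤ) v‖ ≤ Real.exp ((lam + 1) * (N : ℝ)) * ‖v‖ := by
          have hσ : cocycleSigma C x v (N : ℤ) ≤ (lam + 1) * (N : ℝ) :=
            le_of_lt ((div_lt_iff₀ hNpos).mp hN1)
          have := Real.exp_le_exp.mpr hσ
          rw [exp_cocycleSigma C x hv0] at this
          exact (div_le_iff₀ hvpos).mp this
        have hu' : ‖C x (N : ℤ) u‖ ≤ Real.exp ((lam + 1) * (N : ℝ)) * ‖u‖ := by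
          have hσ : cocycleSigma C x u (N : ℤ) ≤ (lam + 1) * (N : ℝ) :=
            le_of_lt ((div_lt_iff₀ hNpos).mp hN2)
          have := Real.exp_le_exp.mpr hσ
          rw [exp_cocycleSigma C x hu0] at this
          exact (div_le_iff₀ hupos).mp this
        have hf' : ‖C x (N : ℤ) f‖ ≤ Real.exp ((lam + 1) * (N : ℝ)) * K := by
          have hCfeq : C x (N : ℤ) f = C x (N : ℤ) v - a • (C x (N : ℤ) u) := by
            rw [← hpf, map_add, _root_.map_smul]; abel
          calc ‖C x (N : ℤ) f‖ = ‖C x (N : ℤ) v - a • (C x (N : ℤ) u)‖ := by rw [hCfeq]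
            _ ≤ ‖C x (N : ℤ) v‖ + ‖a • (C x (N : ℤ) u)‖ := norm_sub_le _ _
            _ = ‖C x (N : ℤ) v‖ + |a| * ‖C x (N : ℤ) u‖ := by
                rw [norm_smul, Real.norm_eq_abs]
            _ ≤ Real.exp ((lam + 1) * (N : ℝ)) * ‖v‖
                + |a| * (Real.exp ((lam + 1) * (N : ℝ)) * ‖u‖) := by
                have := mul_le_mul_of_nonneg_left hu' (abs_nonneg a)
                linarith
            _ = Real.exp ((lam + 1) * (N : ℝ)) * K := by rw [hK]; ring
        have hσf : cocycleSigma C x f (N : ℤ) ≤ (lam + 1) * (N : ℝ) + d := by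
          rw [cocycleSigma_eq C x hf0, hd]
          have hlog : Real.log ‖C x (N : ℤ) f‖
              ≤ Real.log (Real.exp ((lam + 1) * (N : ℝ)) * K) :=
            Real.log_le_log hCfn hf'
          rw [Real.log_mul (Real.exp_ne_zero _) (ne_of_gt hKpos), Real.log_exp] at hlog
          linarith
        rw [div_le_iff₀ hNpos]
        have habs : d ≤ |d| := le_abs_self d
        have hnn : 0 ≤ |d| := abs_nonneg d
        nlinarith
      exact ⟨Real.log |a|, logdiff_tendsto C x (f := f) hu0 hv0 ha (by rw [← hpf])
        (ratio_tendsto_zero C x hlt hu0 hu hbdd (fun hf0 => hF f hfF hf0))⟩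
    intro w hw
    obtain ⟨Ls, hLs⟩ := decomp (s x) hsx
    obtain ⟨Lw, hLw⟩ := decomp w hw
    have hσeq : ∀ N : ℕ, cocycleSigma C x (s x) (N : ℤ) - cocycleSigma C x w (N : ℤ)
        = ((Real.log ‖C x (N : ℤ) (s x)‖ - Real.log ‖C x (N : ℤ) u‖)
          - (Real.log ‖C x (N : ℤ) w‖ - Real.log ‖C x (N : ℤ) u‖))
          - Real.log ‖s x‖ + Real.log ‖w‖ := by
      intro N
      rw [cocycleSigma_eq C x hsx.1, cocycleSigma_eq C x hw.1]
      ring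
    have hconv : Tendsto
        (fun N : ℕ => cocycleSigma C x (s x) (N : ℤ) - cocycleSigma C x w (N : ℤ))
        atTop (nhds ((Ls - Lw) - Real.log ‖s x‖ + Real.log ‖w‖)) := by
      have := ((hLs.sub hLw).sub_const (Real.log ‖s x‖)).add_const (Real.log ‖w‖)
      exact this.congr fun N => (hσeq N).symm
    have habs := hconv.abs
    obtain ⟨c, hc⟩ := habs.bddAbove_range
    exact ⟨c, fun N => hc (mem_range_self N)⟩
  refine ⟨main, fun V hVpos hVtop => ?_⟩
  filter_upwards [main] with x hx
  intro w hw
  obtain ⟨c, hc⟩ := hx w hw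
  have h0 : ∀ N : ℕ, 0 ≤ |cocycleSigma C x (s x) (N : ℤ) - cocycleSigma C x w (N : ℤ)| / V N :=
    fun N => div_nonneg (abs_nonneg _) (hVpos N).le
  have hub : ∀ N : ℕ,
      |cocycleSigma C x (s x) (N : ℤ) - cocycleSigma C x w (N : ℤ)| / V N ≤ c / V N :=
    fun N => (div_le_div_iff_of_pos_right (hVpos N)).mpr (hc N)
  have hto : Tendsto (fun N : ℕ => c / V N) atTop (nhds 0) :=
    Tendsto.div_atTop tendsto_const_nhds hVtop
  exact squeeze_zero h0 hub hto
end

section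
/- Let (X, 𝓑, μ) be a probability space, T : X → X invertible, measure-preserving, ergodic, and C : X × ℤ → GL(m,ℝ) a measurable cocycle over T satisfying a mixing distributional limit theorem on (X × ℙℝ^m, μ⊗ν) with normalizing sequence 𝒱 and limiting distribution S: for S_N(x,v) = (σ(x,v,N) − A_N)/V_N, for all A, B ∈ 𝓑 and all intervals (a,b) with ℙ(S ∈ {a,b}) = 0, (μ⊗ν)({(x,v) : x ∈ A, S_N(x,v) ∈ (a,b), T^N x ∈ B}) → μ(A)·ℙ(S ∈ (a,b))·μ(B). Assume C has 𝒱-strong-simple-dominated-splitting. Then the same mixing limit theorem holds for the operator norm: for S_N(x) = (σ(x,N) − A_N)/V_N, μ({x ∈ A : S_N(x) ∈ (a,b), T^N x ∈ B}) → μ(A)·ℙ(S ∈ (a,b))·μ(B). -/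
open MeasureTheory Filter Set

section AuxLemmas

variable {X : Type*} [MeasurableSpace X] {m : ℕ}

lemma measurable_cle_apply (D : X → (EuclideanSpace ℝ (Fin m) ≃L[ℝ] EuclideanSpace ℝ (Fin m)))
    (hD : ∀ v, Measurable fun x => D x v) :
    Measurable fun p : X × EuclideanSpace ℝ (Fin m) => D p.1 p.2 := by
  classical
  have key : ∀ p : X × EuclideanSpace ℝ (Fin m),
      D p.1 p.2 = ∑ i, p.2 i • D p.1 (PiLp.basisFun 2 ℝ (Fin m) i) := by
    intro p
    conv_lhs => rw [← (PiLp.basisFun 2 ℝ (Fin m)).sum_repr p.2]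
    rw [map_sum]
    refine Finset.sum_congr rfl fun i _ => ?_
    rw [_root_.map_smul, PiLp.basisFun_repr]
  simp only [key]
  refine Finset.measurable_sum _ fun i _ => Measurable.smul (f := fun p : X × EuclideanSpace ℝ (Fin m) => p.2 i)
    (g := fun p : X × EuclideanSpace ℝ (Fin m) => D p.1 (PiLp.basisFun 2 ℝ (Fin m) i)) ?_ ((hD _).comp measurable_fst)
  exact ((EuclideanSpace.proj (𝕜 := ℝ) i).continuous.measurable).comp measurable_snd

lemma measurable_cle_opNorm (D : X → (EuclideanSpace ℝ (Fin m) ≃L[ℝ] EuclideanSpace ℝ (Fin m)))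
    (hD : ∀ v, Measurable fun x => D x v) :
    Measurable fun x =>
      ‖(D x : EuclideanSpace ℝ (Fin m) →L[ℝ] EuclideanSpace ℝ (Fin m))‖ := by
  classical
  set b := PiLp.basisFun 2 ℝ (Fin m) with hb
  let ψ : (Fin m → EuclideanSpace ℝ (Fin m)) →ₗ[ℝ]
      (EuclideanSpace ℝ (Fin m) →L[ℝ] EuclideanSpace ℝ (Fin m)) :=
    { toFun := fun y => LinearMap.toContinuousLinearMap (b.constr ℝ y)
      map_add' := by intro y z; simp [map_add]
      map_smul' := by intro c y; simp }
  have hψcont : Continuous ψ := ψ.continuous_of_finiteDimensional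
  have hΦ : Measurable fun x => (fun i => D x (b i) : Fin m → EuclideanSpace ℝ (Fin m)) :=
    measurable_pi_lambda _ fun i => hD (b i)
  have heq : (fun x => ‖(D x : EuclideanSpace ℝ (Fin m) →L[ℝ] EuclideanSpace ℝ (Fin m))‖)
      = fun x => ‖ψ (fun i => D x (b i))‖ := by
    funext x
    have h2 : b.constr ℝ (fun i => D x (b i))
        = ((D x : EuclideanSpace ℝ (Fin m) →L[ℝ] EuclideanSpace ℝ (Fin m)) :
            EuclideanSpace ℝ (Fin m) →ₗ[ℝ] EuclideanSpace ℝ (Fin m)) :=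
      b.ext fun i => by simp [Module.Basis.constr_basis]
    have h3 : ψ (fun i => D x (b i))
        = (D x : EuclideanSpace ℝ (Fin m) →L[ℝ] EuclideanSpace ℝ (Fin m)) := by
      apply ContinuousLinearMap.coeFn_injective
      funext w
      have h4 : ⇑(ψ fun i => D x (b i)) = ⇑(b.constr ℝ fun i => D x (b i)) :=
        LinearMap.coe_toContinuousLinearMap' _
      exact (congrFun h4 w).trans (by rw [h2]; rfl)
    rw [h3]
  rw [heq]
  exact (continuous_norm.comp hψcont).measurable.comp hΦ

open scoped Classical in
noncomputable def repNormalize (m : ℕ) :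
    EuclideanSpace ℝ (Fin m) → EuclideanSpace ℝ (Fin m) :=
  fun w => ∑ i, if w i ≠ 0 ∧ ∀ j, j < i → w j = 0 then (w i)⁻¹ • w else 0

lemma repNormalize_smul {c : ℝ} (hc : c ≠ 0) (w : EuclideanSpace ℝ (Fin m)) :
    repNormalize m (c • w) = repNormalize m w := by
  classical
  unfold repNormalize
  refine Finset.sum_congr rfl fun i _ => ?_
  have hco : ∀ j, (c • w) j = c * w j := fun j => rfl
  by_cases h : w i ≠ 0 ∧ ∀ j, j < i → w j = 0
  · rw [if_pos h, if_pos ?_]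
    · rw [hco i, smul_smul, mul_comm c (w i), mul_inv, mul_assoc, inv_mul_cancel₀ hc, mul_one]
    · refine ⟨by simp [hco i, hc, h.1], fun j hj => by simp [hco j, h.2 j hj]⟩
  · rw [if_neg h, if_neg ?_]
    intro hcon
    refine h ⟨?_, fun j hj => ?_⟩
    · intro h0
      exact hcon.1 (by simp [hco i, h0])
    · have := hcon.2 j hj
      rw [hco j] at this
      rcases mul_eq_zero.mp this with h' | h'
      · exact absurd h' hc
      · exact h'

lemma repNormalize_spec (w : EuclideanSpace ℝ (Fin m)) (hw : w ≠ 0) :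
    ∃ c : ℝ, c ≠ 0 ∧ repNormalize m w = c • w := by
  classical
  have hex : ∃ i, w i ≠ 0 := by
    by_contra hcon
    push_neg at hcon
    exact hw (by ext i; exact hcon i)
  set F := Finset.univ.filter (fun i : Fin m => w i ≠ 0) with hF
  have hFne : F.Nonempty := by
    obtain ⟨i, hi⟩ := hex
    exact ⟨i, by simp [hF, hi]⟩
  set i₀ := F.min' hFne with hi₀
  have hi₀mem : w i₀ ≠ 0 := by
    have := F.min'_mem hFne
    simpa [hF] using this
  have hmin : ∀ j, j < i₀ → w j = 0 := by
    intro j hj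
    by_contra hcon
    exact absurd (F.min'_le j (by simp [hF, hcon])) (not_le.mpr hj)
  refine ⟨(w i₀)⁻¹, inv_ne_zero hi₀mem, ?_⟩
  unfold repNormalize
  rw [Finset.sum_eq_single_of_mem i₀ (Finset.mem_univ _)]
  · rw [if_pos ⟨hi₀mem, hmin⟩]
  · intro j _ hj
    rw [if_neg]
    intro hcon
    rcases lt_trichotomy j i₀ with h | h | h
    · exact hcon.1 (hmin j h)
    · exact hj h
    · exact hi₀mem (hcon.2 i₀ h)

lemma measurable_repNormalize : Measurable (repNormalize m) := by
  classical
  unfold repNormalize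
  refine Finset.measurable_sum _ fun i _ => ?_
  have hset : MeasurableSet {w : EuclideanSpace ℝ (Fin m) | w i ≠ 0 ∧ ∀ j, j < i → w j = 0} := by
    have hsplit : {w : EuclideanSpace ℝ (Fin m) | w i ≠ 0 ∧ ∀ j, j < i → w j = 0}
        = ((EuclideanSpace.proj (𝕜 := ℝ) i) ⁻¹' {0})ᶜ ∩
          ⋂ j, {w : EuclideanSpace ℝ (Fin m) | j < i → w j = 0} := by
      ext w
      simp [Set.mem_iInter, PiLp.proj_apply]
    rw [hsplit]
    refine MeasurableSet.inter ?_ ?_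
    · exact ((EuclideanSpace.proj (𝕜 := ℝ) i).continuous.measurable
        (measurableSet_singleton (0:ℝ))).compl
    · refine MeasurableSet.iInter fun j => ?_
      by_cases hj : j < i
      · have : {w : EuclideanSpace ℝ (Fin m) | j < i → w j = 0}
            = (EuclideanSpace.proj (𝕜 := ℝ) j) ⁻¹' {0} := by
          ext w; simp [hj, PiLp.proj_apply]
        rw [this]
        exact (EuclideanSpace.proj (𝕜 := ℝ) j).continuous.measurable
          (measurableSet_singleton (0:ℝ))
      · have : {w : EuclideanSpace ℝ (Fin m) | j < i → w j = 0} = univ := by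
          ext w; simp [hj]
        rw [this]
        exact MeasurableSet.univ
  exact Measurable.ite hset
    ((((EuclideanSpace.proj (𝕜 := ℝ) i).continuous.measurable).inv).smul measurable_id)
    measurable_const

noncomputable def secMap (m : ℕ) :
    Projectivization ℝ (EuclideanSpace ℝ (Fin m)) → EuclideanSpace ℝ (Fin m) :=
  fun v => repNormalize m v.rep

lemma measurable_secMap : Measurable (secMap m) := by
  have h : (secMap m ∘ Quotient.mk'')
      = fun w : {v : EuclideanSpace ℝ (Fin m) // v ≠ 0} => repNormalize m w.1 := by
    funext w
    obtain ⟨a, ha⟩ := Projectivization.exists_smul_eq_mk_rep ℝ w.1 w.2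
    show repNormalize m ((Projectivization.mk ℝ w.1 w.2).rep) = repNormalize m w.1
    rw [← ha, Units.smul_def, repNormalize_smul a.ne_zero]
  exact (measurable_from_quotient).mpr
    (by exact (congrArg Measurable h).mpr (measurable_repNormalize.comp measurable_subtype_coe))

lemma secMap_spec (v : Projectivization ℝ (EuclideanSpace ℝ (Fin m))) :
    ∃ c : ℝ, c ≠ 0 ∧ secMap m v = c • v.rep :=
  repNormalize_spec v.rep v.rep_nonzero

lemma cocycleSigma_smul {X' : Type*} (C : X' → ℤ → (EuclideanSpace ℝ (Fin m) ≃L[ℝ]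
      EuclideanSpace ℝ (Fin m))) (x : X') (N : ℤ) {c : ℝ} (hc : c ≠ 0)
    (w : EuclideanSpace ℝ (Fin m)) :
    cocycleSigma C x (c • w) N = cocycleSigma C x w N := by
  unfold cocycleSigma
  rw [_root_.map_smul, norm_smul, norm_smul, mul_div_mul_left _ _ (norm_ne_zero_iff.mpr hc)]

lemma cocycleSigma_secMap {X' : Type*} (C : X' → ℤ → (EuclideanSpace ℝ (Fin m) ≃L[ℝ]
      EuclideanSpace ℝ (Fin m))) (x : X') (N : ℤ)
    (v : Projectivization ℝ (EuclideanSpace ℝ (Fin m))) :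
    cocycleSigma C x (secMap m v) N = cocycleSigma C x v.rep N := by
  obtain ⟨c, hc, hcv⟩ := secMap_spec v
  rw [hcv, cocycleSigma_smul C x N hc]

end AuxLemmas


set_option maxHeartbeats 1600000 in
/-- **Theorem (theo:cocycle_CCLT_norm2).** Let `T` be an invertible, measure-preserving,
ergodic transformation of a probability space `(X,μ)` and `C` a measurable cocycle over
`T` satisfying a mixing distributional limit theorem on `(X × ℙℝᵐ, μ ⊗ ν)` with
normalizing sequence `𝒱` and limiting law `S`. If `C` has
`𝒱`-strong-simple-dominated-splitting, then the same mixing limit theorem holds for the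
operator norm: for all measurable `A, B` and all intervals `(a,b)` whose endpoints are
not atoms of `S`,
`μ{x ∈ A : (σ(x,N) − A_N)/V_N ∈ (a,b), T^N x ∈ B} → μ(A)·S((a,b))·μ(B)`. -/
theorem operator_norm_mixing_DLT_cocycle
    {X : Type*} {m : ℕ} [MeasurableSpace X] (μ : Measure X) [IsProbabilityMeasure μ]
    (T : X ≃ X) (hTm : Measurable (⇑T)) (hT : Ergodic (⇑T) μ)
    (C : X → ℤ → (EuclideanSpace ℝ (Fin m) ≃L[ℝ] EuclideanSpace ℝ (Fin m)))
    (hCmeas : ∀ N : ℤ, ∀ v, Measurable fun x => C x N v)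
    (hCcocycle : ∀ᵐ x ∂μ, ∀ r s : ℤ, ∀ v, C x (r + s) v = C ((T ^ r) x) s (C x r v))
    (ν : Measure (Projectivization ℝ (EuclideanSpace ℝ (Fin m))))
    [IsProbabilityMeasure ν]
    (A : ℕ → ℝ) (V : ℕ → ℝ) (hVpos : ∀ N, 0 < V N) (hV : Tendsto V atTop atTop)
    (S : Measure ℝ) [IsProbabilityMeasure S]
    (hMDLT : ∀ A' B : Set X, MeasurableSet A' → MeasurableSet B →
      ∀ a b : ℝ, S ({a, b} : Set ℝ) = 0 →
        Tendsto (fun N : ℕ =>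
            (μ.prod ν) {p | p.1 ∈ A' ∧
              (cocycleSigma C p.1 p.2.rep (N : ℤ) - A N) / V N ∈ Ioo a b ∧
              (⇑T)^[N] p.1 ∈ B})
          atTop (nhds (μ A' * S (Ioo a b) * μ B)))
    (hstrong : ∀ᵐ x ∂μ, ∀ᵐ v ∂ν,
      Tendsto (fun N : ℕ =>
        |cocycleSigma C x v.rep (N : ℤ) - cocycleSigmaOp C x (N : ℤ)| / V N)
        atTop (nhds 0)) :
    ∀ A' B : Set X, MeasurableSet A' → MeasurableSet B →
      ∀ a b : ℝ, S ({a, b} : Set ℝ) = 0 →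
        Tendsto (fun N : ℕ =>
            μ {x | x ∈ A' ∧ (cocycleSigmaOp C x (N : ℤ) - A N) / V N ∈ Ioo a b ∧
              (⇑T)^[N] x ∈ B})
          atTop (nhds (μ A' * S (Ioo a b) * μ B)) := by
  classical
  intro A' B hA' hB a b hab
  have hLne : μ A' * S (Ioo a b) * μ B ≠ ⊤ :=
    ENNReal.mul_ne_top (ENNReal.mul_ne_top (measure_ne_top μ _) (measure_ne_top S _))
      (measure_ne_top μ _)
  have hop : ∀ N : ℤ, Measurable fun x => cocycleSigmaOp C x N := fun N =>
    Real.measurable_log.comp (measurable_cle_opNorm (fun x => C x N) (hCmeas N))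
  set h : ℕ → X × Projectivization ℝ (EuclideanSpace ℝ (Fin m)) → ℝ := fun N p =>
    |cocycleSigma C p.1 p.2.rep (N : ℤ) - cocycleSigmaOp C p.1 (N : ℤ)| / V N with hh
  have hhmeas : ∀ N : ℕ, Measurable (h N) := by
    intro N
    have hrw : h N = fun p =>
        |cocycleSigma C p.1 (secMap m p.2) (N : ℤ) - cocycleSigmaOp C p.1 (N : ℤ)| / V N := by
      funext p
      rw [hh]
      simp only [cocycleSigma_secMap]
    rw [hrw]
    have h1 : Measurable fun p : X × Projectivization ℝ (EuclideanSpace ℝ (Fin m)) =>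
        cocycleSigma C p.1 (secMap m p.2) (N : ℤ) := by
      have happ := measurable_cle_apply (fun x => C x (N : ℤ)) (hCmeas (N : ℤ))
      have hpair : Measurable fun p : X × Projectivization ℝ (EuclideanSpace ℝ (Fin m)) =>
          (p.1, secMap m p.2) :=
        measurable_fst.prodMk (measurable_secMap.comp measurable_snd)
      simp only [cocycleSigma]
      exact Real.measurable_log.comp
        (((happ.comp hpair).norm).div ((measurable_secMap.comp measurable_snd).norm))
    exact ((h1.sub ((hop (N : ℤ)).comp measurable_fst)).abs).div_const _
  have hnn : ∀ N p, 0 ≤ h N p := fun N p => div_nonneg (abs_nonneg _) (hVpos N).le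
  have haep : ∀ᵐ p ∂(μ.prod ν), Tendsto (fun N : ℕ => h N p) atTop (nhds 0) := by
    have hmeasset : MeasurableSet {p : X × Projectivization ℝ (EuclideanSpace ℝ (Fin m)) |
        Tendsto (fun N : ℕ => h N p) atTop (nhds 0)} :=
      measurableSet_tendsto (nhds 0) fun N => hhmeas N
    exact (Measure.ae_prod_iff_ae_ae hmeasset).mpr hstrong
  have hTIM : ∀ ε : ℝ, 0 < ε →
      Tendsto (fun N : ℕ => (μ.prod ν) {p | ε ≤ h N p}) atTop (nhds 0) := by
    intro ε hε
    have htim := tendstoInMeasure_iff_dist.mp (tendstoInMeasure_of_tendsto_ae (μ := μ.prod ν) (f := h)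
      (g := fun _ => (0 : ℝ)) (fun N => (hhmeas N).aestronglyMeasurable) haep) ε hε
    have hset : ∀ N : ℕ, {p : X × Projectivization ℝ (EuclideanSpace ℝ (Fin m)) |
        ε ≤ dist (h N p) ((fun _ => (0:ℝ)) p)} = {p | ε ≤ h N p} := by
      intro N; ext p
      simp [Real.dist_eq, abs_of_nonneg (hnn N p)]
    simpa only [hset] using htim
  -- key inequality 1
  have key1 : ∀ ε : ℝ, 0 < ε → ∀ N : ℕ,
      μ {x | x ∈ A' ∧ (cocycleSigmaOp C x (N : ℤ) - A N) / V N ∈ Ioo a b ∧ (⇑T)^[N] x ∈ B}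
        ≤ (μ.prod ν) {p | p.1 ∈ A' ∧
            (cocycleSigma C p.1 p.2.rep (N : ℤ) - A N) / V N ∈ Ioo (a - ε) (b + ε) ∧
            (⇑T)^[N] p.1 ∈ B}
          + (μ.prod ν) {p | ε ≤ h N p} := by
    intro ε hε N
    have hprod : μ {x | x ∈ A' ∧ (cocycleSigmaOp C x (N : ℤ) - A N) / V N ∈ Ioo a b ∧
        (⇑T)^[N] x ∈ B} = (μ.prod ν)
          ({x | x ∈ A' ∧ (cocycleSigmaOp C x (N : ℤ) - A N) / V N ∈ Ioo a b ∧
            (⇑T)^[N] x ∈ B} ×ˢ (univ : Set (Projectivization ℝ (EuclideanSpace ℝ (Fin m))))) := by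
      rw [Measure.prod_prod, measure_univ, mul_one]
    rw [hprod]
    refine le_trans (measure_mono ?_) (measure_union_le _ _)
    rintro ⟨x, v⟩ ⟨⟨hxA, hxI, hxB⟩, -⟩
    by_cases hbad : ε ≤ h N (x, v)
    · exact Or.inr hbad
    · push_neg at hbad
      refine Or.inl ⟨hxA, ⟨?_, ?_⟩, hxB⟩ <;>
      · have hVN := hVpos N
        have habs : |cocycleSigma C x v.rep (N:ℤ) - cocycleSigmaOp C x (N:ℤ)| < ε * V N := by
          have heq : h N (x, v)
              = |cocycleSigma C x v.rep (N:ℤ) - cocycleSigmaOp C x (N:ℤ)| / V N := rfl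
          rw [heq, div_lt_iff₀ hVN] at hbad
          exact hbad
        obtain ⟨hd1, hd2⟩ := abs_lt.mp habs
        obtain ⟨hI1, hI2⟩ := hxI
        have hI1' : a * V N < cocycleSigmaOp C x (N:ℤ) - A N := (lt_div_iff₀ hVN).mp hI1
        have hI2' : cocycleSigmaOp C x (N:ℤ) - A N < b * V N := (div_lt_iff₀ hVN).mp hI2
        first
        | · rw [lt_div_iff₀ hVN]
            have hexp : (a - ε) * V N = a * V N - ε * V N := by ring
            rw [hexp]; linarith
        | · rw [div_lt_iff₀ hVN]
            have hexp : (b + ε) * V N = b * V N + ε * V N := by ring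
            rw [hexp]; linarith
  -- key inequality 2
  have key2 : ∀ ε : ℝ, 0 < ε → ∀ N : ℕ,
      (μ.prod ν) {p | p.1 ∈ A' ∧
          (cocycleSigma C p.1 p.2.rep (N : ℤ) - A N) / V N ∈ Ioo (a + ε) (b - ε) ∧
          (⇑T)^[N] p.1 ∈ B}
        ≤ μ {x | x ∈ A' ∧ (cocycleSigmaOp C x (N : ℤ) - A N) / V N ∈ Ioo a b ∧
            (⇑T)^[N] x ∈ B}
          + (μ.prod ν) {p | ε ≤ h N p} := by
    intro ε hε N
    have hprod : μ {x | x ∈ A' ∧ (cocycleSigmaOp C x (N : ℤ) - A N) / V N ∈ Ioo a b ∧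
        (⇑T)^[N] x ∈ B} = (μ.prod ν)
          ({x | x ∈ A' ∧ (cocycleSigmaOp C x (N : ℤ) - A N) / V N ∈ Ioo a b ∧
            (⇑T)^[N] x ∈ B} ×ˢ (univ : Set (Projectivization ℝ (EuclideanSpace ℝ (Fin m))))) := by
      rw [Measure.prod_prod, measure_univ, mul_one]
    rw [hprod]
    refine le_trans (measure_mono ?_) (measure_union_le _ _)
    rintro ⟨x, v⟩ ⟨hxA, hxI, hxB⟩
    by_cases hbad : ε ≤ h N (x, v)
    · exact Or.inr hbad
    · push_neg at hbad
      refine Or.inl ⟨⟨hxA, ⟨?_, ?_⟩, hxB⟩, mem_univ _⟩ <;>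
      · have hVN := hVpos N
        have habs : |cocycleSigma C x v.rep (N:ℤ) - cocycleSigmaOp C x (N:ℤ)| < ε * V N := by
          have heq : h N (x, v)
              = |cocycleSigma C x v.rep (N:ℤ) - cocycleSigmaOp C x (N:ℤ)| / V N := rfl
          rw [heq, div_lt_iff₀ hVN] at hbad
          exact hbad
        obtain ⟨hd1, hd2⟩ := abs_lt.mp habs
        obtain ⟨hI1, hI2⟩ := hxI
        have hI1' : (a + ε) * V N < cocycleSigma C x v.rep (N:ℤ) - A N := (lt_div_iff₀ hVN).mp hI1
        have hI2' : cocycleSigma C x v.rep (N:ℤ) - A N < (b - ε) * V N := (div_lt_iff₀ hVN).mp hI2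
        have hexp1 : (a + ε) * V N = a * V N + ε * V N := by ring
        have hexp2 : (b - ε) * V N = b * V N - ε * V N := by ring
        first
        | · rw [lt_div_iff₀ hVN]; rw [hexp1] at hI1'; linarith
        | · rw [div_lt_iff₀ hVN]; rw [hexp2] at hI2'; linarith
  -- countably many atoms
  have hctble : Set.Countable {t : ℝ | S {t} ≠ 0} := by
    have hcnt := Measure.countable_meas_pos_of_disjoint_of_meas_iUnion_ne_top S
      (fun t : ℝ => measurableSet_singleton t)
      (fun s t hst => Set.disjoint_singleton.mpr hst)
      (measure_ne_top S _)
    have hEq : {t : ℝ | S {t} ≠ 0} = {t : ℝ | 0 < S ({t} : Set ℝ)} := by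
      ext t; simp [pos_iff_ne_zero]
    rw [hEq]
    exact hcnt
  -- good epsilons
  have hgood : ∀ k : ℕ, ∃ ε : ℝ, 0 < ε ∧ ε < 1 / (k + 1) ∧
      S {a - ε} = 0 ∧ S {a + ε} = 0 ∧ S {b - ε} = 0 ∧ S {b + ε} = 0 := by
    intro k
    by_contra hcon
    push_neg at hcon
    have hinj1 : Function.Injective fun t : ℝ => a - t := by
      intro x y hxy; dsimp only at hxy; linarith
    have hinj2 : Function.Injective fun t : ℝ => a + t := by
      intro x y hxy; dsimp only at hxy; linarith
    have hinj3 : Function.Injective fun t : ℝ => b - t := by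
      intro x y hxy; dsimp only at hxy; linarith
    have hinj4 : Function.Injective fun t : ℝ => b + t := by
      intro x y hxy; dsimp only at hxy; linarith
    have hsub : Ioo (0:ℝ) (1/(k+1)) ⊆
        (((fun t => a - t) ⁻¹' {t | S {t} ≠ 0}) ∪ ((fun t => a + t) ⁻¹' {t | S {t} ≠ 0})) ∪
        (((fun t => b - t) ⁻¹' {t | S {t} ≠ 0}) ∪ ((fun t => b + t) ⁻¹' {t | S {t} ≠ 0})) := by
      intro ε hε
      by_cases h1 : S {a - ε} = 0
      · by_cases h2 : S {a + ε} = 0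
        · by_cases h3 : S {b - ε} = 0
          · exact Or.inr (Or.inr (hcon ε hε.1 hε.2 h1 h2 h3))
          · exact Or.inr (Or.inl h3)
        · exact Or.inl (Or.inr h2)
      · exact Or.inl (Or.inl h1)
    have hcount : (Ioo (0:ℝ) (1/(k+1))).Countable :=
      Set.Countable.mono hsub
        (((hctble.preimage hinj1).union (hctble.preimage hinj2)).union
          ((hctble.preimage hinj3).union (hctble.preimage hinj4)))
    have hne : (0:ℝ) < 1/(k+1) := by positivity
    have hcard := Cardinal.mk_Ioo_real hne
    rw [← Cardinal.le_aleph0_iff_set_countable, hcard] at hcount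
    exact absurd hcount (not_le.mpr Cardinal.aleph0_lt_continuum)
  choose ε hε0 hεlt hSa1 hSa2 hSb1 hSb2 using hgood
  have hSa : S ({a} : Set ℝ) = 0 := measure_mono_null (by simp) hab
  have hSb : S ({b} : Set ℝ) = 0 := measure_mono_null (by simp) hab
  -- fringe measures tend to zero
  have honediv : ∀ j k : ℕ, j ≤ k → (1:ℝ)/(k+1) ≤ 1/(j+1) := by
    intro j k hjk
    apply one_div_le_one_div_of_le
    · positivity
    · have : (j:ℝ) ≤ (k:ℝ) := by exact_mod_cast hjk
      linarith
  have hc1 : Tendsto (fun k : ℕ => S (Ioc (a - 1/(k+1)) a)) atTop (nhds 0) := by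
    have hiter := tendsto_measure_iInter_atTop (μ := S)
      (s := fun k : ℕ => Ioc (a - 1/(k+1)) a)
      (fun k => measurableSet_Ioc.nullMeasurableSet)
      (fun j k hjk => Ioc_subset_Ioc_left (by linarith [honediv j k hjk]))
      ⟨0, measure_ne_top _ _⟩
    have hIeq : (⋂ k : ℕ, Ioc (a - 1/(k+1)) a) = {a} := by
      ext t
      simp only [mem_iInter, mem_Ioc, mem_singleton_iff]
      constructor
      · intro ht
        have hta : t ≤ a := (ht 0).2
        rcases eq_or_lt_of_le hta with hcase | hcase
        · exact hcase
        · obtain ⟨n, hn⟩ := exists_nat_one_div_lt (sub_pos.mpr hcase)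
          have := (ht n).1
          linarith
      · intro ht k
        rw [ht]
        exact ⟨sub_lt_self a (by positivity), le_refl a⟩
    rw [hIeq, hSa] at hiter
    exact hiter
  have hd1 : Tendsto (fun k : ℕ => S (Ico b (b + 1/(k+1)))) atTop (nhds 0) := by
    have hiter := tendsto_measure_iInter_atTop (μ := S)
      (s := fun k : ℕ => Ico b (b + 1/(k+1)))
      (fun k => measurableSet_Ico.nullMeasurableSet)
      (fun j k hjk => Ico_subset_Ico_right (by linarith [honediv j k hjk]))
      ⟨0, measure_ne_top _ _⟩
    have hIeq : (⋂ k : ℕ, Ico b (b + 1/(k+1))) = {b} := by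
      ext t
      simp only [mem_iInter, mem_Ico, mem_singleton_iff]
      constructor
      · intro ht
        have hbt : b ≤ t := (ht 0).1
        rcases eq_or_lt_of_le hbt with hcase | hcase
        · exact hcase.symm
        · obtain ⟨n, hn⟩ := exists_nat_one_div_lt (sub_pos.mpr hcase)
          have := (ht n).2
          linarith
      · intro ht k
        rw [ht]
        exact ⟨le_refl b, lt_add_of_pos_right b (by positivity)⟩
    rw [hIeq, hSb] at hiter
    exact hiter
  have hc2 : Tendsto (fun k : ℕ => S (Ioc a (a + 1/(k+1)))) atTop (nhds 0) := by
    have hiter := tendsto_measure_iInter_atTop (μ := S)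
      (s := fun k : ℕ => Ioc a (a + 1/(k+1)))
      (fun k => measurableSet_Ioc.nullMeasurableSet)
      (fun j k hjk => Ioc_subset_Ioc_right (by linarith [honediv j k hjk]))
      ⟨0, measure_ne_top _ _⟩
    have hIeq : (⋂ k : ℕ, Ioc a (a + 1/(k+1))) = (∅ : Set ℝ) := by
      ext t
      simp only [mem_iInter, mem_Ioc, mem_empty_iff_false, iff_false]
      intro ht
      obtain ⟨n, hn⟩ := exists_nat_one_div_lt (sub_pos.mpr (ht 0).1)
      have := (ht n).2
      linarith [(ht n).1]
    rw [hIeq, measure_empty] at hiter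
    exact hiter
  have hd2 : Tendsto (fun k : ℕ => S (Ico (b - 1/(k+1)) b)) atTop (nhds 0) := by
    have hiter := tendsto_measure_iInter_atTop (μ := S)
      (s := fun k : ℕ => Ico (b - 1/(k+1)) b)
      (fun k => measurableSet_Ico.nullMeasurableSet)
      (fun j k hjk => Ico_subset_Ico_left (by linarith [honediv j k hjk]))
      ⟨0, measure_ne_top _ _⟩
    have hIeq : (⋂ k : ℕ, Ico (b - 1/(k+1)) b) = (∅ : Set ℝ) := by
      ext t
      simp only [mem_iInter, mem_Ico, mem_empty_iff_false, iff_false]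
      intro ht
      obtain ⟨n, hn⟩ := exists_nat_one_div_lt (sub_pos.mpr (ht 0).2)
      have := (ht n).1
      linarith [(ht n).2]
    rw [hIeq, measure_empty] at hiter
    exact hiter
  -- main limit argument
  rw [ENNReal.tendsto_nhds hLne]
  intro ε' hε'
  set δ : ENNReal := ε' / 2 / 2 with hδdef
  have h2netop : (2 : ENNReal) ≠ ⊤ := by norm_num
  have hδ0 : 0 < δ := ENNReal.div_pos (ENNReal.div_pos hε'.ne' h2netop).ne' h2netop
  have hδsum : δ + δ + (δ + δ) = ε' := by
    rw [hδdef, ENNReal.add_halves, ENNReal.add_halves]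
  have hfr : Tendsto (fun k : ℕ =>
      (S (Ioc (a - 1/(k+1)) a) + S (Ico b (b + 1/(k+1)))) +
      (S (Ioc a (a + 1/(k+1))) + S (Ico (b - 1/(k+1)) b))) atTop (nhds 0) := by
    have := (hc1.add hd1).add (hc2.add hd2)
    simpa using this
  obtain ⟨k, hk⟩ := (hfr.eventually_lt_const hδ0).exists
  have hεk0 := hε0 k
  have hpair1 : S ({a - ε k, b + ε k} : Set ℝ) = 0 := by
    rw [Set.insert_eq]
    exact measure_union_null (hSa1 k) (hSb2 k)
  have hpair2 : S ({a + ε k, b - ε k} : Set ℝ) = 0 := by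
    rw [Set.insert_eq]
    exact measure_union_null (hSa2 k) (hSb1 k)
  have houter := hMDLT A' B hA' hB (a - ε k) (b + ε k) hpair1
  have hinner := hMDLT A' B hA' hB (a + ε k) (b - ε k) hpair2
  have hbadlim := hTIM (ε k) hεk0
  -- interval measure bounds
  have hIbig : S (Ioo (a - ε k) (b + ε k)) ≤ S (Ioo a b) +
      (S (Ioc (a - 1/(k+1)) a) + S (Ico b (b + 1/(k+1)))) := by
    have hsub : Ioo (a - ε k) (b + ε k) ⊆
        Ioo a b ∪ (Ioc (a - 1/(k+1)) a ∪ Ico b (b + 1/(k+1))) := by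
      intro t ht
      obtain ⟨ht1, ht2⟩ := ht
      by_cases h1 : t ≤ a
      · exact Or.inr (Or.inl ⟨by linarith [hεlt k], h1⟩)
      · by_cases h2 : b ≤ t
        · exact Or.inr (Or.inr ⟨h2, by linarith [hεlt k]⟩)
        · exact Or.inl ⟨not_le.mp h1, not_le.mp h2⟩
    calc S (Ioo (a - ε k) (b + ε k))
        ≤ S (Ioo a b) + S (Ioc (a - 1/(k+1)) a ∪ Ico b (b + 1/(k+1))) :=
          le_trans (measure_mono hsub) (measure_union_le _ _)
      _ ≤ S (Ioo a b) + (S (Ioc (a - 1/(k+1)) a) + S (Ico b (b + 1/(k+1)))) :=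
          add_le_add_right (measure_union_le _ _) _
  have hIsmall : S (Ioo a b) ≤ S (Ioo (a + ε k) (b - ε k)) +
      (S (Ioc a (a + 1/(k+1))) + S (Ico (b - 1/(k+1)) b)) := by
    have hsub : Ioo a b ⊆
        Ioo (a + ε k) (b - ε k) ∪ (Ioc a (a + 1/(k+1)) ∪ Ico (b - 1/(k+1)) b) := by
      intro t ht
      obtain ⟨ht1, ht2⟩ := ht
      by_cases h1 : t ≤ a + ε k
      · exact Or.inr (Or.inl ⟨ht1, by linarith [hεlt k]⟩)
      · by_cases h2 : b - ε k ≤ t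
        · exact Or.inr (Or.inr ⟨by linarith [hεlt k], ht2⟩)
        · exact Or.inl ⟨not_le.mp h1, not_le.mp h2⟩
    calc S (Ioo a b)
        ≤ S (Ioo (a + ε k) (b - ε k)) + S (Ioc a (a + 1/(k+1)) ∪ Ico (b - 1/(k+1)) b) :=
          le_trans (measure_mono hsub) (measure_union_le _ _)
      _ ≤ S (Ioo (a + ε k) (b - ε k)) + (S (Ioc a (a + 1/(k+1))) + S (Ico (b - 1/(k+1)) b)) :=
          add_le_add_right (measure_union_le _ _) _
  have hμA : μ A' ≤ 1 := prob_le_one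
  have hμB : μ B ≤ 1 := prob_le_one
  have hfrk1 : S (Ioc (a - 1/(k+1)) a) + S (Ico b (b + 1/(k+1))) ≤ δ := by
    refine le_trans (le_trans (le_add_right (le_refl _)) hk.le) (le_refl δ)
  have hfrk2 : S (Ioc a (a + 1/(k+1))) + S (Ico (b - 1/(k+1)) b) ≤ δ := by
    refine le_trans (le_trans (le_add_left (le_refl _)) hk.le) (le_refl δ)
  have hsandwich : ∀ c d e : ENNReal, c ≤ d → μ A' * c * μ B ≤ μ A' * d * μ B + e := by
    intro c d e hcd
    exact le_trans (by gcongr) (le_add_right (le_refl _))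
  have hmulle : ∀ c : ENNReal, μ A' * c * μ B ≤ c := by
    intro c
    calc μ A' * c * μ B ≤ 1 * c * 1 := by gcongr
      _ = c := by rw [one_mul, mul_one]
  have hLplus : μ A' * S (Ioo (a - ε k) (b + ε k)) * μ B
      ≤ μ A' * S (Ioo a b) * μ B + δ := by
    calc μ A' * S (Ioo (a - ε k) (b + ε k)) * μ B
        ≤ μ A' * (S (Ioo a b) +
            (S (Ioc (a - 1/(k+1)) a) + S (Ico b (b + 1/(k+1))))) * μ B := by gcongr
      _ = μ A' * S (Ioo a b) * μ B +
            μ A' * (S (Ioc (a - 1/(k+1)) a) + S (Ico b (b + 1/(k+1)))) * μ B := by ring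
      _ ≤ μ A' * S (Ioo a b) * μ B + δ := add_le_add_right ((hmulle _).trans hfrk1) _
  have hLminus : μ A' * S (Ioo a b) * μ B
      ≤ μ A' * S (Ioo (a + ε k) (b - ε k)) * μ B + δ := by
    calc μ A' * S (Ioo a b) * μ B
        ≤ μ A' * (S (Ioo (a + ε k) (b - ε k)) +
            (S (Ioc a (a + 1/(k+1))) + S (Ico (b - 1/(k+1)) b))) * μ B := by gcongr
      _ = μ A' * S (Ioo (a + ε k) (b - ε k)) * μ B +
            μ A' * (S (Ioc a (a + 1/(k+1))) + S (Ico (b - 1/(k+1)) b)) * μ B := by ring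
      _ ≤ μ A' * S (Ioo (a + ε k) (b - ε k)) * μ B + δ :=
          add_le_add_right ((hmulle _).trans hfrk2) _
  have hPplusne : μ A' * S (Ioo (a - ε k) (b + ε k)) * μ B ≠ ⊤ :=
    ENNReal.mul_ne_top (ENNReal.mul_ne_top (measure_ne_top μ _) (measure_ne_top S _))
      (measure_ne_top μ _)
  have hPminusne : μ A' * S (Ioo (a + ε k) (b - ε k)) * μ B ≠ ⊤ :=
    ENNReal.mul_ne_top (ENNReal.mul_ne_top (measure_ne_top μ _) (measure_ne_top S _))
      (measure_ne_top μ _)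
  have hev1 : ∀ᶠ N : ℕ in atTop, (μ.prod ν) {p | ε k ≤ h N p} < δ :=
    hbadlim.eventually_lt_const hδ0
  have hev2 : ∀ᶠ N : ℕ in atTop,
      (μ.prod ν) {p | p.1 ∈ A' ∧
        (cocycleSigma C p.1 p.2.rep (N : ℤ) - A N) / V N ∈ Ioo (a - ε k) (b + ε k) ∧
        (⇑T)^[N] p.1 ∈ B}
      < μ A' * S (Ioo (a - ε k) (b + ε k)) * μ B + δ :=
    houter.eventually_lt_const (ENNReal.lt_add_right hPplusne hδ0.ne')
  have hev3 : ∀ᶠ N : ℕ in atTop,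
      μ A' * S (Ioo (a + ε k) (b - ε k)) * μ B
      ≤ (μ.prod ν) {p | p.1 ∈ A' ∧
          (cocycleSigma C p.1 p.2.rep (N : ℤ) - A N) / V N ∈ Ioo (a + ε k) (b - ε k) ∧
          (⇑T)^[N] p.1 ∈ B} + δ := by
    have := (ENNReal.tendsto_nhds hPminusne).mp hinner δ hδ0
    filter_upwards [this] with N hN
    exact tsub_le_iff_right.mp hN.1
  filter_upwards [hev1, hev2, hev3] with N h1 h2 h3
  constructor
  · -- lower bound
    rw [tsub_le_iff_right]
    have hstep : μ A' * S (Ioo a b) * μ B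
        ≤ μ {x | x ∈ A' ∧ (cocycleSigmaOp C x (N : ℤ) - A N) / V N ∈ Ioo a b ∧
            (⇑T)^[N] x ∈ B} + δ + δ + δ := by
      calc μ A' * S (Ioo a b) * μ B
          ≤ μ A' * S (Ioo (a + ε k) (b - ε k)) * μ B + δ := hLminus
        _ ≤ ((μ.prod ν) {p | p.1 ∈ A' ∧
              (cocycleSigma C p.1 p.2.rep (N : ℤ) - A N) / V N ∈ Ioo (a + ε k) (b - ε k) ∧
              (⇑T)^[N] p.1 ∈ B} + δ) + δ := add_le_add_left h3 δ
        _ ≤ ((μ {x | x ∈ A' ∧ (cocycleSigmaOp C x (N : ℤ) - A N) / V N ∈ Ioo a b ∧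
              (⇑T)^[N] x ∈ B} + (μ.prod ν) {p | ε k ≤ h N p}) + δ) + δ := by
            gcongr
            exact key2 (ε k) hεk0 N
        _ ≤ ((μ {x | x ∈ A' ∧ (cocycleSigmaOp C x (N : ℤ) - A N) / V N ∈ Ioo a b ∧
              (⇑T)^[N] x ∈ B} + δ) + δ) + δ :=
            add_le_add_left (add_le_add_left (add_le_add_right h1.le _) δ) δ
    refine hstep.trans ?_
    rw [← hδsum]
    have : μ {x | x ∈ A' ∧ (cocycleSigmaOp C x (N : ℤ) - A N) / V N ∈ Ioo a b ∧
        (⇑T)^[N] x ∈ B} + δ + δ + δ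
        ≤ μ {x | x ∈ A' ∧ (cocycleSigmaOp C x (N : ℤ) - A N) / V N ∈ Ioo a b ∧
        (⇑T)^[N] x ∈ B} + δ + δ + (δ + δ) := by
      gcongr
      exact le_self_add
    refine this.trans (le_of_eq ?_)
    ring
  · -- upper bound
    calc μ {x | x ∈ A' ∧ (cocycleSigmaOp C x (N : ℤ) - A N) / V N ∈ Ioo a b ∧
        (⇑T)^[N] x ∈ B}
        ≤ (μ.prod ν) {p | p.1 ∈ A' ∧
            (cocycleSigma C p.1 p.2.rep (N : ℤ) - A N) / V N ∈ Ioo (a - ε k) (b + ε k) ∧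
            (⇑T)^[N] p.1 ∈ B} + (μ.prod ν) {p | ε k ≤ h N p} := key1 (ε k) hεk0 N
      _ ≤ ((μ A' * S (Ioo (a - ε k) (b + ε k)) * μ B + δ) + δ) :=
          add_le_add h2.le h1.le
      _ ≤ ((μ A' * S (Ioo a b) * μ B + δ) + δ) + δ :=
          add_le_add_left (add_le_add_left hLplus δ) δ
      _ ≤ μ A' * S (Ioo a b) * μ B + ε' := by
          rw [← hδsum]
          have : μ A' * S (Ioo a b) * μ B + δ + δ + δ
              ≤ μ A' * S (Ioo a b) * μ B + δ + δ + (δ + δ) := by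
            gcongr
            exact le_self_add
          refine this.trans (le_of_eq ?_)
          ring
end
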